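/- arXiv:2311.15236 — 8 statements merged into one kernel-verified Lean document; each statement's English description precedes it below -/
import Mathlib

section
/- Let f : ℝ → ℝ be continuously differentiable and satisfy the superlinear condition f'(s) > f(s)/s for all s ≠ 0 and the sign condition s·f(s) > 0 for all s ≠ 0. Let u : ℝ → ℝ be twice continuously differentiable on [0,1], not identically zero on [0,1], and satisfy u''(x) = -f(u(x)) for all x ∈ [0,1], u'(0) = 0 and u(1) = 0. Then every twice continuously differentiable function z : ℝ → ℝ satisfying z''(x) = -f'(u(x))·z(x) for all x ∈ [0,1], z'(0) = 0 and z(1) = 0 vanishes identically on [0,1]. -/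
open Set Filter Topology


/-- Sign dichotomy on an interval where `g` doesn't vanish. -/
lemma nd_dich (g : ℝ → ℝ) (a b : ℝ) (hab : a < b) (hg : ContinuousOn g (Set.Icc a b))
    (hnz : ∀ y ∈ Set.Ioo a b, g y ≠ 0) :
    (∀ y ∈ Set.Ioo a b, 0 < g y) ∨ (∀ y ∈ Set.Ioo a b, g y < 0) := by
  by_contra hcon
  push_neg at hcon
  obtain ⟨⟨q, hq, hq'⟩, ⟨r, hr, hr'⟩⟩ := hcon
  have hqneg : g q < 0 := lt_of_le_of_ne hq' (hnz q hq)
  have hrpos : 0 < g r := lt_of_le_of_ne' hr' (hnz r hr)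
  have hsub : Set.uIcc q r ⊆ Set.Ioo a b := by
    intro w hw
    rw [Set.mem_uIcc] at hw
    constructor
    · rcases hw with ⟨h1, _⟩ | ⟨h1, _⟩ <;> linarith [hq.1, hr.1]
    · rcases hw with ⟨_, h2⟩ | ⟨_, h2⟩ <;> linarith [hq.2, hr.2]
  have hcont : ContinuousOn g (Set.uIcc q r) :=
    hg.mono (hsub.trans Set.Ioo_subset_Icc_self)
  have h0 : (0:ℝ) ∈ Set.uIcc (g q) (g r) := by
    rw [Set.mem_uIcc]; left; exact ⟨hqneg.le, hrpos.le⟩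
  obtain ⟨c, hc, hc0⟩ := intermediate_value_uIcc hcont h0
  exact hnz c (hsub hc) hc0

/-- boundary nonnegativity at right endpoint -/
lemma nd_bnd_left (g : ℝ → ℝ) (a b : ℝ) (hab : a < b) (hc : ContinuousAt g b)
    (hpos : ∀ y ∈ Set.Ioo a b, 0 < g y) : 0 ≤ g b := by
  have h1 : Set.Ioo a b ∈ 𝓝[<] b := Ioo_mem_nhdsLT hab
  exact ge_of_tendsto (hc.tendsto.mono_left nhdsWithin_le_nhds)
    (Filter.eventually_of_mem h1 fun y hy => (hpos y hy).le)

lemma nd_bnd_right (g : ℝ → ℝ) (a b : ℝ) (hab : a < b) (hc : ContinuousAt g a)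
    (hpos : ∀ y ∈ Set.Ioo a b, 0 < g y) : 0 ≤ g a := by
  have h1 : Set.Ioo a b ∈ 𝓝[>] a := Ioo_mem_nhdsGT hab
  exact ge_of_tendsto (hc.tendsto.mono_left nhdsWithin_le_nhds)
    (Filter.eventually_of_mem h1 fun y hy => (hpos y hy).le)

lemma nd_slope_right (g : ℝ → ℝ) (d a b : ℝ) (hab : a < b) (hd : HasDerivAt g d a)
    (hg0 : g a = 0) (hpos : ∀ y ∈ Set.Ioo a b, 0 < g y) : 0 ≤ d := by
  have hs : Tendsto (slope g a) (𝓝[≠] a) (𝓝 d) := hasDerivAt_iff_tendsto_slope.mp hd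
  have hmono : 𝓝[>] a ≤ 𝓝[≠] a := nhdsWithin_mono _ fun y hy => ne_of_gt hy
  refine ge_of_tendsto (hs.mono_left hmono) ?_
  refine Filter.eventually_of_mem (Ioo_mem_nhdsGT hab) fun y hy => ?_
  have : slope g a y = g y / (y - a) := by
    rw [slope_def_field, hg0]; ring
  rw [this]
  exact le_of_lt (div_pos (hpos y hy) (by linarith [hy.1]))

lemma nd_slope_left (g : ℝ → ℝ) (d a b : ℝ) (hab : a < b) (hd : HasDerivAt g d b)
    (hg0 : g b = 0) (hpos : ∀ y ∈ Set.Ioo a b, 0 < g y) : d ≤ 0 := by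
  have hs : Tendsto (slope g b) (𝓝[≠] b) (𝓝 d) := hasDerivAt_iff_tendsto_slope.mp hd
  have hmono : 𝓝[<] b ≤ 𝓝[≠] b := nhdsWithin_mono _ fun y hy => ne_of_lt hy
  refine le_of_tendsto (hs.mono_left hmono) ?_
  refine Filter.eventually_of_mem (Ioo_mem_nhdsLT hab) fun y hy => ?_
  have : slope g b y = g y / (y - b) := by
    rw [slope_def_field, hg0]; ring
  rw [this]
  exact le_of_lt (div_neg_of_pos_of_neg (hpos y hy) (by linarith [hy.2]))

/-- zeros of a function with nondegenerate zeros on `[0,1]` form a finite set -/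
lemma nd_finite_zeros (g g' : ℝ → ℝ)
    (hg : ∀ x ∈ Set.Icc (0:ℝ) 1, HasDerivAt g (g' x) x)
    (hnd : ∀ x ∈ Set.Icc (0:ℝ) 1, g x = 0 → g' x ≠ 0) :
    {x | x ∈ Set.Icc (0:ℝ) 1 ∧ g x = 0}.Finite := by
  set K := {x | x ∈ Set.Icc (0:ℝ) 1 ∧ g x = 0} with hK
  have hcont : ContinuousOn g (Set.Icc 0 1) :=
    fun x hx => (hg x hx).continuousAt.continuousWithinAt
  have hclosed : IsClosed K := by
    have := hcont.preimage_isClosed_of_isClosed isClosed_Icc (isClosed_singleton (x := (0:ℝ)))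
    convert this using 1
    rfl
  have hcompact : IsCompact K :=
    IsCompact.of_isClosed_subset isCompact_Icc hclosed fun x hx => hx.1
  refine hcompact.finite ?_
  rw [isDiscrete_iff_nhdsNE]
  intro x hx
  -- isolated: eventually g ≠ 0 in punctured nbhd
  have hder := hg x hx.1
  have hs : Tendsto (slope g x) (𝓝[≠] x) (𝓝 (g' x)) := hasDerivAt_iff_tendsto_slope.mp hder
  have hne : ∀ᶠ y in 𝓝[≠] x, slope g x y ≠ 0 := hs.eventually_ne (hnd x hx.1 hx.2)
  have hne' : ∀ᶠ y in 𝓝[≠] x, g y ≠ 0 := by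
    filter_upwards [hne, self_mem_nhdsWithin] with y hy hyx
    intro hgy
    apply hy
    rw [slope_def_field, hgy, hx.2]
    simp
  rw [← Filter.empty_mem_iff_bot]
  have h2 : K ∈ 𝓟 K := Filter.mem_principal_self K
  have h3 : {y | g y ≠ 0} ∩ K ∈ 𝓝[≠] x ⊓ 𝓟 K :=
    Filter.inter_mem (Filter.mem_inf_of_left hne') (Filter.mem_inf_of_right h2)
  convert h3 using 1
  ext y; simp only [Set.mem_empty_iff_false, false_iff]
  rintro ⟨h4, h5⟩
  exact h4 h5.2

lemma nd_sturm (f : ℝ → ℝ)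
    (hsuper' : ∀ s : ℝ, s ≠ 0 → 0 < s * (s * deriv f s - f s))
    (u u' u'' z z' z'' : ℝ → ℝ)
    (hu : ∀ x ∈ Set.Icc (0:ℝ) 1, HasDerivAt u (u' x) x)
    (hu'd : ∀ x ∈ Set.Icc (0:ℝ) 1, HasDerivAt u' (u'' x) x)
    (hz : ∀ x ∈ Set.Icc (0:ℝ) 1, HasDerivAt z (z' x) x)
    (hz'd : ∀ x ∈ Set.Icc (0:ℝ) 1, HasDerivAt z' (z'' x) x)
    (hode : ∀ x ∈ Set.Icc (0:ℝ) 1, u'' x = -f (u x))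
    (hzode : ∀ x ∈ Set.Icc (0:ℝ) 1, z'' x = -(deriv f (u x) * z x))
    (a b εu εz : ℝ) (hεu : εu = 1 ∨ εu = -1) (hεz : εz = 1 ∨ εz = -1)
    (ha0 : 0 ≤ a) (hab : a < b) (hb1 : b ≤ 1)
    (hupos : ∀ x ∈ Set.Ioo a b, 0 < εu * u x)
    (hzpos : ∀ x ∈ Set.Ioo a b, 0 < εz * z x)
    (hub : u b = 0)
    (hWa : εz * εu * (z' a * u a - z a * u' a) ≤ 0) : False := by
  have hsub : Set.Icc a b ⊆ Set.Icc (0:ℝ) 1 := Set.Icc_subset_Icc ha0 hb1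
  set W : ℝ → ℝ := fun x => εz * εu * (z' x * u x - z x * u' x) with hWdef
  have hWder : ∀ x ∈ Set.Icc a b,
      HasDerivAt W (εz * εu * (z'' x * u x - z x * u'' x)) x := by
    intro x hx
    have hx1 := hsub hx
    have h1 := ((hz'd x hx1).mul (hu x hx1)).sub ((hz x hx1).mul (hu'd x hx1))
    have h2 := h1.const_mul (εz * εu)
    refine h2.congr_deriv ?_
    ring
  -- derivative negative on the open interval
  have hWneg : ∀ x ∈ Set.Ioo a b, deriv W x < 0 := by
    intro x hx
    have hx1 : x ∈ Set.Icc (0:ℝ) 1 := hsub (Set.Ioo_subset_Icc_self hx)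
    have hd := hWder x (Set.Ioo_subset_Icc_self hx)
    rw [hd.deriv]
    have hA := hupos x hx
    have hZ := hzpos x hx
    have hAne : u x ≠ 0 := by
      rcases hεu with h | h <;> subst h <;> intro h0 <;> rw [h0] at hA <;> simp at hA
    have hS := hsuper' (u x) hAne
    rw [hzode x hx1, hode x hx1]
    rcases hεu with h | h <;> rcases hεz with h' | h' <;> subst h <;> subst h' <;>
      nlinarith [mul_pos hA hS, mul_pos hZ hS, sq_nonneg (u x)]
  have hWcont : ContinuousOn W (Set.Icc a b) :=
    fun x hx => ((hWder x hx).continuousAt).continuousWithinAt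
  have hanti : StrictAntiOn W (Set.Icc a b) := by
    refine strictAntiOn_of_deriv_neg (convex_Icc a b) hWcont ?_
    intro x hx
    rw [interior_Icc] at hx
    exact hWneg x hx
  -- boundary value at b
  have hbIcc : b ∈ Set.Icc (0:ℝ) 1 := ⟨le_trans ha0 hab.le, hb1⟩
  have hzb : 0 ≤ εz * z b := by
    refine nd_bnd_left (fun y => εz * z y) a b hab ?_ hzpos
    exact continuousAt_const.mul (hz b hbIcc).continuousAt
  have hu'b : εu * u' b ≤ 0 := by
    refine nd_slope_left (fun y => εu * u y) (εu * u' b) a b hab ?_ (by beta_reduce; rw [hub, mul_zero]) hupos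
    exact (hu b hbIcc).const_mul εu
  have hWb : 0 ≤ W b := by
    have : W b = -((εz * z b) * (εu * u' b)) := by
      rw [hWdef]; dsimp only; rw [hub]; ring
    rw [this]
    nlinarith
  have hlt : W b < W a :=
    hanti (Set.left_mem_Icc.mpr hab.le) (Set.right_mem_Icc.mpr hab.le) hab
  have hWa' : W a ≤ 0 := hWa
  linarith

lemma nd_energy (f : ℝ → ℝ) (hfc : Continuous f)
    (hsign : ∀ s : ℝ, s ≠ 0 → s * f s > 0)
    (u u' u'' : ℝ → ℝ)
    (hu : ∀ x ∈ Set.Icc (0:ℝ) 1, HasDerivAt u (u' x) x)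
    (hu'd : ∀ x ∈ Set.Icc (0:ℝ) 1, HasDerivAt u' (u'' x) x)
    (hode : ∀ x ∈ Set.Icc (0:ℝ) 1, u'' x = -f (u x))
    (x₀ : ℝ) (hx₀ : x₀ ∈ Set.Icc (0:ℝ) 1) (h1 : u x₀ = 0) (h2 : u' x₀ = 0) :
    ∀ x ∈ Set.Icc (0:ℝ) 1, u x = 0 := by
  set F : ℝ → ℝ := fun s => ∫ t in (0:ℝ)..s, f t with hFdef
  have hF : ∀ s : ℝ, HasDerivAt F (f s) s := fun s =>
    intervalIntegral.integral_hasDerivAt_right (hfc.intervalIntegrable _ _)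
      (hfc.stronglyMeasurableAtFilter _ _) hfc.continuousAt
  have hF0 : F 0 = 0 := intervalIntegral.integral_same
  have hFpos : ∀ s : ℝ, s ≠ 0 → 0 < F s := by
    intro s hs
    rcases hs.lt_or_gt with h | h
    · have hneg : ∫ t in s..(0:ℝ), f t < 0 := by
        have hpos : 0 < ∫ t in s..(0:ℝ), -f t := by
          apply intervalIntegral.intervalIntegral_pos_of_pos_on
            ((hfc.neg).intervalIntegrable _ _)
          · intro x hx
            have := hsign x (ne_of_lt hx.2)
            show 0 < -f x
            nlinarith [hx.1, hx.2]
          · exact h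
        rw [intervalIntegral.integral_neg] at hpos
        linarith
      have : F s = -∫ t in s..(0:ℝ), f t := intervalIntegral.integral_symm s 0
      rw [this]; linarith
    · apply intervalIntegral.intervalIntegral_pos_of_pos_on (hfc.intervalIntegrable _ _)
      · intro x hx
        have := hsign x (ne_of_gt hx.1)
        nlinarith [hx.1, hx.2]
      · exact h
  set E : ℝ → ℝ := fun x => u' x ^ 2 / 2 + F (u x) with hEdef
  have hEder : ∀ x ∈ Set.Icc (0:ℝ) 1, HasDerivAt E 0 x := by
    intro x hx
    have hd1 : HasDerivAt (fun y => u' y ^ 2 / 2) (2 * u' x ^ 1 * u'' x / 2) x :=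
      ((hu'd x hx).pow 2).div_const 2
    have hd2 : HasDerivAt (fun y => F (u y)) (f (u x) * u' x) x :=
      (hF (u x)).comp x (hu x hx)
    have := hd1.add hd2
    refine this.congr_deriv ?_
    rw [hode x hx]; ring
  have hEconst : ∀ x ∈ Set.Icc (0:ℝ) 1, E x = E 0 := by
    apply constant_of_has_deriv_right_zero
    · exact fun x hx => (hEder x hx).continuousAt.continuousWithinAt
    · exact fun x hx => (hEder x (Set.Ico_subset_Icc_self hx)).hasDerivWithinAt
  have hEx₀ : E x₀ = 0 := by
    rw [hEdef]; dsimp only; rw [h1, h2, hF0]; norm_num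
  have hE0 : E 0 = 0 := by rw [← hEconst x₀ hx₀, hEx₀]
  intro x hx
  have hEx : E x = 0 := by rw [hEconst x hx, hE0]
  by_contra hne
  have := hFpos (u x) hne
  have hsq : 0 ≤ u' x ^ 2 := sq_nonneg _
  rw [hEdef] at hEx; dsimp only at hEx
  nlinarith

lemma nd_gronwall (w w' w'' q : ℝ → ℝ) (M : ℝ)
    (hw : ∀ x ∈ Set.Icc (0:ℝ) 1, HasDerivAt w (w' x) x)
    (hw'd : ∀ x ∈ Set.Icc (0:ℝ) 1, HasDerivAt w' (w'' x) x)
    (heq : ∀ x ∈ Set.Icc (0:ℝ) 1, w'' x = -(q x * w x))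
    (hM : ∀ x ∈ Set.Icc (0:ℝ) 1, |1 - q x| ≤ M)
    (x₀ : ℝ) (hx₀ : x₀ ∈ Set.Icc (0:ℝ) 1) (h1 : w x₀ = 0) (h2 : w' x₀ = 0) :
    ∀ x ∈ Set.Icc (0:ℝ) 1, w x = 0 := by
  set G : ℝ → ℝ := fun x => w x ^ 2 + w' x ^ 2 with hGdef
  have hGder : ∀ x ∈ Set.Icc (0:ℝ) 1,
      HasDerivAt G (2 * w x * w' x + 2 * w' x * w'' x) x := by
    intro x hx
    have := ((hw x hx).pow 2).add ((hw'd x hx).pow 2)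
    refine this.congr_deriv ?_
    ring
  have hG0 : G x₀ = 0 := by rw [hGdef]; dsimp only; rw [h1, h2]; ring
  have hGnonneg : ∀ x, 0 ≤ G x := fun x => by positivity
  have hGbound : ∀ x ∈ Set.Icc (0:ℝ) 1,
      |2 * w x * w' x + 2 * w' x * w'' x| ≤ M * G x := by
    intro x hx
    have he : 2 * w x * w' x + 2 * w' x * w'' x = (2 * w x * w' x) * (1 - q x) := by
      rw [heq x hx]; ring
    rw [he, abs_mul]
    have hGx : G x = w x ^ 2 + w' x ^ 2 := rfl
    have h1' : |2 * w x * w' x| ≤ G x := by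
      rw [abs_le]
      constructor
      · nlinarith [sq_nonneg (w x + w' x), hGx]
      · nlinarith [sq_nonneg (w x - w' x), hGx]
    calc |2 * w x * w' x| * |1 - q x| ≤ G x * M :=
          mul_le_mul h1' (hM x hx) (abs_nonneg _) (hGnonneg x)
      _ = M * G x := mul_comm _ _
  have hM0 : 0 ≤ M := le_trans (abs_nonneg _) (hM 0 ⟨le_rfl, zero_le_one⟩)
  have key : ∀ x ∈ Set.Icc (0:ℝ) 1, G x ≤ 0 := by
    intro x hx
    rcases le_or_gt x x₀ with hle | hlt
    · -- left of x₀ : use H₂ = G * exp (M y), monotone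
      rcases eq_or_lt_of_le hle with heq' | hlt'
      · rw [heq', hG0]
      · set H : ℝ → ℝ := fun y => G y * Real.exp (M * y) with hHdef
        have hsub : Set.Icc x x₀ ⊆ Set.Icc (0:ℝ) 1 := Set.Icc_subset_Icc hx.1 hx₀.2
        have hHder : ∀ y ∈ Set.Icc x x₀, HasDerivAt H
            ((2 * w y * w' y + 2 * w' y * w'' y + M * G y) * Real.exp (M * y)) y := by
          intro y hy
          have hd := (hGder y (hsub hy)).mul ((hasDerivAt_id y).const_mul M).exp
          simp only [id_eq, mul_one] at hd
          refine hd.congr_deriv ?_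
          ring
        have hmono : MonotoneOn H (Set.Icc x x₀) := by
          apply monotoneOn_of_deriv_nonneg (convex_Icc _ _)
          · exact fun y hy => (hHder y hy).continuousAt.continuousWithinAt
          · intro y hy
            rw [interior_Icc] at hy
            exact ((hHder y (Set.Ioo_subset_Icc_self hy)).differentiableAt).differentiableWithinAt
          · intro y hy
            rw [interior_Icc] at hy
            rw [(hHder y (Set.Ioo_subset_Icc_self hy)).deriv]
            have hb := hGbound y (hsub (Set.Ioo_subset_Icc_self hy))
            have := abs_le.mp hb
            have hexp : 0 < Real.exp (M * y) := Real.exp_pos _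
            nlinarith [hGnonneg y]
        have := hmono (Set.left_mem_Icc.mpr hlt'.le) (Set.right_mem_Icc.mpr hlt'.le) hlt'.le
        rw [hHdef] at this; dsimp only at this
        rw [hG0] at this
        have hexp : 0 < Real.exp (M * x) := Real.exp_pos _
        nlinarith
    · -- right of x₀ : use H = G * exp (-M y), antitone
      set H : ℝ → ℝ := fun y => G y * Real.exp (-M * y) with hHdef
      have hsub : Set.Icc x₀ x ⊆ Set.Icc (0:ℝ) 1 := Set.Icc_subset_Icc hx₀.1 hx.2
      have hHder : ∀ y ∈ Set.Icc x₀ x, HasDerivAt H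
          ((2 * w y * w' y + 2 * w' y * w'' y + -M * G y) * Real.exp (-M * y)) y := by
        intro y hy
        have hd := (hGder y (hsub hy)).mul ((hasDerivAt_id y).const_mul (-M)).exp
        simp only [id_eq, mul_one] at hd
        refine hd.congr_deriv ?_
        ring
      have hanti : AntitoneOn H (Set.Icc x₀ x) := by
        apply antitoneOn_of_deriv_nonpos (convex_Icc _ _)
        · exact fun y hy => (hHder y hy).continuousAt.continuousWithinAt
        · intro y hy
          rw [interior_Icc] at hy
          exact ((hHder y (Set.Ioo_subset_Icc_self hy)).differentiableAt).differentiableWithinAt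
        · intro y hy
          rw [interior_Icc] at hy
          rw [(hHder y (Set.Ioo_subset_Icc_self hy)).deriv]
          have hb := hGbound y (hsub (Set.Ioo_subset_Icc_self hy))
          have := abs_le.mp hb
          have hexp : 0 < Real.exp (-M * y) := Real.exp_pos _
          nlinarith [hGnonneg y]
      have := hanti (Set.left_mem_Icc.mpr hlt.le) (Set.right_mem_Icc.mpr hlt.le) hlt.le
      rw [hHdef] at this; dsimp only at this
      rw [hG0] at this
      have hexp : 0 < Real.exp (-M * x) := Real.exp_pos _
      nlinarith
  intro x hx
  have h := le_antisymm (key x hx) (hGnonneg x)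
  have hGx : G x = w x ^ 2 + w' x ^ 2 := rfl
  have hw2 : w x ^ 2 = 0 := by nlinarith [sq_nonneg (w x), sq_nonneg (w' x), hGx]
  exact pow_eq_zero_iff two_ne_zero |>.mp hw2
/-- **Proposition 3.7 (nondegeneracy of one-dimensional solutions).**
If `f` is `C¹`, superlinear (`f'(s) > f(s)/s` for `s ≠ 0`) and sign-preserving
(`s·f(s) > 0` for `s ≠ 0`), and `u` is a nontrivial `C²` solution of
`u'' = -f(u)` on `[0,1]` with `u'(0) = 0`, `u(1) = 0`, then every `C²` solution
`z` of the linearized problem `z'' = -f'(u)·z`, `z'(0) = 0`, `z(1) = 0`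
vanishes identically on `[0,1]`. -/

theorem one_dimensional_solutions_nondegenerate
    (f : ℝ → ℝ) (hf : ContDiff ℝ 1 f)
    (hsuper : ∀ s : ℝ, s ≠ 0 → deriv f s > f s / s)
    (hsign : ∀ s : ℝ, s ≠ 0 → s * f s > 0)
    (u u' u'' : ℝ → ℝ)
    (hu : ∀ x ∈ Set.Icc (0:ℝ) 1, HasDerivAt u (u' x) x)
    (hu'd : ∀ x ∈ Set.Icc (0:ℝ) 1, HasDerivAt u' (u'' x) x)
    (hu''c : ContinuousOn u'' (Set.Icc 0 1))
    (hode : ∀ x ∈ Set.Icc (0:ℝ) 1, u'' x = -f (u x))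
    (hunz : ∃ x ∈ Set.Icc (0:ℝ) 1, u x ≠ 0)
    (hu'0 : u' 0 = 0) (hu1 : u 1 = 0)
    (z z' z'' : ℝ → ℝ)
    (hz : ∀ x ∈ Set.Icc (0:ℝ) 1, HasDerivAt z (z' x) x)
    (hz'd : ∀ x ∈ Set.Icc (0:ℝ) 1, HasDerivAt z' (z'' x) x)
    (hz''c : ContinuousOn z'' (Set.Icc 0 1))
    (hzode : ∀ x ∈ Set.Icc (0:ℝ) 1, z'' x = -(deriv f (u x) * z x))
    (hz'0 : z' 0 = 0) (hz1 : z 1 = 0) :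
    ∀ x ∈ Set.Icc (0:ℝ) 1, z x = 0 := by
  classical
  have h0Icc : (0:ℝ) ∈ Set.Icc (0:ℝ) 1 := ⟨le_rfl, zero_le_one⟩
  have h1Icc : (1:ℝ) ∈ Set.Icc (0:ℝ) 1 := ⟨zero_le_one, le_rfl⟩
  have hfc : Continuous f := hf.continuous
  have hf'c : Continuous (deriv f) := hf.continuous_deriv le_rfl
  have hfne : ∀ s : ℝ, s ≠ 0 → f s ≠ 0 := by
    intro s hs h
    have := hsign s hs
    rw [h] at this; simp at this
  have hsuper' : ∀ s : ℝ, s ≠ 0 → 0 < s * (s * deriv f s - f s) := by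
    intro s hs
    rcases hs.lt_or_gt with h | h
    · have h2 : deriv f s * s < f s := (div_lt_iff_of_neg h).mp (hsuper s hs)
      nlinarith
    · have h2 : f s < deriv f s * s := (div_lt_iff₀ h).mp (hsuper s hs)
      nlinarith
  -- nondegeneracy of zeros of u
  have hund : ∀ x ∈ Set.Icc (0:ℝ) 1, u x = 0 → u' x ≠ 0 := by
    intro x hx hux h'
    obtain ⟨y, hy, hyne⟩ := hunz
    exact hyne (nd_energy f hfc hsign u u' u'' hu hu'd hode x hx hux h' y hy)
  have hu0ne : u 0 ≠ 0 := fun h => hund 0 h0Icc h hu'0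
  have hu'nd : ∀ x ∈ Set.Icc (0:ℝ) 1, u' x = 0 → u'' x ≠ 0 := by
    intro x hx h h2
    have h3 := hode x hx
    rw [h2] at h3
    have h4 : f (u x) = 0 := by linarith
    by_cases h5 : u x = 0
    · exact hund x hx h5 h
    · exact hfne (u x) h5 h4
  -- suppose z is not identically zero
  by_contra hcon
  push_neg at hcon
  obtain ⟨p₀, hp₀, hzp₀⟩ := hcon
  -- bound for Gronwall
  have hqc : ContinuousOn (fun x : ℝ => 1 - deriv f (u x)) (Set.Icc 0 1) := by
    apply ContinuousOn.sub continuousOn_const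
    exact hf'c.comp_continuousOn (fun x hx => (hu x hx).continuousAt.continuousWithinAt)
  obtain ⟨M, hM⟩ := isCompact_Icc.exists_bound_of_continuousOn hqc
  have hM' : ∀ x ∈ Set.Icc (0:ℝ) 1, |1 - deriv f (u x)| ≤ M := fun x hx => hM x hx
  -- nondegeneracy of zeros of z
  have hznd : ∀ x ∈ Set.Icc (0:ℝ) 1, z x = 0 → z' x ≠ 0 := by
    intro x hx h h2
    exact hzp₀ (nd_gronwall z z' z'' (fun y => deriv f (u y)) M hz hz'd hzode hM' x hx h h2 p₀ hp₀)
  have hz0ne : z 0 ≠ 0 := fun h => hznd 0 h0Icc h hz'0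
  -- the Wronskian S = z' u' - z u'' is constant
  set S : ℝ → ℝ := fun x => z' x * u' x - z x * u'' x with hSdef
  have hScont : ContinuousOn S (Set.Icc 0 1) := by
    apply ContinuousOn.sub
    · exact ContinuousOn.mul (fun x hx => (hz'd x hx).continuousAt.continuousWithinAt)
        (fun x hx => (hu'd x hx).continuousAt.continuousWithinAt)
    · exact ContinuousOn.mul (fun x hx => (hz x hx).continuousAt.continuousWithinAt) hu''c
  have hSconst : ∀ x ∈ Set.Icc (0:ℝ) 1, S x = S 0 := by
    apply constant_of_has_deriv_right_zero hScont
    intro x hx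
    have hxIcc : x ∈ Set.Icc (0:ℝ) 1 := Set.Ico_subset_Icc_self hx
    -- u'' agrees with -f ∘ u on Icc, which is differentiable
    have hfu : HasDerivAt (fun y => -f (u y)) (-(deriv f (u x) * u' x)) x := by
      have h1 : HasDerivAt f (deriv f (u x)) (u x) :=
        ((hf.differentiable one_ne_zero) (u x)).hasDerivAt
      exact (h1.comp x (hu x hxIcc)).neg
    have hu''d : HasDerivWithinAt u'' (-(deriv f (u x) * u' x)) (Set.Icc 0 1) x := by
      apply HasDerivWithinAt.congr (hfu.hasDerivWithinAt) (fun y hy => (hode y hy)) (hode x hxIcc)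
    have hIccmem : Set.Icc (0:ℝ) 1 ∈ 𝓝[Set.Ici x] x := by
      have h1 : Set.Iic (1:ℝ) ∈ 𝓝 x := Iic_mem_nhds (lt_of_lt_of_le hx.2 le_rfl)
      have h2 : Set.Iic (1:ℝ) ∈ 𝓝[Set.Ici x] x := mem_nhdsWithin_of_mem_nhds h1
      have h3 : Set.Ici x ∈ 𝓝[Set.Ici x] x := self_mem_nhdsWithin
      refine Filter.mem_of_superset (Filter.inter_mem h3 h2) ?_
      intro y hy
      exact ⟨le_trans hx.1 hy.1, hy.2⟩
    have hu''i : HasDerivWithinAt u'' (-(deriv f (u x) * u' x)) (Set.Ici x) x :=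
      hu''d.mono_of_mem_nhdsWithin hIccmem
    have hder : HasDerivWithinAt S
        (z'' x * u' x + z' x * u'' x - (z' x * u'' x + z x * -(deriv f (u x) * u' x)))
        (Set.Ici x) x := by
      exact (((hz'd x hxIcc).hasDerivWithinAt.mul (hu'd x hxIcc).hasDerivWithinAt).sub
        ((hz x hxIcc).hasDerivWithinAt.mul hu''i))
    have heq : z'' x * u' x + z' x * u'' x - (z' x * u'' x + z x * -(deriv f (u x) * u' x)) = 0 := by
      rw [hzode x hxIcc]; ring
    rw [heq] at hder
    exact hder
  have hS0 : S 0 = z 0 * f (u 0) := by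
    rw [hSdef]; dsimp only
    rw [hu'0, hode 0 h0Icc]; ring
  have hSne : S 0 ≠ 0 := by
    rw [hS0]
    exact mul_ne_zero hz0ne (hfne (u 0) hu0ne)
  -- finite zero sets
  have hufin : {x | x ∈ Set.Icc (0:ℝ) 1 ∧ u x = 0}.Finite := nd_finite_zeros u u' hu hund
  have hzfin : {x | x ∈ Set.Icc (0:ℝ) 1 ∧ z x = 0}.Finite := nd_finite_zeros z z' hz hznd
  have hjfin : {x | x ∈ Set.Icc (0:ℝ) 1 ∧ u' x = 0}.Finite := nd_finite_zeros u' u'' hu'd hu'nd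
  have hFufin : {x | x ∈ Set.Ioc (0:ℝ) 1 ∧ u x = 0}.Finite :=
    hufin.subset (fun x hx => ⟨Set.Ioc_subset_Icc_self hx.1, hx.2⟩)
  have hFzfin : {x | x ∈ Set.Ioc (0:ℝ) 1 ∧ z x = 0}.Finite :=
    hzfin.subset (fun x hx => ⟨Set.Ioc_subset_Icc_self hx.1, hx.2⟩)
  have hFjfin : {x | x ∈ Set.Ioo (0:ℝ) 1 ∧ u' x = 0}.Finite :=
    hjfin.subset (fun x hx => ⟨Set.Ioo_subset_Icc_self hx.1, hx.2⟩)
  set Fu := hFufin.toFinset with hFu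
  set Fz := hFzfin.toFinset with hFz
  set Fj := hFjfin.toFinset with hFj
  have hmemFu : ∀ t : ℝ, t ∈ Fu ↔ (t ∈ Set.Ioc (0:ℝ) 1 ∧ u t = 0) :=
    fun t => Set.Finite.mem_toFinset _
  have hmemFz : ∀ t : ℝ, t ∈ Fz ↔ (t ∈ Set.Ioc (0:ℝ) 1 ∧ z t = 0) :=
    fun t => Set.Finite.mem_toFinset _
  have hmemFj : ∀ t : ℝ, t ∈ Fj ↔ (t ∈ Set.Ioo (0:ℝ) 1 ∧ u' t = 0) :=
    fun t => Set.Finite.mem_toFinset _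
  have h1Fu : (1:ℝ) ∈ Fu := (hmemFu 1).mpr ⟨⟨zero_lt_one, le_rfl⟩, hu1⟩
  have h1Fz : (1:ℝ) ∈ Fz := (hmemFz 1).mpr ⟨⟨zero_lt_one, le_rfl⟩, hz1⟩
  have hFzne : Fz.Nonempty := ⟨1, h1Fz⟩
  set e := Fz.min' hFzne with he
  -- ===== Spec 3 : between consecutive zeros of u' there is a zero of u =====
  have spec3 : ∀ x ∈ Fj, ∃ c, c ∈ Fu.erase 1 ∧ c < x ∧ ∀ y ∈ Fj, y < x → y < c := by
    intro x hxF
    have hxP := (hmemFj x).mp hxF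
    have hPne : ((insert (0:ℝ) Fj).filter (fun w => w < x)).Nonempty := by
      refine ⟨0, Finset.mem_filter.mpr ⟨Finset.mem_insert_self _ _, hxP.1.1⟩⟩
    set p := ((insert (0:ℝ) Fj).filter (fun w => w < x)).max' hPne with hp
    have hpP := Finset.max'_mem _ hPne
    have hplt : p < x := (Finset.mem_filter.mp hpP).2
    have hpmem : p ∈ insert (0:ℝ) Fj := (Finset.mem_filter.mp hpP).1
    have hple : ∀ y ∈ insert (0:ℝ) Fj, y < x → y ≤ p := fun y hy hyx =>
      Finset.le_max' ((insert (0:ℝ) Fj).filter (fun w => w < x)) y (Finset.mem_filter.mpr ⟨hy, hyx⟩)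
    have hp0 : 0 ≤ p := by
      rcases Finset.mem_insert.mp hpmem with h | h
      · exact le_of_eq h.symm
      · exact (((hmemFj p).mp h).1.1).le
    have hu'p : u' p = 0 := by
      rcases Finset.mem_insert.mp hpmem with h | h
      · rw [h]; exact hu'0
      · exact ((hmemFj p).mp h).2
    have hsub : Set.Icc p x ⊆ Set.Icc (0:ℝ) 1 := Set.Icc_subset_Icc hp0 hxP.1.2.le
    have hcont : ContinuousOn u' (Set.Icc p x) :=
      fun y hy => (hu'd y (hsub hy)).continuousAt.continuousWithinAt
    obtain ⟨c, hc, hc0⟩ := exists_hasDerivAt_eq_zero hplt hcont (by rw [hu'p, hxP.2])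
      (fun y hy => hu'd y (hsub (Set.Ioo_subset_Icc_self hy)))
    have hcIcc : c ∈ Set.Icc (0:ℝ) 1 := hsub (Set.Ioo_subset_Icc_self hc)
    have huc : u c = 0 := by
      by_contra hne
      apply hfne (u c) hne
      have h3 := hode c hcIcc
      rw [hc0] at h3
      linarith
    refine ⟨c, ?_, hc.2, fun y hy hyx => lt_of_le_of_lt (hple y (Finset.mem_insert_of_mem hy) hyx) hc.1⟩
    refine Finset.mem_erase.mpr ⟨?_, (hmemFu c).mpr ⟨⟨lt_of_le_of_lt hp0 hc.1, hcIcc.2⟩, huc⟩⟩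
    exact ne_of_lt (lt_trans hc.2 hxP.1.2)
  -- ===== Spec 2 : between consecutive zeros of z there is a zero of u' =====
  have spec2 : ∀ r ∈ Fz.erase e, ∃ c, c ∈ Fj ∧ c < r ∧ ∀ y ∈ Fz, y < r → y ≤ c := by
    intro r hr
    obtain ⟨hrne, hrF⟩ := Finset.mem_erase.mp hr
    have hrP := (hmemFz r).mp hrF
    have heF : e ∈ Fz := Fz.min'_mem hFzne
    have helt : e < r := lt_of_le_of_ne (Fz.min'_le r hrF) (Ne.symm hrne)
    have hPne : (Fz.filter (fun w => w < r)).Nonempty :=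
      ⟨e, Finset.mem_filter.mpr ⟨heF, helt⟩⟩
    set p := (Fz.filter (fun w => w < r)).max' hPne with hp
    have hpP := Finset.max'_mem _ hPne
    have hplt : p < r := (Finset.mem_filter.mp hpP).2
    have hpF : p ∈ Fz := (Finset.mem_filter.mp hpP).1
    have hpprop := (hmemFz p).mp hpF
    have hple : ∀ y ∈ Fz, y < r → y ≤ p := fun y hy hyr =>
      Finset.le_max' (Fz.filter (fun w => w < r)) y (Finset.mem_filter.mpr ⟨hy, hyr⟩)
    have hpIcc : p ∈ Set.Icc (0:ℝ) 1 := Set.Ioc_subset_Icc_self hpprop.1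
    have hrIcc : r ∈ Set.Icc (0:ℝ) 1 := Set.Ioc_subset_Icc_self hrP.1
    by_cases hcase1 : u' p = 0
    · exact ⟨p, (hmemFj p).mpr ⟨⟨hpprop.1.1, lt_of_lt_of_le hplt hrP.1.2⟩, hcase1⟩, hplt, hple⟩
    by_cases hcase2 : ∃ c ∈ Set.Ioo p r, u' c = 0
    · obtain ⟨c, hc, hc0⟩ := hcase2
      refine ⟨c, (hmemFj c).mpr ⟨⟨lt_trans hpprop.1.1 hc.1, lt_of_lt_of_le hc.2 hrP.1.2⟩, hc0⟩,
        hc.2, fun y hy hyr => le_of_lt (lt_of_le_of_lt (hple y hy hyr) hc.1)⟩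
    exfalso
    push_neg at hcase2
    by_cases hu'r : u' r = 0
    · apply hSne
      rw [← hSconst r hrIcc, hSdef]
      dsimp only
      rw [hu'r, hrP.2]
      ring
    · have hu'ne : ∀ y ∈ Set.Icc p r, u' y ≠ 0 := by
        intro y hy
        rcases eq_or_lt_of_le hy.1 with h | h1
        · rw [← h]; exact hcase1
        rcases eq_or_lt_of_le hy.2 with h | h2
        · rw [h]; exact hu'r
        exact hcase2 y ⟨h1, h2⟩
      have hsub : Set.Icc p r ⊆ Set.Icc (0:ℝ) 1 := Set.Icc_subset_Icc hpIcc.1 hrIcc.2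
      have hcont : ContinuousOn (fun y => z y / u' y) (Set.Icc p r) := by
        apply ContinuousOn.div
        · exact fun y hy => (hz y (hsub hy)).continuousAt.continuousWithinAt
        · exact fun y hy => (hu'd y (hsub hy)).continuousAt.continuousWithinAt
        · exact hu'ne
      have hends : z p / u' p = z r / u' r := by rw [hpprop.2, hrP.2, zero_div, zero_div]
      obtain ⟨c, hc, hc0⟩ := exists_hasDerivAt_eq_zero hplt hcont hends
        (fun y hy => by
          have hyIcc := hsub (Set.Ioo_subset_Icc_self hy)
          exact ((hz y hyIcc).div (hu'd y hyIcc) (hu'ne y (Set.Ioo_subset_Icc_self hy))))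
      have hcIcc : c ∈ Set.Icc (0:ℝ) 1 := hsub (Set.Ioo_subset_Icc_self hc)
      apply hSne
      rw [← hSconst c hcIcc, hSdef]
      dsimp only
      rcases div_eq_zero_iff.mp hc0 with h | h
      · exact h
      · exact absurd (pow_eq_zero_iff two_ne_zero |>.mp h)
          (hu'ne c (Set.Ioo_subset_Icc_self hc))
  -- ===== Spec 1 : Sturm comparison, z vanishes in each nodal gap of u =====
  have spec1 : ∀ t ∈ Fu, ∃ r, r ∈ Fz.erase 1 ∧ r < t ∧ ∀ y ∈ Fu, y < t → y < r := by
    intro t htF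
    have htP := (hmemFu t).mp htF
    have hPne : ((insert (0:ℝ) Fu).filter (fun w => w < t)).Nonempty :=
      ⟨0, Finset.mem_filter.mpr ⟨Finset.mem_insert_self _ _, htP.1.1⟩⟩
    set p := ((insert (0:ℝ) Fu).filter (fun w => w < t)).max' hPne with hp
    have hpP := Finset.max'_mem _ hPne
    have hplt : p < t := (Finset.mem_filter.mp hpP).2
    have hpmem : p ∈ insert (0:ℝ) Fu := (Finset.mem_filter.mp hpP).1
    have hple : ∀ y ∈ insert (0:ℝ) Fu, y < t → y ≤ p := fun y hy hyx =>
      Finset.le_max' ((insert (0:ℝ) Fu).filter (fun w => w < t)) y (Finset.mem_filter.mpr ⟨hy, hyx⟩)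
    have hp0 : 0 ≤ p := by
      rcases Finset.mem_insert.mp hpmem with h | h
      · exact le_of_eq h.symm
      · exact (((hmemFu p).mp h).1.1).le
    have hsub : Set.Icc p t ⊆ Set.Icc (0:ℝ) 1 := Set.Icc_subset_Icc hp0 htP.1.2
    have hnouz : ∀ y ∈ Set.Ioo p t, u y ≠ 0 := by
      intro y hy h
      have hyF : y ∈ Fu := (hmemFu y).mpr ⟨⟨lt_of_le_of_lt hp0 hy.1, le_trans hy.2.le htP.1.2⟩, h⟩
      exact absurd (hple y (Finset.mem_insert_of_mem hyF) hy.2) (not_le.mpr hy.1)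
    suffices hex : ∃ r ∈ Set.Ioo p t, z r = 0 by
      obtain ⟨r, hr, hzr⟩ := hex
      refine ⟨r, ?_, hr.2, fun y hy hyt => lt_of_le_of_lt (hple y (Finset.mem_insert_of_mem hy) hyt) hr.1⟩
      refine Finset.mem_erase.mpr ⟨ne_of_lt (lt_of_lt_of_le hr.2 htP.1.2), ?_⟩
      exact (hmemFz r).mpr ⟨⟨lt_of_le_of_lt hp0 hr.1, le_trans hr.2.le htP.1.2⟩, hzr⟩
    by_contra hno
    push_neg at hno
    have hnz : ∀ y ∈ Set.Ioo p t, z y ≠ 0 := fun y hy => hno y hy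
    -- sign dichotomies
    have hucont : ContinuousOn u (Set.Icc p t) :=
      fun y hy => (hu y (hsub hy)).continuousAt.continuousWithinAt
    have hzcont : ContinuousOn z (Set.Icc p t) :=
      fun y hy => (hz y (hsub hy)).continuousAt.continuousWithinAt
    obtain ⟨εu, hεu, hupos⟩ : ∃ ε : ℝ, (ε = 1 ∨ ε = -1) ∧ ∀ y ∈ Set.Ioo p t, 0 < ε * u y := by
      rcases nd_dich u p t hplt hucont hnouz with h | h
      · exact ⟨1, Or.inl rfl, fun y hy => by rw [one_mul]; exact h y hy⟩
      · exact ⟨-1, Or.inr rfl, fun y hy => by nlinarith [h y hy]⟩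
    obtain ⟨εz, hεz, hzpos⟩ : ∃ ε : ℝ, (ε = 1 ∨ ε = -1) ∧ ∀ y ∈ Set.Ioo p t, 0 < ε * z y := by
      rcases nd_dich z p t hplt hzcont hnz with h | h
      · exact ⟨1, Or.inl rfl, fun y hy => by rw [one_mul]; exact h y hy⟩
      · exact ⟨-1, Or.inr rfl, fun y hy => by nlinarith [h y hy]⟩
    rcases Finset.mem_insert.mp hpmem with hp0' | hpFu
    · -- p = 0 : mixed boundary conditions give W 0 = 0
      refine nd_sturm f hsuper' u u' u'' z z' z'' hu hu'd hz hz'd hode hzode p t εu εz hεu hεz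
        hp0 hplt htP.1.2 hupos hzpos htP.2 ?_
      rw [hp0', hz'0, hu'0]
      simp
    · -- u p = 0
      have hpprop := (hmemFu p).mp hpFu
      have hpIcc : p ∈ Set.Icc (0:ℝ) 1 := Set.Ioc_subset_Icc_self hpprop.1
      have hzp : 0 ≤ εz * z p := by
        refine nd_bnd_right (fun y => εz * z y) p t hplt ?_ hzpos
        exact continuousAt_const.mul (hz p hpIcc).continuousAt
      have hu'p : 0 ≤ εu * u' p := by
        refine nd_slope_right (fun y => εu * u y) (εu * u' p) p t hplt ((hu p hpIcc).const_mul εu)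
          (by beta_reduce; rw [hpprop.2, mul_zero]) hupos
      refine nd_sturm f hsuper' u u' u'' z z' z'' hu hu'd hz hz'd hode hzode p t εu εz hεu hεz
        hp0 hplt htP.1.2 hupos hzpos htP.2 ?_
      have heq : εz * εu * (z' p * u p - z p * u' p) = -((εz * z p) * (εu * u' p)) := by
        rw [hpprop.2]; ring
      rw [heq]
      exact neg_nonpos.mpr (mul_nonneg hzp hu'p)
  -- ===== counting =====
  choose! g1 hg1 using spec1
  choose! g2 hg2 using spec2
  choose! g3 hg3 using spec3
  have card1 : Fu.card ≤ (Fz.erase 1).card := by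
    apply Finset.card_le_card_of_injOn g1 (fun a ha => (hg1 a ha).1)
    intro a ha b hb heq2
    by_contra hne
    rcases lt_or_gt_of_ne hne with h | h
    · have h1 := (hg1 b (Finset.mem_coe.mp hb)).2.2 a (Finset.mem_coe.mp ha) h
      have h2 := (hg1 a (Finset.mem_coe.mp ha)).2.1
      rw [heq2] at h2
      linarith
    · have h1 := (hg1 a (Finset.mem_coe.mp ha)).2.2 b (Finset.mem_coe.mp hb) h
      have h2 := (hg1 b (Finset.mem_coe.mp hb)).2.1
      rw [← heq2] at h2
      linarith
  have card2 : (Fz.erase e).card ≤ Fj.card := by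
    apply Finset.card_le_card_of_injOn g2 (fun a ha => (hg2 a ha).1)
    intro a ha b hb heq2
    by_contra hne
    have haF : a ∈ Fz := Finset.mem_of_mem_erase (Finset.mem_coe.mp ha)
    have hbF : b ∈ Fz := Finset.mem_of_mem_erase (Finset.mem_coe.mp hb)
    rcases lt_or_gt_of_ne hne with h | h
    · have h1 := (hg2 b (Finset.mem_coe.mp hb)).2.2 a haF h
      have h2 := (hg2 a (Finset.mem_coe.mp ha)).2.1
      rw [heq2] at h2
      linarith
    · have h1 := (hg2 a (Finset.mem_coe.mp ha)).2.2 b hbF h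
      have h2 := (hg2 b (Finset.mem_coe.mp hb)).2.1
      rw [← heq2] at h2
      linarith
  have card3 : Fj.card ≤ (Fu.erase 1).card := by
    apply Finset.card_le_card_of_injOn g3 (fun a ha => (hg3 a ha).1)
    intro a ha b hb heq2
    by_contra hne
    rcases lt_or_gt_of_ne hne with h | h
    · have h1 := (hg3 b (Finset.mem_coe.mp hb)).2.2 a (Finset.mem_coe.mp ha) h
      have h2 := (hg3 a (Finset.mem_coe.mp ha)).2.1
      rw [heq2] at h2
      linarith
    · have h1 := (hg3 a (Finset.mem_coe.mp ha)).2.2 b (Finset.mem_coe.mp hb) h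
      have h2 := (hg3 b (Finset.mem_coe.mp hb)).2.1
      rw [← heq2] at h2
      linarith
  have hc1 : (Fz.erase 1).card = Fz.card - 1 := Finset.card_erase_of_mem h1Fz
  have hc2 : (Fz.erase e).card = Fz.card - 1 := Finset.card_erase_of_mem (Fz.min'_mem hFzne)
  have hc3 : (Fu.erase 1).card = Fu.card - 1 := Finset.card_erase_of_mem h1Fu
  have hupos' : 1 ≤ Fu.card := Finset.card_pos.mpr ⟨1, h1Fu⟩
  have hzpos' : 1 ≤ Fz.card := Finset.card_pos.mpr hFzne
  omega
end

section
/- Let f : ℝ → ℝ be continuously differentiable. Let u : ℝ → ℝ be twice continuously differentiable on [0,1], not identically zero on [0,1], with u''(x) = -f(u(x)) for all x ∈ [0,1], u'(0) = 0 and u(1) = 0. Let α < 0 and let z : ℝ → ℝ be twice continuously differentiable on [0,1], not identically zero on [0,1], with z''(x) = -(f'(u(x)) + α)·z(x) for all x ∈ [0,1], z'(0) = 0 and z(1) = 0. If n ≥ 1 and z has at least n zeros in the open interval (0,1), then the derivative u' has at least n zeros in (0,1). -/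
open Set



/-- A continuous nonvanishing function on an open interval has constant sign. -/
lemma aux_sign_const {h : ℝ → ℝ} {a b : ℝ} (hab : a < b) (hc : ContinuousOn h (Set.Ioo a b))
    (hne : ∀ x ∈ Set.Ioo a b, h x ≠ 0) :
    (∀ x ∈ Set.Ioo a b, 0 < h x) ∨ (∀ x ∈ Set.Ioo a b, h x < 0) := by
  have hm : (a + b) / 2 ∈ Set.Ioo a b := ⟨by linarith, by linarith⟩
  set m := (a + b) / 2
  have key : ∀ x ∈ Set.Ioo a b, ¬ (h x * h m < 0) := by
    intro x hx hcontra
    have hsub : Set.uIcc x m ⊆ Set.Ioo a b :=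
      (Set.ordConnected_Ioo).uIcc_subset hx hm
    have h0 : (0:ℝ) ∈ Set.uIcc (h x) (h m) := by
      rcases lt_or_ge (h x) 0 with h1 | h1
      · have : 0 < h m := by nlinarith
        exact Set.mem_uIcc.2 (Or.inl ⟨h1.le, this.le⟩)
      · have hx0 : 0 < h x := lt_of_le_of_ne h1 (Ne.symm (hne x hx))
        have : h m < 0 := by nlinarith
        exact Set.mem_uIcc.2 (Or.inr ⟨this.le, hx0.le⟩)
    obtain ⟨y, hy, hy0⟩ := intermediate_value_uIcc (hc.mono hsub) h0
    exact hne y (hsub hy) hy0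
  rcases lt_or_gt_of_ne (hne m hm) with hneg | hpos
  · right
    intro x hx
    rcases lt_or_ge (h x) 0 with h1 | h1
    · exact h1
    · have hx0 : 0 < h x := lt_of_le_of_ne h1 (Ne.symm (hne x hx))
      exact absurd (by nlinarith) (key x hx)
  · left
    intro x hx
    rcases lt_or_ge 0 (h x) with h1 | h1
    · exact h1
    · have hx0 : h x < 0 := lt_of_le_of_ne h1 (hne x hx)
      exact absurd (by nlinarith) (key x hx)

lemma aux_nebot_Ioo_left {a b : ℝ} (hab : a < b) : (nhdsWithin a (Set.Ioo a b)).NeBot := by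
  rw [← mem_closure_iff_nhdsWithin_neBot, closure_Ioo hab.ne]
  exact ⟨le_rfl, hab.le⟩

lemma aux_nebot_Ioo_right {a b : ℝ} (hab : a < b) : (nhdsWithin b (Set.Ioo a b)).NeBot := by
  rw [← mem_closure_iff_nhdsWithin_neBot, closure_Ioo hab.ne]
  exact ⟨hab.le, le_rfl⟩

/-- boundary value of a function positive on the open interval. -/
lemma aux_val_nonneg_left {v : ℝ → ℝ} {a b : ℝ} (hab : a < b)
    (hc : ContinuousWithinAt v (Set.Ioo a b) a)
    (hpos : ∀ x ∈ Set.Ioo a b, 0 < v x) : 0 ≤ v a := by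
  have := aux_nebot_Ioo_left hab
  exact ge_of_tendsto hc (eventually_nhdsWithin_of_forall fun x hx => (hpos x hx).le)

lemma aux_val_nonneg_right {v : ℝ → ℝ} {a b : ℝ} (hab : a < b)
    (hc : ContinuousWithinAt v (Set.Ioo a b) b)
    (hpos : ∀ x ∈ Set.Ioo a b, 0 < v x) : 0 ≤ v b := by
  have := aux_nebot_Ioo_right hab
  exact ge_of_tendsto hc (eventually_nhdsWithin_of_forall fun x hx => (hpos x hx).le)

/-- one-sided derivative sign at the left endpoint of positivity interval, with zero value. -/
lemma aux_deriv_nonneg_left {w : ℝ → ℝ} {w'a a b : ℝ} (hab : a < b)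
    (hd : HasDerivWithinAt w w'a (Set.Ioo a b) a) (hwa : w a = 0)
    (hpos : ∀ x ∈ Set.Ioo a b, 0 < w x) : 0 ≤ w'a := by
  have := aux_nebot_Ioo_left hab
  have hna : a ∉ Set.Ioo a b := fun h => lt_irrefl a h.1
  rw [hasDerivWithinAt_iff_tendsto_slope' hna] at hd
  refine ge_of_tendsto hd (eventually_nhdsWithin_of_forall fun x hx => ?_)
  rw [slope_def_field]
  have h1 : 0 < x - a := by linarith [hx.1]
  have h2 : 0 ≤ w x - w a := by rw [hwa]; linarith [hpos x hx]
  exact div_nonneg h2 h1.le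

lemma aux_deriv_nonpos_right {w : ℝ → ℝ} {w'b a b : ℝ} (hab : a < b)
    (hd : HasDerivWithinAt w w'b (Set.Ioo a b) b) (hwb : w b = 0)
    (hpos : ∀ x ∈ Set.Ioo a b, 0 < w x) : w'b ≤ 0 := by
  have := aux_nebot_Ioo_right hab
  have hnb : b ∉ Set.Ioo a b := fun h => lt_irrefl b h.2
  rw [hasDerivWithinAt_iff_tendsto_slope' hnb] at hd
  refine le_of_tendsto hd (eventually_nhdsWithin_of_forall fun x hx => ?_)
  rw [slope_def_field]
  have h1 : x - b < 0 := by linarith [hx.2]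
  have h2 : 0 ≤ w x - w b := by rw [hwb]; linarith [hpos x hx]
  exact div_nonpos_of_nonneg_of_nonpos h2 h1.le


/-- Core Sturm comparison contradiction: `v'' = -p v`, `w'' = -q w`, `q < p`,
`w` vanishes at the endpoints and both are positive inside: impossible. -/
lemma aux_sturm_core (p q v v' v'' w w' w'' : ℝ → ℝ) (a b : ℝ) (hab : a < b)
    (hv : ∀ x ∈ Set.Icc a b, HasDerivWithinAt v (v' x) (Set.Icc a b) x)
    (hv' : ∀ x ∈ Set.Icc a b, HasDerivWithinAt v' (v'' x) (Set.Icc a b) x)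
    (hw : ∀ x ∈ Set.Icc a b, HasDerivWithinAt w (w' x) (Set.Icc a b) x)
    (hw' : ∀ x ∈ Set.Icc a b, HasDerivWithinAt w' (w'' x) (Set.Icc a b) x)
    (hvode : ∀ x ∈ Set.Icc a b, v'' x = -(p x * v x))
    (hwode : ∀ x ∈ Set.Icc a b, w'' x = -(q x * w x))
    (hqp : ∀ x ∈ Set.Icc a b, q x < p x)
    (hwa : w a = 0) (hwb : w b = 0)
    (hwpos : ∀ x ∈ Set.Ioo a b, 0 < w x)
    (hvpos : ∀ x ∈ Set.Ioo a b, 0 < v x) : False := by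
  set W : ℝ → ℝ := fun x => v x * w' x - v' x * w x with hWdef
  have hWd : ∀ x ∈ Set.Icc a b,
      HasDerivWithinAt W (v x * w'' x - v'' x * w x) (Set.Icc a b) x := by
    intro x hx
    have h1 := ((hv x hx).mul (hw' x hx)).sub ((hv' x hx).mul (hw x hx))
    exact h1.congr_deriv (by ring)
  have hWc : ContinuousOn W (Set.Icc a b) := fun x hx => (hWd x hx).continuousWithinAt
  have hmono : StrictMonoOn W (Set.Icc a b) := by
    apply strictMonoOn_of_deriv_pos (convex_Icc a b) hWc
    intro x hx
    rw [interior_Icc] at hx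
    have hx' : x ∈ Set.Icc a b := Ioo_subset_Icc_self hx
    have hW : HasDerivAt W (v x * w'' x - v'' x * w x) x :=
      (hWd x hx').hasDerivAt (Icc_mem_nhds hx.1 hx.2)
    rw [hW.deriv, hvode x hx', hwode x hx']
    have h1 := hqp x hx'
    have h2 := hwpos x hx
    have h3 := hvpos x hx
    nlinarith [mul_pos (mul_pos h3 h2) (sub_pos.2 h1)]
  have hlt : W a < W b := hmono (left_mem_Icc.2 hab.le) (right_mem_Icc.2 hab.le) hab
  have hIoo : Set.Ioo a b ⊆ Set.Icc a b := Ioo_subset_Icc_self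
  have hamem : a ∈ Set.Icc a b := left_mem_Icc.2 hab.le
  have hbmem : b ∈ Set.Icc a b := right_mem_Icc.2 hab.le
  have hva : 0 ≤ v a :=
    aux_val_nonneg_left hab ((hv a hamem).continuousWithinAt.mono hIoo) hvpos
  have hvb : 0 ≤ v b :=
    aux_val_nonneg_right hab ((hv b hbmem).continuousWithinAt.mono hIoo) hvpos
  have hw'a : 0 ≤ w' a := aux_deriv_nonneg_left hab ((hw a hamem).mono hIoo) hwa hwpos
  have hw'b : w' b ≤ 0 := aux_deriv_nonpos_right hab ((hw b hbmem).mono hIoo) hwb hwpos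
  have hWa : 0 ≤ W a := by
    simp only [hWdef, hwa, mul_zero, sub_zero]
    exact mul_nonneg hva hw'a
  have hWb : W b ≤ 0 := by
    simp only [hWdef, hwb, mul_zero, sub_zero]
    exact mul_nonpos_of_nonneg_of_nonpos hvb hw'b
  linarith


/-- Gronwall-type uniqueness: a solution of `w'' = -q w` with `w c = w' c = 0`
vanishes identically on `[0,1]`. -/
lemma aux_energy_zero (q w w' w'' : ℝ → ℝ)
    (hw : ∀ x ∈ Set.Icc (0:ℝ) 1, HasDerivWithinAt w (w' x) (Set.Icc (0:ℝ) 1) x)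
    (hw' : ∀ x ∈ Set.Icc (0:ℝ) 1, HasDerivWithinAt w' (w'' x) (Set.Icc (0:ℝ) 1) x)
    (hode : ∀ x ∈ Set.Icc (0:ℝ) 1, w'' x = -(q x * w x))
    (hqc : ContinuousOn q (Set.Icc 0 1))
    (c : ℝ) (hc : c ∈ Set.Icc (0:ℝ) 1) (hwc : w c = 0) (hw'c : w' c = 0) :
    ∀ x ∈ Set.Icc (0:ℝ) 1, w x = 0 := by
  obtain ⟨C, hC⟩ := isCompact_Icc.exists_bound_of_continuousOn hqc
  have hC0 : 0 ≤ C := le_trans (norm_nonneg _) (hC 0 (by norm_num))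
  set M : ℝ := 1 + C with hM
  set E : ℝ → ℝ := fun x => w x * w x + w' x * w' x with hE
  set E' : ℝ → ℝ := fun x => 2 * w x * w' x + 2 * w' x * w'' x with hE'
  have hEd : ∀ x ∈ Set.Icc (0:ℝ) 1, HasDerivWithinAt E (E' x) (Set.Icc (0:ℝ) 1) x := by
    intro x hx
    have h1 := ((hw x hx).mul (hw x hx)).add ((hw' x hx).mul (hw' x hx))
    exact h1.congr_deriv (by show _ = 2 * w x * w' x + 2 * w' x * w'' x; ring)
  have hEc : ContinuousOn E (Set.Icc 0 1) := fun x hx => (hEd x hx).continuousWithinAt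
  have hEnn : ∀ x, 0 ≤ E x := fun x => add_nonneg (mul_self_nonneg _) (mul_self_nonneg _)
  have hEbound : ∀ x ∈ Set.Icc (0:ℝ) 1, |E' x| ≤ M * E x := by
    intro x hx
    have hq : |q x| ≤ C := (Real.norm_eq_abs (q x)) ▸ hC x hx
    have h2 : 2 * |w x| * |w' x| ≤ E x := by
      have := sq_nonneg (|w x| - |w' x|)
      have e1 : |w x| * |w x| = w x * w x := abs_mul_abs_self _
      have e2 : |w' x| * |w' x| = w' x * w' x := abs_mul_abs_self _
      simp only [hE]; nlinarith
    have : E' x = 2 * (w x * w' x) * (1 - q x) := by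
      simp only [hE', hode x hx]; ring
    rw [this, abs_mul, abs_mul]
    have habs1 : |(2:ℝ)| = 2 := by norm_num
    have habs2 : |w x * w' x| = |w x| * |w' x| := abs_mul _ _
    have habs3 : |1 - q x| ≤ M := by
      rw [hM]
      have := abs_le.1 hq
      rw [abs_le]; constructor <;> linarith [this.1, this.2]
    have hM0 : 0 ≤ M := by rw [hM]; linarith
    calc |2| * |w x * w' x| * |1 - q x|
        ≤ |2| * |w x * w' x| * M := by
          apply mul_le_mul_of_nonneg_left habs3
          positivity
      _ = M * (2 * |w x| * |w' x|) := by rw [habs1, habs2]; ring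
      _ ≤ M * E x := mul_le_mul_of_nonneg_left h2 hM0
  have hEc0 : E c = 0 := by simp [hE, hwc, hw'c]
  -- forward: E = 0 on [c, 1]
  have hfwd : ∀ x ∈ Set.Icc c 1, E x = 0 := by
    intro x hx
    have hsub : Set.Icc c 1 ⊆ Set.Icc (0:ℝ) 1 := Icc_subset_Icc hc.1 le_rfl
    set G : ℝ → ℝ := fun y => E y * Real.exp (-M * y) with hG
    have hGd : ∀ y ∈ Set.Ioo c 1, HasDerivAt G
        (E' y * Real.exp (-M * y) + E y * (Real.exp (-M * y) * (-M * 1))) y := by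
      intro y hy
      have hy0 : y ∈ Set.Icc (0:ℝ) 1 := ⟨le_trans hc.1 hy.1.le, hy.2.le⟩
      have hyI : y ∈ Set.Ioo (0:ℝ) 1 := ⟨lt_of_le_of_lt hc.1 hy.1, hy.2⟩
      have hEy : HasDerivAt E (E' y) y :=
        (hEd y hy0).hasDerivAt (Icc_mem_nhds hyI.1 hyI.2)
      have hexp : HasDerivAt (fun t => Real.exp (-M * t))
          (Real.exp (-M * y) * (-M * 1)) y := ((hasDerivAt_id y).const_mul (-M)).exp
      exact hEy.mul hexp
    have hanti : AntitoneOn G (Set.Icc c 1) := by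
      apply antitoneOn_of_deriv_nonpos (convex_Icc c 1)
      · exact (hEc.mono hsub).mul
          (Continuous.continuousOn ((continuous_const.mul continuous_id).rexp))
      · intro y hy
        rw [interior_Icc] at hy
        exact (hGd y hy).differentiableAt.differentiableWithinAt
      · intro y hy
        rw [interior_Icc] at hy
        have hy0 : y ∈ Set.Icc (0:ℝ) 1 := ⟨le_trans hc.1 hy.1.le, hy.2.le⟩
        rw [(hGd y hy).deriv]
        have h1 := (abs_le.1 (hEbound y hy0)).2
        have h2 := Real.exp_pos (-M * y)
        nlinarith
    have hGle : G x ≤ G c := hanti (left_mem_Icc.2 hc.2) hx hx.1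
    have hGc : G c = 0 := by simp [hG, hEc0]
    have hGx : 0 ≤ G x := mul_nonneg (hEnn x) (Real.exp_pos _).le
    have : G x = 0 := le_antisymm (hGc ▸ hGle) hGx
    have hexp := Real.exp_pos (-M * x)
    simp only [hG] at this
    rcases mul_eq_zero.1 this with h | h
    · exact h
    · exact absurd h hexp.ne'
  -- backward: E = 0 on [0, c]
  have hbwd : ∀ x ∈ Set.Icc (0:ℝ) c, E x = 0 := by
    intro x hx
    have hsub : Set.Icc (0:ℝ) c ⊆ Set.Icc (0:ℝ) 1 := Icc_subset_Icc le_rfl hc.2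
    set H : ℝ → ℝ := fun y => E y * Real.exp (M * y) with hH
    have hHd : ∀ y ∈ Set.Ioo (0:ℝ) c, HasDerivAt H
        (E' y * Real.exp (M * y) + E y * (Real.exp (M * y) * (M * 1))) y := by
      intro y hy
      have hy0 : y ∈ Set.Icc (0:ℝ) 1 := ⟨hy.1.le, le_trans hy.2.le hc.2⟩
      have hyI : y ∈ Set.Ioo (0:ℝ) 1 := ⟨hy.1, lt_of_lt_of_le hy.2 hc.2⟩
      have hEy : HasDerivAt E (E' y) y :=
        (hEd y hy0).hasDerivAt (Icc_mem_nhds hyI.1 hyI.2)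
      have hexp : HasDerivAt (fun t => Real.exp (M * t))
          (Real.exp (M * y) * (M * 1)) y := ((hasDerivAt_id y).const_mul M).exp
      exact hEy.mul hexp
    have hmono : MonotoneOn H (Set.Icc (0:ℝ) c) := by
      apply monotoneOn_of_deriv_nonneg (convex_Icc 0 c)
      · exact (hEc.mono hsub).mul
          (Continuous.continuousOn ((continuous_const.mul continuous_id).rexp))
      · intro y hy
        rw [interior_Icc] at hy
        exact (hHd y hy).differentiableAt.differentiableWithinAt
      · intro y hy
        rw [interior_Icc] at hy
        have hy0 : y ∈ Set.Icc (0:ℝ) 1 := ⟨hy.1.le, le_trans hy.2.le hc.2⟩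
        rw [(hHd y hy).deriv]
        have h1 := (abs_le.1 (hEbound y hy0)).1
        have h2 := Real.exp_pos (M * y)
        nlinarith
    have hHle : H x ≤ H c := hmono hx (right_mem_Icc.2 hc.1) hx.2
    have hHc : H c = 0 := by simp [hH, hEc0]
    have hHx : 0 ≤ H x := mul_nonneg (hEnn x) (Real.exp_pos _).le
    have : H x = 0 := le_antisymm (hHc ▸ hHle) hHx
    have hexp := Real.exp_pos (M * x)
    simp only [hH] at this
    rcases mul_eq_zero.1 this with h | h
    · exact h
    · exact absurd h hexp.ne'
  intro x hx
  have hEx : E x = 0 := by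
    rcases le_total x c with h | h
    · exact hbwd x ⟨hx.1, h⟩
    · exact hfwd x ⟨h, hx.2⟩
  have h1 : w x * w x = 0 := by
    have := mul_self_nonneg (w x); have := mul_self_nonneg (w' x)
    simp only [hE] at hEx; linarith
  exact mul_self_eq_zero.1 h1

open Set

lemma aux_sturm_between (p q v v' v'' w w' w'' : ℝ → ℝ)
    (hqc : ContinuousOn q (Set.Icc 0 1))
    (hv : ∀ x ∈ Set.Icc (0:ℝ) 1, HasDerivWithinAt v (v' x) (Set.Icc (0:ℝ) 1) x)
    (hv' : ∀ x ∈ Set.Icc (0:ℝ) 1, HasDerivWithinAt v' (v'' x) (Set.Icc (0:ℝ) 1) x)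
    (hw : ∀ x ∈ Set.Icc (0:ℝ) 1, HasDerivWithinAt w (w' x) (Set.Icc (0:ℝ) 1) x)
    (hw' : ∀ x ∈ Set.Icc (0:ℝ) 1, HasDerivWithinAt w' (w'' x) (Set.Icc (0:ℝ) 1) x)
    (hvode : ∀ x ∈ Set.Icc (0:ℝ) 1, v'' x = -(p x * v x))
    (hwode : ∀ x ∈ Set.Icc (0:ℝ) 1, w'' x = -(q x * w x))
    (hqp : ∀ x ∈ Set.Icc (0:ℝ) 1, q x < p x)
    (hwnz : ∃ x ∈ Set.Icc (0:ℝ) 1, w x ≠ 0)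
    (a b : ℝ) (ha : a ∈ Set.Icc (0:ℝ) 1) (hb : b ∈ Set.Icc (0:ℝ) 1) (hab : a < b)
    (hwa : w a = 0) (hwb : w b = 0) :
    ∃ x ∈ Set.Ioo a b, v x = 0 := by
  by_contra hcon
  push_neg at hcon
  have hIab : Set.Icc a b ⊆ Set.Icc (0:ℝ) 1 := Icc_subset_Icc ha.1 hb.2
  have hOab : Set.Ioo a b ⊆ Set.Icc (0:ℝ) 1 := fun x hx => hIab (Ioo_subset_Icc_self hx)
  have hwcont : ContinuousOn w (Set.Icc (0:ℝ) 1) := fun x hx => (hw x hx).continuousWithinAt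
  -- Step 1: w is not identically zero on (a,b)
  have hwt : ∃ t ∈ Set.Ioo a b, w t ≠ 0 := by
    by_contra h
    push_neg at h
    have hc : (a + b) / 2 ∈ Set.Ioo a b := ⟨by linarith, by linarith⟩
    set c := (a + b) / 2
    have hc1 : c ∈ Set.Icc (0:ℝ) 1 := hOab hc
    have hwzero : w' c = 0 := by
      have heq : w =ᶠ[nhds c] (fun _ => (0:ℝ)) := by
        filter_upwards [Ioo_mem_nhds hc.1 hc.2] with x hx using h x hx
      have hd0 : HasDerivAt w 0 c :=
        (hasDerivAt_const c (0:ℝ)).congr_of_eventuallyEq heq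
      have hd1 : HasDerivAt w (w' c) c :=
        (hw c hc1).hasDerivAt (Icc_mem_nhds (lt_of_le_of_lt ha.1 hc.1) (lt_of_lt_of_le hc.2 hb.2))
      exact hd1.unique hd0
    obtain ⟨x0, hx0, hx0ne⟩ := hwnz
    exact hx0ne (aux_energy_zero q w w' w'' hw hw' hwode hqc c hc1 (h c hc) hwzero x0 hx0)
  obtain ⟨t, ht, hwtne⟩ := hwt
  -- Step 2: select consecutive zeros a' < b' around t
  set A : Set ℝ := {x ∈ Set.Icc a t | w x = 0} with hA
  set B : Set ℝ := {x ∈ Set.Icc t b | w x = 0} with hB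
  have hAclosed : IsClosed A := by
    have : A = Set.Icc a t ∩ w ⁻¹' {0} := by ext x; simp [hA]
    rw [this]
    apply ContinuousOn.preimage_isClosed_of_isClosed
      (hwcont.mono (Icc_subset_Icc ha.1 (hOab ht).2)) isClosed_Icc isClosed_singleton
  have hBclosed : IsClosed B := by
    have : B = Set.Icc t b ∩ w ⁻¹' {0} := by ext x; simp [hB]
    rw [this]
    apply ContinuousOn.preimage_isClosed_of_isClosed
      (hwcont.mono (Icc_subset_Icc (hOab ht).1 hb.2)) isClosed_Icc isClosed_singleton
  have hAne : A.Nonempty := ⟨a, ⟨left_mem_Icc.2 ht.1.le, hwa⟩⟩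
  have hBne : B.Nonempty := ⟨b, ⟨right_mem_Icc.2 ht.2.le, hwb⟩⟩
  have hAcomp : IsCompact A := isCompact_Icc.of_isClosed_subset hAclosed (fun x hx => hx.1)
  have hBcomp : IsCompact B := isCompact_Icc.of_isClosed_subset hBclosed (fun x hx => hx.1)
  set a' := sSup A with ha'
  set b' := sInf B with hb'
  have ha'mem : a' ∈ A := hAcomp.sSup_mem hAne
  have hb'mem : b' ∈ B := hBcomp.sInf_mem hBne
  have ha't : a' < t := lt_of_le_of_ne ha'mem.1.2 (fun h => hwtne (h ▸ ha'mem.2))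
  have htb' : t < b' := lt_of_le_of_ne hb'mem.1.1 (fun h => hwtne (h.symm ▸ hb'mem.2))
  have ha'b' : a' < b' := ha't.trans htb'
  have hsubIoo : Set.Ioo a' b' ⊆ Set.Ioo a b :=
    Ioo_subset_Ioo ha'mem.1.1 hb'mem.1.2
  have hsubIcc : Set.Icc a' b' ⊆ Set.Icc (0:ℝ) 1 :=
    Icc_subset_Icc (ha.1.trans ha'mem.1.1) (hb'mem.1.2.trans hb.2)
  -- w does not vanish on (a', b')
  have hwne : ∀ x ∈ Set.Ioo a' b', w x ≠ 0 := by
    intro x hx hx0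
    rcases le_or_gt x t with hle | hlt
    · have hxA : x ∈ A := ⟨⟨ha'mem.1.1.trans hx.1.le, hle⟩, hx0⟩
      exact absurd (le_csSup hAcomp.bddAbove hxA) (not_le.2 hx.1)
    · have hxB : x ∈ B := ⟨⟨hlt.le, hx.2.le.trans hb'mem.1.2⟩, hx0⟩
      exact absurd (csInf_le hBcomp.bddBelow hxB) (not_le.2 hx.2)
  -- v does not vanish on (a', b')
  have hvne : ∀ x ∈ Set.Ioo a' b', v x ≠ 0 := fun x hx => hcon x (hsubIoo hx)
  have hvcont : ContinuousOn v (Set.Icc (0:ℝ) 1) := fun x hx => (hv x hx).continuousWithinAt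
  -- choose signs
  have hwsign := aux_sign_const ha'b'
    (hwcont.mono (fun x hx => hsubIcc (Ioo_subset_Icc_self hx))) hwne
  have hvsign := aux_sign_const ha'b'
    (hvcont.mono (fun x hx => hsubIcc (Ioo_subset_Icc_self hx))) hvne
  obtain ⟨ε, hεw⟩ : ∃ ε : ℝ, ∀ x ∈ Set.Ioo a' b', 0 < ε * w x := by
    rcases hwsign with h | h
    · exact ⟨1, fun x hx => by simpa using h x hx⟩
    · exact ⟨-1, fun x hx => by have := h x hx; nlinarith⟩
  obtain ⟨δ, hδv⟩ : ∃ δ : ℝ, ∀ x ∈ Set.Ioo a' b', 0 < δ * v x := by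
    rcases hvsign with h | h
    · exact ⟨1, fun x hx => by simpa using h x hx⟩
    · exact ⟨-1, fun x hx => by have := h x hx; nlinarith⟩
  -- apply the core lemma
  refine aux_sturm_core p q (fun x => δ * v x) (fun x => δ * v' x) (fun x => δ * v'' x)
    (fun x => ε * w x) (fun x => ε * w' x) (fun x => ε * w'' x) a' b' ha'b'
    (fun x hx => ((hv x (hsubIcc hx)).mono hsubIcc).const_mul δ)
    (fun x hx => ((hv' x (hsubIcc hx)).mono hsubIcc).const_mul δ)
    (fun x hx => ((hw x (hsubIcc hx)).mono hsubIcc).const_mul ε)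
    (fun x hx => ((hw' x (hsubIcc hx)).mono hsubIcc).const_mul ε)
    (fun x hx => by show δ * v'' x = -(p x * (δ * v x)); rw [hvode x (hsubIcc hx)]; ring)
    (fun x hx => by show ε * w'' x = -(q x * (ε * w x)); rw [hwode x (hsubIcc hx)]; ring)
    (fun x hx => hqp x (hsubIcc hx))
    (by show ε * w a' = 0; rw [ha'mem.2, mul_zero])
    (by show ε * w b' = 0; rw [hb'mem.2, mul_zero]) hεw hδv

/-- **Sturm–Picone comparison step in Proposition 3.3.**
If `u` is a nontrivial `C²` solution of `u'' = -f(u)` on `[0,1]` with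
`u'(0) = 0`, `u(1) = 0`, `α < 0`, and `z` is a nontrivial `C²` solution of
`z'' = -(f'(u) + α)·z` on `[0,1]` with `z'(0) = 0`, `z(1) = 0`, then if `z`
has at least `n ≥ 1` zeros in `(0,1)`, the derivative `u'` has at least `n`
zeros in `(0,1)`. -/
theorem sturm_picone_zeros_of_u_prime
    (f : ℝ → ℝ) (hf : ContDiff ℝ 1 f)
    (u u' u'' : ℝ → ℝ)
    (hu : ∀ x ∈ Set.Icc (0:ℝ) 1, HasDerivAt u (u' x) x)
    (hu'd : ∀ x ∈ Set.Icc (0:ℝ) 1, HasDerivAt u' (u'' x) x)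
    (hu''c : ContinuousOn u'' (Set.Icc 0 1))
    (hode : ∀ x ∈ Set.Icc (0:ℝ) 1, u'' x = -f (u x))
    (hunz : ∃ x ∈ Set.Icc (0:ℝ) 1, u x ≠ 0)
    (hu'0 : u' 0 = 0) (hu1 : u 1 = 0)
    (α : ℝ) (hα : α < 0)
    (z z' z'' : ℝ → ℝ)
    (hz : ∀ x ∈ Set.Icc (0:ℝ) 1, HasDerivAt z (z' x) x)
    (hz'd : ∀ x ∈ Set.Icc (0:ℝ) 1, HasDerivAt z' (z'' x) x)
    (hz''c : ContinuousOn z'' (Set.Icc 0 1))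
    (hzode : ∀ x ∈ Set.Icc (0:ℝ) 1, z'' x = -((deriv f (u x) + α) * z x))
    (hznz : ∃ x ∈ Set.Icc (0:ℝ) 1, z x ≠ 0)
    (hz'0 : z' 0 = 0) (hz1 : z 1 = 0)
    (n : ℕ) (hn : 1 ≤ n)
    (Z : Finset ℝ) (hZsub : ↑Z ⊆ Set.Ioo (0:ℝ) 1) (hZcard : n ≤ Z.card)
    (hZzero : ∀ x ∈ Z, z x = 0) :
    ∃ S : Finset ℝ, ↑S ⊆ Set.Ioo (0:ℝ) 1 ∧ n ≤ S.card ∧ ∀ x ∈ S, u' x = 0 := by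
  -- set up the comparison data
  set p : ℝ → ℝ := fun x => deriv f (u x) with hp
  set q : ℝ → ℝ := fun x => deriv f (u x) + α with hq
  have hucont : ContinuousOn u (Set.Icc (0:ℝ) 1) :=
    fun x hx => (hu x hx).continuousAt.continuousWithinAt
  have hqc : ContinuousOn q (Set.Icc 0 1) :=
    ((hf.continuous_deriv le_rfl).comp_continuousOn hucont).add continuousOn_const
  have hv' : ∀ x ∈ Set.Icc (0:ℝ) 1,
      HasDerivWithinAt u'' (-(p x * u' x)) (Set.Icc (0:ℝ) 1) x := by
    intro x hx
    have hfu : HasDerivWithinAt (fun y => -f (u y)) (-(deriv f (u x) * u' x))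
        (Set.Icc (0:ℝ) 1) x :=
      (((hf.differentiable one_ne_zero) (u x)).hasDerivAt.comp_hasDerivWithinAt x
        (hu x hx).hasDerivWithinAt).neg
    exact hfu.congr (fun y hy => hode y hy) (hode x hx)
  have key : ∀ a b : ℝ, a ∈ Set.Icc (0:ℝ) 1 → b ∈ Set.Icc (0:ℝ) 1 → a < b →
      z a = 0 → z b = 0 → ∃ x ∈ Set.Ioo a b, u' x = 0 := by
    intro a b ha hb hab hza hzb
    exact aux_sturm_between p q u' u'' (fun x => -(p x * u' x)) z z' z'' hqc
      (fun x hx => (hu'd x hx).hasDerivWithinAt) hv'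
      (fun x hx => (hz x hx).hasDerivWithinAt)
      (fun x hx => (hz'd x hx).hasDerivWithinAt)
      (fun x hx => rfl) (fun x hx => hzode x hx)
      (fun x hx => by simp only [hp, hq]; linarith)
      hznz a b ha hb hab hza hzb
  -- select n zeros of z and add the zero at 1
  obtain ⟨Z', hZ'sub, hZ'card⟩ := Finset.exists_subset_card_eq hZcard
  have h1notin : (1:ℝ) ∉ Z' := fun h => lt_irrefl (1:ℝ) (hZsub (hZ'sub h)).2
  set T : Finset ℝ := insert (1:ℝ) Z' with hT
  have hTcard : T.card = n + 1 := by
    rw [hT, Finset.card_insert_of_notMem h1notin, hZ'card]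
  set e := T.orderEmbOfFin hTcard with he
  have hTmem : ∀ i, e i ∈ T := fun i => T.orderEmbOfFin_mem hTcard i
  have hprop : ∀ i, e i ∈ Set.Ioo (0:ℝ) 1 ∨ e i = 1 := by
    intro i
    rcases Finset.mem_insert.1 (hTmem i) with h | h
    · exact Or.inr h
    · exact Or.inl (hZsub (hZ'sub h))
  have hIcc : ∀ i, e i ∈ Set.Icc (0:ℝ) 1 := by
    intro i
    rcases hprop i with h | h
    · exact ⟨h.1.le, h.2.le⟩
    · rw [h]; exact ⟨zero_le_one, le_rfl⟩
  have hpos : ∀ i, 0 < e i := by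
    intro i
    rcases hprop i with h | h
    · exact h.1
    · rw [h]; exact zero_lt_one
  have hle1 : ∀ i, e i ≤ 1 := fun i => (hIcc i).2
  have hzero : ∀ i, z (e i) = 0 := by
    intro i
    rcases Finset.mem_insert.1 (hTmem i) with h | h
    · rw [h]; exact hz1
    · exact hZzero _ (hZ'sub h)
  -- for each adjacent pair, a zero of u' strictly in between
  have hstep : ∀ i : Fin n, ∃ x ∈ Set.Ioo (e i.castSucc) (e i.succ), u' x = 0 := by
    intro i
    exact key _ _ (hIcc _) (hIcc _) (e.strictMono (Fin.castSucc_lt_succ (i := i)))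
      (hzero _) (hzero _)
  choose g hg1 hg2 using hstep
  have hginj : Function.Injective g := by
    have hmono : ∀ i j : Fin n, i < j → g i < g j := by
      intro i j hij
      calc g i < e i.succ := (hg1 i).2
        _ ≤ e j.castSucc := e.monotone (Fin.succ_le_castSucc_iff.2 hij)
        _ < g j := (hg1 j).1
    intro i j hij
    rcases lt_trichotomy i j with h | h | h
    · exact absurd hij (hmono i j h).ne
    · exact h
    · exact absurd hij.symm (hmono j i h).ne
  refine ⟨Finset.image g Finset.univ, ?_, ?_, ?_⟩
  · intro x hx
    simp only [Finset.coe_image, Finset.coe_univ, Set.image_univ, Set.mem_range] at hx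
    obtain ⟨i, rfl⟩ := hx
    exact ⟨(hpos i.castSucc).trans (hg1 i).1, lt_of_lt_of_le (hg1 i).2 (hle1 i.succ)⟩
  · rw [Finset.card_image_of_injective _ hginj, Finset.card_univ, Fintype.card_fin]
  · intro x hx
    simp only [Finset.mem_image, Finset.mem_univ, true_and] at hx
    obtain ⟨i, _, rfl⟩ := hx
    exact hg2 i
end

section
/- Let f : ℝ → ℝ be continuously differentiable. Let u, z : ℝ → ℝ be twice continuously differentiable on [0,1] with u''(x) = -f(u(x)) and z''(x) = -f'(u(x))·z(x) for all x ∈ [0,1], and suppose u'(0) = 0, z'(0) = 0, u(1) = 0 and z(1) = 0. Then u'(1)·z'(1) = f(u(0))·z(0). -/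
/-- **Integration-by-parts identity in the proof of Proposition 3.7.**
If `u'' = -f(u)` and `z'' = -f'(u)·z` on `[0,1]` with `u'(0) = z'(0) = 0`
and `u(1) = z(1) = 0`, then `u'(1)·z'(1) = f(u(0))·z(0)`. -/
theorem boundary_identity_nondegeneracy
    (f : ℝ → ℝ) (hf : ContDiff ℝ 1 f)
    (u u' u'' : ℝ → ℝ)
    (hu : ∀ x ∈ Set.Icc (0:ℝ) 1, HasDerivAt u (u' x) x)
    (hu'd : ∀ x ∈ Set.Icc (0:ℝ) 1, HasDerivAt u' (u'' x) x)
    (hu''c : ContinuousOn u'' (Set.Icc 0 1))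
    (hode : ∀ x ∈ Set.Icc (0:ℝ) 1, u'' x = -f (u x))
    (hu'0 : u' 0 = 0) (hu1 : u 1 = 0)
    (z z' z'' : ℝ → ℝ)
    (hz : ∀ x ∈ Set.Icc (0:ℝ) 1, HasDerivAt z (z' x) x)
    (hz'd : ∀ x ∈ Set.Icc (0:ℝ) 1, HasDerivAt z' (z'' x) x)
    (hz''c : ContinuousOn z'' (Set.Icc 0 1))
    (hzode : ∀ x ∈ Set.Icc (0:ℝ) 1, z'' x = -(deriv f (u x) * z x))
    (hz'0 : z' 0 = 0) (hz1 : z 1 = 0) :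
    u' 1 * z' 1 = f (u 0) * z 0 := by
  set g : ℝ → ℝ := fun x => u' x * z' x + f (u x) * z x with hg
  have hderiv : ∀ x ∈ Set.Icc (0:ℝ) 1, HasDerivAt g 0 x := by
    intro x hx
    have hfu : HasDerivAt (fun y => f (u y)) (deriv f (u x) * u' x) x :=
      ((hf.differentiable one_ne_zero (u x)).hasDerivAt).comp x (hu x hx)
    have h1 : HasDerivAt g (u'' x * z' x + u' x * z'' x +
        (deriv f (u x) * u' x * z x + f (u x) * z' x)) x :=
      ((hu'd x hx).mul (hz'd x hx)).add (hfu.mul (hz x hx))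
    convert h1 using 1
    rw [hode x hx, hzode x hx]
    ring
  have hcont : ContinuousOn g (Set.Icc 0 1) := by
    intro x hx
    exact ((hderiv x hx).continuousAt.continuousWithinAt)
  have key : g 1 = g 0 := by
    have := constant_of_has_deriv_right_zero hcont (fun x hx =>
      (hderiv x (Set.mem_Icc_of_Ico hx)).hasDerivWithinAt)
    exact this 1 (by norm_num)
  simpa [hg, hu'0, hu1, hz1] using key
end

section
/- Let f : ℝ → ℝ be continuously differentiable and satisfy the superlinear condition f'(s) > f(s)/s for all s ≠ 0. Let a < b be real numbers and let u : ℝ → ℝ be twice continuously differentiable on [a,b] with u''(x) = -f(u(x)) for all x ∈ [a,b], u(a)·u'(a) = 0, u(b)·u'(b) = 0, and u not identically zero on [a,b]. Then ∫_a^b ( u'(x)² - f'(u(x))·u(x)² ) dx < 0. -/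
open MeasureTheory Set

/-- **Negativity of the quadratic form in the direction of the solution
(Section 2).** If `f` is `C¹` and superlinear (`f'(s) > f(s)/s` for `s ≠ 0`),
and `u` is a nontrivial `C²` solution of `u'' = -f(u)` on `[a,b]` with
`u(a)·u'(a) = 0` and `u(b)·u'(b) = 0`, then
`∫_a^b (u'² - f'(u)·u²) < 0`. -/
theorem quadratic_form_negative_on_solution
    (f : ℝ → ℝ) (hf : ContDiff ℝ 1 f)
    (hsuper : ∀ s : ℝ, s ≠ 0 → deriv f s > f s / s)
    (a b : ℝ) (hab : a < b)
    (u u' u'' : ℝ → ℝ)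
    (hu : ∀ x ∈ Set.Icc a b, HasDerivAt u (u' x) x)
    (hu'd : ∀ x ∈ Set.Icc a b, HasDerivAt u' (u'' x) x)
    (hu''c : ContinuousOn u'' (Set.Icc a b))
    (hode : ∀ x ∈ Set.Icc a b, u'' x = -f (u x))
    (hba : u a * u' a = 0) (hbb : u b * u' b = 0)
    (hunz : ∃ x ∈ Set.Icc a b, u x ≠ 0) :
    ∫ x in a..b, ((u' x) ^ 2 - deriv f (u x) * (u x) ^ 2) < 0 := by
  have hab' : a ≤ b := hab.le
  have hIcc : Set.uIcc a b = Set.Icc a b := Set.uIcc_of_le hab'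
  -- continuity facts
  have hucont : ContinuousOn u (Set.Icc a b) := fun x hx =>
    (hu x hx).continuousAt.continuousWithinAt
  have hu'cont : ContinuousOn u' (Set.Icc a b) := fun x hx =>
    (hu'd x hx).continuousAt.continuousWithinAt
  have hfc : Continuous f := hf.continuous
  have hf'c : Continuous (deriv f) := hf.continuous_deriv le_rfl
  -- pointwise positivity of the key quantity
  have key : ∀ s : ℝ, s ≠ 0 → 0 < deriv f s * s ^ 2 - f s * s := by
    intro s hs
    have h := hsuper s hs
    have hs2 : (0:ℝ) < s ^ 2 := by positivity
    have h2 : f s / s * s ^ 2 < deriv f s * s ^ 2 := by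
      exact mul_lt_mul_of_pos_right h hs2
    have h3 : f s / s * s ^ 2 = f s * s := by field_simp
    linarith
  -- integration by parts
  have hF : ∀ x ∈ Set.uIcc a b, HasDerivAt (fun x => u x * u' x)
      (u' x * u' x + u x * u'' x) x := by
    intro x hx; rw [hIcc] at hx
    exact (hu x hx).mul (hu'd x hx)
  have hInt1 : IntervalIntegrable (fun x => u' x * u' x + u x * u'' x) volume a b := by
    apply ContinuousOn.intervalIntegrable
    rw [hIcc]
    exact (hu'cont.mul hu'cont).add (hucont.mul hu''c)
  have hIBP : ∫ x in a..b, (u' x * u' x + u x * u'' x) = 0 := by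
    rw [intervalIntegral.integral_eq_sub_of_hasDerivAt hF hInt1, hbb, hba, sub_zero]
  have hIBP2 : ∫ x in a..b, (u' x ^ 2 - u x * f (u x)) = 0 := by
    rw [← hIBP]
    apply intervalIntegral.integral_congr
    intro x hx; rw [hIcc] at hx
    simp only [hode x hx]; ring
  -- splitting the integral
  have hInt2 : IntervalIntegrable (fun x => u' x ^ 2 - u x * f (u x)) volume a b := by
    apply ContinuousOn.intervalIntegrable
    rw [hIcc]
    exact ((hu'cont.pow 2).sub (hucont.mul (hfc.comp_continuousOn hucont)))
  have hInt3 : IntervalIntegrable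
      (fun x => u x * f (u x) - deriv f (u x) * u x ^ 2) volume a b := by
    apply ContinuousOn.intervalIntegrable
    rw [hIcc]
    exact (hucont.mul (hfc.comp_continuousOn hucont)).sub
      ((hf'c.comp_continuousOn hucont).mul (hucont.pow 2))
  have hsplit : (∫ x in a..b, ((u' x) ^ 2 - deriv f (u x) * (u x) ^ 2))
      = (∫ x in a..b, (u' x ^ 2 - u x * f (u x)))
        + ∫ x in a..b, (u x * f (u x) - deriv f (u x) * u x ^ 2) := by
    rw [← intervalIntegral.integral_add hInt2 hInt3]
    apply intervalIntegral.integral_congr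
    intro x _; ring
  rw [hsplit, hIBP2, zero_add]
  -- now show the remaining integral is negative
  set g : ℝ → ℝ := fun x => deriv f (u x) * u x ^ 2 - u x * f (u x) with hg
  have hgc : ContinuousOn g (Set.Icc a b) :=
    ((hf'c.comp_continuousOn hucont).mul (hucont.pow 2)).sub
      (hucont.mul (hfc.comp_continuousOn hucont))
  have hgnonneg : ∀ x ∈ Set.Icc a b, 0 ≤ g x := by
    intro x hx
    by_cases hux : u x = 0
    · simp [hg, hux]
    · have := key (u x) hux
      simp only [hg]; nlinarith
  have hpos : 0 < ∫ x in Set.Ioc a b, g x := by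
    obtain ⟨x₀, hx₀, hux₀⟩ := hunz
    have hgx₀ : 0 < g x₀ := by have := key (u x₀) hux₀; simp only [hg]; nlinarith
    -- find a neighborhood where g is positive
    have hcw : ContinuousWithinAt g (Set.Icc a b) x₀ := hgc x₀ hx₀
    have hev : ∀ᶠ x in nhdsWithin x₀ (Set.Icc a b), 0 < g x :=
      hcw.eventually_const_lt hgx₀
    rw [eventually_nhdsWithin_iff, Metric.eventually_nhds_iff] at hev
    obtain ⟨ε, hε, hball⟩ := hev
    set c : ℝ := max a (x₀ - ε) with hc
    set d : ℝ := min b (x₀ + ε) with hd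
    have hcd : c < d := by
      rcases hx₀ with ⟨h1, h2⟩
      apply max_lt <;> apply lt_min <;> linarith
    have hsub : Set.Ioo c d ⊆ Function.support g ∩ Set.Ioc a b := by
      intro x hx
      rcases hx with ⟨hx1, hx2⟩
      have hxa : a < x := lt_of_le_of_lt (le_max_left _ _) hx1
      have hxb : x < b := lt_of_lt_of_le hx2 (min_le_left _ _)
      have hxIcc : x ∈ Set.Icc a b := ⟨hxa.le, hxb.le⟩
      have hdist : dist x x₀ < ε := by
        rw [Real.dist_eq, abs_lt]
        constructor
        · have := lt_of_le_of_lt (le_max_right a (x₀ - ε)) hx1; linarith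
        · have := lt_of_lt_of_le hx2 (min_le_right b (x₀ + ε)); linarith
      have := hball hdist hxIcc
      exact ⟨ne_of_gt this, ⟨hxa, hxb.le⟩⟩
    have hintg : IntegrableOn g (Set.Ioc a b) := by
      have : IntervalIntegrable g volume a b := by
        apply ContinuousOn.intervalIntegrable; rw [hIcc]; exact hgc
      exact (intervalIntegrable_iff_integrableOn_Ioc_of_le hab').mp this
    have hnn : 0 ≤ᵐ[volume.restrict (Set.Ioc a b)] g := by
      filter_upwards [ae_restrict_mem measurableSet_Ioc] with x hx
      exact hgnonneg x (Set.Ioc_subset_Icc_self hx)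
    rw [MeasureTheory.setIntegral_pos_iff_support_of_nonneg_ae hnn hintg]
    calc (0:ENNReal) < volume (Set.Ioo c d) := by
          rw [Real.volume_Ioo]; exact ENNReal.ofReal_pos.mpr (by linarith)
      _ ≤ volume (Function.support g ∩ Set.Ioc a b) := measure_mono hsub
  have : ∫ x in a..b, (u x * f (u x) - deriv f (u x) * u x ^ 2)
      = - ∫ x in Set.Ioc a b, g x := by
    rw [intervalIntegral.integral_of_le hab', ← MeasureTheory.integral_neg]
    apply MeasureTheory.setIntegral_congr_fun measurableSet_Ioc
    intro x _; simp only [hg]; ring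
  rw [this]
  linarith
end

section
/- Let f : ℝ → ℝ be continuously differentiable and satisfy the superlinear condition f'(s) > f(s)/s for all s ≠ 0. Let u : ℝ → ℝ be twice continuously differentiable on [0,1] with u''(x) = -f(u(x)) for all x ∈ [0,1], u'(0) = 0, u(1) = 0, and suppose the zero set of u in the half-open interval (0,1] is exactly {r_1 < r_2 < ... < r_n} with r_n = 1 (so u has n nodal intervals; set r_0 = 0). For coefficients c_1, ..., c_n ∈ ℝ, not all zero, define w : [0,1] → ℝ by w(x) = c_k·u(x) for x ∈ [r_{k-1}, r_k), k = 1, ..., n, and w(1) = 0. Then w is continuous on [0,1], differentiable at all but finitely many points, and ∫_0^1 ( w'(x)² - f'(u(x))·w(x)² ) dx < 0, where w'(x) = c_k·u'(x) on each open interval (r_{k-1}, r_k). -/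
open Set MeasureTheory intervalIntegral

lemma glue_Icc {w : ℝ → ℝ} {a b c : ℝ} (hab : a ≤ b) (hbc : b ≤ c)
    (h1 : ContinuousOn w (Icc a b)) (h2 : ContinuousOn w (Icc b c)) :
    ContinuousOn w (Icc a c) := by
  intro x hx
  have hunion : Icc a c = Icc a b ∪ Icc b c := (Icc_union_Icc_eq_Icc hab hbc).symm
  rw [hunion]
  rcases le_or_gt x b with h | h
  · refine ContinuousWithinAt.union (h1 x ⟨hx.1, h⟩) ?_
    rcases eq_or_lt_of_le h with rfl | h'
    · exact h2 x ⟨le_rfl, hbc⟩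
    · exact continuousWithinAt_of_notMem_closure (by
        rw [isClosed_Icc.closure_eq]; exact fun hmem => absurd hmem.1 (not_le.mpr h'))
  · refine ContinuousWithinAt.union ?_ (h2 x ⟨h.le, hx.2⟩)
    exact continuousWithinAt_of_notMem_closure (by
      rw [isClosed_Icc.closure_eq]; exact fun hmem => absurd hmem.2 (not_le.mpr h))

lemma nodal_integral_neg (f : ℝ → ℝ) (hfc : Continuous f) (hf'c : Continuous (deriv f))
    (hsuper : ∀ s : ℝ, s ≠ 0 → deriv f s > f s / s)
    (u u' u'' : ℝ → ℝ)
    (hu : ∀ x ∈ Set.Icc (0:ℝ) 1, HasDerivAt u (u' x) x)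
    (hu'd : ∀ x ∈ Set.Icc (0:ℝ) 1, HasDerivAt u' (u'' x) x)
    (hu''c : ContinuousOn u'' (Set.Icc 0 1))
    (hode : ∀ x ∈ Set.Icc (0:ℝ) 1, u'' x = -f (u x))
    (a b : ℝ) (hab : a < b) (hsub : Set.Icc a b ⊆ Set.Icc 0 1)
    (hbdry : u b * u' b - u a * u' a = 0)
    (hne : ∀ x ∈ Set.Ioo a b, u x ≠ 0) :
    ∫ x in a..b, (u' x ^ 2 - deriv f (u x) * u x ^ 2) < 0 := by
  have huIcc : Set.uIcc a b = Set.Icc a b := Set.uIcc_of_le hab.le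
  have hucont : ContinuousOn u (Set.Icc 0 1) :=
    fun x hx => (hu x hx).continuousAt.continuousWithinAt
  have hu'cont : ContinuousOn u' (Set.Icc 0 1) :=
    fun x hx => (hu'd x hx).continuousAt.continuousWithinAt
  have hparts : ∫ x in a..b, (u' x ^ 2 + u x * u'' x) = u b * u' b - u a * u' a := by
    apply intervalIntegral.integral_eq_sub_of_hasDerivAt
    · intro x hx
      rw [huIcc] at hx
      have hx1 : x ∈ Set.Icc (0:ℝ) 1 := hsub hx
      have := (hu x hx1).mul (hu'd x hx1)
      exact this.congr_deriv (by ring)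
    · apply ContinuousOn.intervalIntegrable
      rw [huIcc]
      exact ((hu'cont.mono hsub).pow 2).add
        ((hucont.mono hsub).mul (hu''c.mono hsub))
  rw [hbdry] at hparts
  have hH : 0 < ∫ x in a..b, (deriv f (u x) * u x ^ 2 - u x * f (u x)) := by
    apply intervalIntegral_pos_of_pos_on
    · apply ContinuousOn.intervalIntegrable
      rw [huIcc]
      refine ContinuousOn.sub (ContinuousOn.mul ?_ ?_) (ContinuousOn.mul ?_ ?_)
      · exact hf'c.comp_continuousOn (hucont.mono hsub)
      · exact (hucont.mono hsub).pow 2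
      · exact hucont.mono hsub
      · exact hfc.comp_continuousOn (hucont.mono hsub)
    · intro x hx
      have hx0 : u x ≠ 0 := hne x hx
      have h1 : f (u x) / u x < deriv f (u x) := hsuper (u x) hx0
      have h2 : (0:ℝ) < u x ^ 2 := by positivity
      have h3 := (mul_lt_mul_of_pos_right h1 h2)
      have h4 : f (u x) / u x * u x ^ 2 = u x * f (u x) := by
        field_simp
      rw [h4] at h3
      linarith
    · exact hab
  have hint1 : IntervalIntegrable (fun x => u' x ^ 2 + u x * u'' x) volume a b := by
    apply ContinuousOn.intervalIntegrable
    rw [huIcc]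
    exact ((hu'cont.mono hsub).pow 2).add ((hucont.mono hsub).mul (hu''c.mono hsub))
  have hint2 : IntervalIntegrable (fun x => deriv f (u x) * u x ^ 2 - u x * f (u x))
      volume a b := by
    apply ContinuousOn.intervalIntegrable
    rw [huIcc]
    refine ContinuousOn.sub (ContinuousOn.mul ?_ ?_) (ContinuousOn.mul ?_ ?_)
    · exact hf'c.comp_continuousOn (hucont.mono hsub)
    · exact (hucont.mono hsub).pow 2
    · exact hucont.mono hsub
    · exact hfc.comp_continuousOn (hucont.mono hsub)
  have heq : ∫ x in a..b, (u' x ^ 2 - deriv f (u x) * u x ^ 2)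
      = (∫ x in a..b, (u' x ^ 2 + u x * u'' x))
        - ∫ x in a..b, (deriv f (u x) * u x ^ 2 - u x * f (u x)) := by
    rw [← intervalIntegral.integral_sub hint1 hint2]
    apply intervalIntegral.integral_congr
    intro x hx
    rw [huIcc] at hx
    have h5 : u'' x = -f (u x) := hode x (hsub hx)
    show u' x ^ 2 - deriv f (u x) * u x ^ 2 =
      u' x ^ 2 + u x * u'' x - (deriv f (u x) * u x ^ 2 - u x * f (u x))
    rw [h5]
    ring
  rw [heq, hparts]
  linarith

/-- **Lower bound direction of Proposition 3.3.** Let `u` be a `C²` solution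
of `u'' = -f(u)` on `[0,1]` with `u'(0) = 0`, `u(1) = 0`, whose zero set in
`(0,1]` is exactly `{r 1 < r 2 < … < r n}` with `r n = 1` (and `r 0 = 0`).
For coefficients `c 1, …, c n`, not all zero, the function `w` equal to
`c k · u` on `[r (k-1), r k)` and `0` at `1` is continuous on `[0,1]`,
differentiable off a finite set, and the quadratic form of the linearized
operator is negative on it:
`∫_0^1 (w'² - f'(u)·w²) < 0`, where `w' = c k · u'` on each `(r (k-1), r k)`. -/
theorem morse_index_lower_bound_quadratic_form
    (f : ℝ → ℝ) (hf : ContDiff ℝ 1 f)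
    (hsuper : ∀ s : ℝ, s ≠ 0 → deriv f s > f s / s)
    (u u' u'' : ℝ → ℝ)
    (hu : ∀ x ∈ Set.Icc (0:ℝ) 1, HasDerivAt u (u' x) x)
    (hu'd : ∀ x ∈ Set.Icc (0:ℝ) 1, HasDerivAt u' (u'' x) x)
    (hu''c : ContinuousOn u'' (Set.Icc 0 1))
    (hode : ∀ x ∈ Set.Icc (0:ℝ) 1, u'' x = -f (u x))
    (hu'0 : u' 0 = 0) (hu1 : u 1 = 0)
    (n : ℕ) (hn : 1 ≤ n)
    (r : Fin (n + 1) → ℝ) (hr0 : r 0 = 0) (hrmono : StrictMono r)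
    (hrlast : r (Fin.last n) = 1)
    (hzeros : {x ∈ Set.Ioc (0:ℝ) 1 | u x = 0} = Set.range fun i : Fin n => r i.succ)
    (c : Fin n → ℝ) (hc : ∃ k, c k ≠ 0)
    (w w' : ℝ → ℝ)
    (hw : ∀ k : Fin n, ∀ x ∈ Set.Ico (r k.castSucc) (r k.succ), w x = c k * u x)
    (hw1 : w 1 = 0)
    (hw' : ∀ k : Fin n, ∀ x ∈ Set.Ioo (r k.castSucc) (r k.succ), w' x = c k * u' x) :
    ContinuousOn w (Set.Icc 0 1) ∧
    (∃ S : Finset ℝ, ∀ x ∈ Set.Icc (0:ℝ) 1, x ∉ S → DifferentiableAt ℝ w x) ∧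
    ∫ x in (0:ℝ)..1, ((w' x) ^ 2 - deriv f (u x) * (w x) ^ 2) < 0 := by
  classical
  have hfc : Continuous f := hf.continuous
  have hf'c : Continuous (deriv f) := hf.continuous_deriv le_rfl
  have hucont : ContinuousOn u (Set.Icc 0 1) :=
    fun x hx => (hu x hx).continuousAt.continuousWithinAt
  have hu'cont : ContinuousOn u' (Set.Icc 0 1) :=
    fun x hx => (hu'd x hx).continuousAt.continuousWithinAt
  -- zeros of u at interior nodes
  have hur : ∀ j : Fin (n+1), j ≠ 0 → u (r j) = 0 := by
    intro j hj
    have hmem : r j ∈ {x ∈ Set.Ioc (0:ℝ) 1 | u x = 0} := by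
      rw [hzeros]
      refine ⟨j.pred hj, ?_⟩
      show r (j.pred hj).succ = r j
      rw [Fin.succ_pred]
    exact hmem.2
  -- u does not vanish inside nodal intervals
  have hne : ∀ k : Fin n, ∀ x ∈ Set.Ioo (r k.castSucc) (r k.succ), u x ≠ 0 := by
    intro k x hx hux
    have hx1 : x ∈ Set.Ioc (0:ℝ) 1 := by
      constructor
      · exact lt_of_le_of_lt (by rw [← hr0]; exact hrmono.monotone (Fin.zero_le _)) hx.1
      · exact le_trans hx.2.le (by rw [← hrlast]; exact hrmono.monotone (Fin.le_last _))
    have hmem : x ∈ Set.range fun i : Fin n => r i.succ := by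
      rw [← hzeros]; exact ⟨hx1, hux⟩
    obtain ⟨i, hi⟩ := hmem
    have hi' : r i.succ = x := hi
    have h1 : k.castSucc < i.succ := hrmono.lt_iff_lt.mp (by rw [hi']; exact hx.1)
    have h2 : i.succ < k.succ := hrmono.lt_iff_lt.mp (by rw [hi']; exact hx.2)
    simp only [Fin.lt_def, Fin.val_succ, Fin.coe_castSucc] at h1 h2
    omega
  -- bounds of nodal intervals
  have hablt : ∀ k : Fin n, r k.castSucc < r k.succ :=
    fun k => hrmono Fin.castSucc_lt_succ
  have hsubk : ∀ k : Fin n, Set.Icc (r k.castSucc) (r k.succ) ⊆ Set.Icc 0 1 := by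
    intro k x hx
    constructor
    · exact le_trans (by rw [← hr0]; exact hrmono.monotone (Fin.zero_le _)) hx.1
    · exact le_trans hx.2 (by rw [← hrlast]; exact hrmono.monotone (Fin.le_last _))
  -- w equals c k * u on the closed nodal interval
  have hwIcc : ∀ k : Fin n, ∀ x ∈ Set.Icc (r k.castSucc) (r k.succ), w x = c k * u x := by
    intro k x hx
    rcases lt_or_eq_of_le hx.2 with h | h
    · exact hw k x ⟨hx.1, h⟩
    · have hu0 : u x = 0 := by rw [h]; exact hur k.succ (Fin.succ_ne_zero k)
      by_cases hk : (k : ℕ) + 1 < n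
      · set k' : Fin n := ⟨(k : ℕ) + 1, hk⟩ with hk'def
        have hcs : k'.castSucc = k.succ := by
          apply Fin.ext; simp [hk'def]
        have hlt : x < r k'.succ := by
          rw [h, ← hcs]; exact hablt k'
        have hwx : w x = c k' * u x := hw k' x ⟨by rw [hcs, ← h], hlt⟩
        rw [hwx, hu0, mul_zero, mul_zero]
      · have hlast : k.succ = Fin.last n := by
          apply Fin.ext; simp [Fin.val_succ, Fin.val_last]; omega
        have hx1 : x = 1 := by rw [h, hlast, hrlast]
        rw [hx1, hw1, ← hx1, hu0, mul_zero]
  -- continuity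
  have hcont : ContinuousOn w (Set.Icc 0 1) := by
    have key : ∀ m : ℕ, ∀ hm : m ≤ n,
        ContinuousOn w (Set.Icc (r 0) (r ⟨m, Nat.lt_succ_of_le hm⟩)) := by
      intro m
      induction m with
      | zero =>
        intro _
        have : (⟨0, Nat.lt_succ_of_le (Nat.zero_le n)⟩ : Fin (n+1)) = 0 := rfl
        rw [this, Set.Icc_self]
        intro x hx
        rw [Set.mem_singleton_iff] at hx
        subst hx
        exact continuousWithinAt_singleton
      | succ m ih =>
        intro hm
        have hm' : m ≤ n := Nat.le_of_succ_le hm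
        set k : Fin n := ⟨m, hm⟩ with hkdef
        have e1 : (⟨m, Nat.lt_succ_of_le hm'⟩ : Fin (n+1)) = k.castSucc := rfl
        have e2 : (⟨m+1, Nat.lt_succ_of_le hm⟩ : Fin (n+1)) = k.succ := rfl
        have hpiece : ContinuousOn w (Set.Icc (r k.castSucc) (r k.succ)) := by
          apply ContinuousOn.congr (f := fun x => c k * u x)
          · exact continuousOn_const.mul (hucont.mono (hsubk k))
          · exact fun x hx => hwIcc k x hx
        have hIH := ih hm'
        rw [e1] at hIH
        rw [e2]
        exact glue_Icc (by rw [← hr0] at *; exact hrmono.monotone (Fin.zero_le _))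
          (hablt k).le hIH hpiece
    have := key n le_rfl
    have e3 : (⟨n, Nat.lt_succ_of_le le_rfl⟩ : Fin (n+1)) = Fin.last n := rfl
    rwa [hr0, e3, hrlast] at this
  refine ⟨hcont, ?_, ?_⟩
  -- differentiability off the nodes
  · refine ⟨Finset.image r Finset.univ, ?_⟩
    intro x hx hxS
    have hxne : ∀ j : Fin (n+1), x ≠ r j := by
      intro j hj
      exact hxS (Finset.mem_image.mpr ⟨j, Finset.mem_univ _, hj.symm⟩)
    -- find the nodal interval containing x
    have : ∃ k : Fin n, r k.castSucc < x ∧ x < r k.succ := by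
      set T := Finset.univ.filter (fun j : Fin (n+1) => r j < x) with hT
      have h0T : (0 : Fin (n+1)) ∈ T := by
        simp only [hT, Finset.mem_filter, Finset.mem_univ, true_and]
        rw [hr0]
        exact lt_of_le_of_ne hx.1 (fun h => hxne 0 (by rw [← h, hr0]))
      have hTne : T.Nonempty := ⟨0, h0T⟩
      set j := T.max' hTne with hjdef
      have hjT : j ∈ T := T.max'_mem hTne
      have hjx : r j < x := by
        simp only [hT, Finset.mem_filter, Finset.mem_univ, true_and] at hjT
        exact hjT
      have hjlt : (j : ℕ) < n := by
        by_contra hjn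
        have hjlast : j = Fin.last n := Fin.ext (by
          have := j.isLt; simp only [Fin.val_last]; omega)
        rw [hjlast, hrlast] at hjx
        exact absurd hx.2 (not_le.mpr hjx)
      refine ⟨⟨(j : ℕ), hjlt⟩, ?_, ?_⟩
      · have hcs : (Fin.castSucc (⟨(j : ℕ), hjlt⟩ : Fin n)) = j := Fin.ext rfl
        rw [hcs]; exact hjx
      · set js := Fin.succ (⟨(j : ℕ), hjlt⟩ : Fin n) with hjs
        have hnotT : js ∉ T := by
          intro hmem
          have hle := T.le_max' js hmem
          rw [← hjdef] at hle
          have hv : (js : ℕ) ≤ (j : ℕ) := hle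
          have hv2 : (js : ℕ) = (j : ℕ) + 1 := rfl
          omega
        have hnlt : ¬ (r js < x) := fun h => hnotT (by
          simp only [hT, Finset.mem_filter, Finset.mem_univ, true_and]; exact h)
        exact lt_of_le_of_ne (not_lt.mp hnlt) (hxne js)
    obtain ⟨k, hk1, hk2⟩ := this
    have hx01 : x ∈ Set.Icc (0:ℝ) 1 := hx
    have hev : w =ᶠ[nhds x] fun y => c k * u y := by
      filter_upwards [Ioo_mem_nhds hk1 hk2] with y hy
      exact hw k y (Set.Ioo_subset_Ico_self hy)
    have hdiff : DifferentiableAt ℝ (fun y => c k * u y) x :=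
      (hu x hx01).differentiableAt.const_mul (c k)
    exact hdiff.congr_of_eventuallyEq hev
  -- the integral
  · set F := fun x => u' x ^ 2 - deriv f (u x) * u x ^ 2 with hF
    have hFcont : ContinuousOn F (Set.Icc 0 1) := by
      apply ContinuousOn.sub
      · exact (hu'cont).pow 2
      · exact (hf'c.comp_continuousOn hucont).mul (hucont.pow 2)
    have hIneg : ∀ k : Fin n, ∫ x in (r k.castSucc)..(r k.succ), F x < 0 := by
      intro k
      apply nodal_integral_neg f hfc hf'c hsuper u u' u'' hu hu'd hu''c hode _ _
        (hablt k) (hsubk k) ?_ (hne k)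
      have hub : u (r k.succ) = 0 := hur k.succ (Fin.succ_ne_zero k)
      rw [hub, zero_mul]
      by_cases h0 : k.castSucc = (0 : Fin (n+1))
      · rw [h0, hr0, hu'0, mul_zero, sub_zero]
      · rw [hur _ h0, zero_mul, sub_zero]
    -- piecewise comparison
    set G := fun x => w' x ^ 2 - deriv f (u x) * w x ^ 2 with hG
    have hGae : ∀ k : Fin n,
        G =ᶠ[ae (volume.restrict (Set.Ioc (r k.castSucc) (r k.succ)))]
          fun x => c k ^ 2 * F x := by
      intro k
      refine ae_restrict_of_ae_eq_of_ae_restrict Ioo_ae_eq_Ioc ?_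
      rw [ae_restrict_iff' measurableSet_Ioo]
      filter_upwards with x hx
      simp only [hG, hF]
      rw [hw' k x hx, hw k x (Set.Ioo_subset_Ico_self hx)]
      ring
    have hFint : ∀ k : Fin n,
        IntegrableOn (fun x => c k ^ 2 * F x) (Set.Ioc (r k.castSucc) (r k.succ)) volume := by
      intro k
      apply IntegrableOn.mono_set _ Set.Ioc_subset_Icc_self
      exact (continuousOn_const.mul (hFcont.mono (hsubk k))).integrableOn_Icc
    have hGint : ∀ k : Fin n,
        IntervalIntegrable G volume (r k.castSucc) (r k.succ) := by
      intro k
      rw [intervalIntegrable_iff_integrableOn_Ioc_of_le (hablt k).le]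
      exact (hFint k).congr ((hGae k).symm)
    have hGeq : ∀ k : Fin n, ∫ x in (r k.castSucc)..(r k.succ), G x
        = c k ^ 2 * ∫ x in (r k.castSucc)..(r k.succ), F x := by
      intro k
      rw [← intervalIntegral.integral_const_mul]
      apply intervalIntegral.integral_congr_ae
      rw [Set.uIoc_of_le (hablt k).le]
      rw [← ae_restrict_iff' measurableSet_Ioc]
      exact hGae k
    -- splitting
    set ρ : ℕ → ℝ := fun i => r ⟨min i n, Nat.lt_succ_of_le (min_le_right _ _)⟩ with hρ
    have hρcast : ∀ k : Fin n, ρ (k : ℕ) = r k.castSucc ∧ ρ ((k : ℕ) + 1) = r k.succ := by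
      intro k
      constructor
      · show r ⟨min (k : ℕ) n, Nat.lt_succ_of_le (min_le_right _ _)⟩ = r k.castSucc
        congr 1
        apply Fin.ext
        simp [Nat.min_eq_left (le_of_lt k.isLt)]
      · show r ⟨min ((k : ℕ) + 1) n, Nat.lt_succ_of_le (min_le_right _ _)⟩ = r k.succ
        congr 1
        apply Fin.ext
        simp [Nat.min_eq_left k.isLt]
    have hint' : ∀ kk < n, IntervalIntegrable G volume (ρ kk) (ρ (kk+1)) := by
      intro kk hkk
      have := hGint ⟨kk, hkk⟩
      rw [(hρcast ⟨kk, hkk⟩).1, (hρcast ⟨kk, hkk⟩).2]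
      exact this
    have hsplit : ∫ x in (0:ℝ)..1, G x = ∑ kk ∈ Finset.range n, ∫ x in ρ kk..ρ (kk+1), G x := by
      rw [intervalIntegral.sum_integral_adjacent_intervals hint']
      have e0 : ρ 0 = 0 := by
        show r ⟨min 0 n, Nat.lt_succ_of_le (min_le_right _ _)⟩ = 0
        have h00 : (⟨min 0 n, Nat.lt_succ_of_le (min_le_right _ _)⟩ : Fin (n+1)) = 0 := by
          apply Fin.ext; simp
        rw [h00, hr0]
      have e1 : ρ n = 1 := by
        show r ⟨min n n, Nat.lt_succ_of_le (min_le_right _ _)⟩ = 1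
        have hnn : (⟨min n n, Nat.lt_succ_of_le (min_le_right _ _)⟩ : Fin (n+1)) = Fin.last n := by
          apply Fin.ext; simp
        rw [hnn, hrlast]
      rw [e0, e1]
    show (∫ x in (0:ℝ)..1, G x) < 0
    rw [hsplit]
    obtain ⟨k0, hk0⟩ := hc
    have hlt : ∑ kk ∈ Finset.range n, ∫ x in ρ kk..ρ (kk+1), G x
        < ∑ kk ∈ Finset.range n, (0:ℝ) := by
      apply Finset.sum_lt_sum
      · intro kk hkk
        have hkk' : kk < n := Finset.mem_range.mp hkk
        set k : Fin n := ⟨kk, hkk'⟩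
        rw [(hρcast k).1, (hρcast k).2, hGeq k]
        have := hIneg k
        nlinarith [sq_nonneg (c k)]
      · refine ⟨(k0 : ℕ), Finset.mem_range.mpr k0.isLt, ?_⟩
        have hc2 : Fin.mk (k0 : ℕ) k0.isLt = k0 := rfl
        rw [(hρcast k0).1, (hρcast k0).2, hGeq k0]
        exact mul_neg_of_pos_of_neg (by positivity) (hIneg k0)
    simpa using hlt
end

section
/- Let f : ℝ → ℝ be continuously differentiable with f(s) > 0 for all s > 0. Let a < b be real numbers and let u : ℝ → ℝ be twice continuously differentiable on [a,b] with u''(x) = -f(u(x)) for all x ∈ [a,b], u(a) = u(b) = 0, and u(x) > 0 for all x ∈ (a,b). Then, writing m = (a+b)/2, the function u is symmetric about m, i.e. u(m + t) = u(m - t) for all t with |t| ≤ (b-a)/2; moreover u'(m) = 0 and u'(x) ≠ 0 for every x ∈ (a,b) with x ≠ m, so that m is the unique critical point of u in (a,b), u is strictly increasing on (a,m) and strictly decreasing on (m,b). -/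
open Set Metric

/-- **One-dimensional Gidas–Ni–Nirenberg symmetry (Remark 3.2).**
If `f` is `C¹` with `f > 0` on `(0,∞)` and `u` is a `C²` solution of
`u'' = -f(u)` on `[a,b]`, positive on `(a,b)` and vanishing at the ends,
then `u` is symmetric about the midpoint `m = (a+b)/2`, `u'(m) = 0`,
`u' ≠ 0` on `(a,b) \ {m}`, `u` is strictly increasing on `(a,m)` and
strictly decreasing on `(m,b)`. -/
theorem one_dimensional_gnn_symmetry
    (f : ℝ → ℝ) (hf : ContDiff ℝ 1 f)
    (hfpos : ∀ s : ℝ, 0 < s → 0 < f s)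
    (a b : ℝ) (hab : a < b)
    (u u' u'' : ℝ → ℝ)
    (hu : ∀ x ∈ Set.Icc a b, HasDerivAt u (u' x) x)
    (hu'd : ∀ x ∈ Set.Icc a b, HasDerivAt u' (u'' x) x)
    (hu''c : ContinuousOn u'' (Set.Icc a b))
    (hode : ∀ x ∈ Set.Icc a b, u'' x = -f (u x))
    (hua : u a = 0) (hub : u b = 0)
    (hupos : ∀ x ∈ Set.Ioo a b, 0 < u x) :
    (∀ t : ℝ, |t| ≤ (b - a) / 2 → u ((a + b) / 2 + t) = u ((a + b) / 2 - t)) ∧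
    u' ((a + b) / 2) = 0 ∧
    (∀ x ∈ Set.Ioo a b, x ≠ (a + b) / 2 → u' x ≠ 0) ∧
    StrictMonoOn u (Set.Ioo a ((a + b) / 2)) ∧
    StrictAntiOn u (Set.Ioo ((a + b) / 2) b) := by
  have hmIoo : (a + b) / 2 ∈ Ioo a b := ⟨by linarith, by linarith⟩
  have hucont : ContinuousOn u (Icc a b) :=
    fun x hx => (hu x hx).continuousAt.continuousWithinAt
  have hu'cont : ContinuousOn u' (Icc a b) :=
    fun x hx => (hu'd x hx).continuousAt.continuousWithinAt
  -- u'' < 0 on the interior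
  have hu''neg : ∀ x ∈ Ioo a b, u'' x < 0 := by
    intro x hx
    rw [hode x (Ioo_subset_Icc_self hx)]
    simpa using hfpos _ (hupos x hx)
  -- u' is strictly decreasing on [a,b]
  have hanti : StrictAntiOn u' (Icc a b) := by
    apply strictAntiOn_of_deriv_neg (convex_Icc a b) hu'cont
    intro x hx
    rw [interior_Icc] at hx
    rw [(hu'd x (Ioo_subset_Icc_self hx)).deriv]
    exact hu''neg x hx
  -- u'(a) > 0
  have hu'a : 0 < u' a := by
    by_contra h
    push_neg at h
    have hantiu : StrictAntiOn u (Icc a b) := by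
      apply strictAntiOn_of_deriv_neg (convex_Icc a b) hucont
      intro x hx
      rw [interior_Icc] at hx
      rw [(hu x (Ioo_subset_Icc_self hx)).deriv]
      have := hanti (left_mem_Icc.2 hab.le) (Ioo_subset_Icc_self hx) hx.1
      linarith
    have := hantiu (left_mem_Icc.2 hab.le) (Ioo_subset_Icc_self hmIoo) hmIoo.1
    have := hupos _ hmIoo
    linarith
  -- u'(b) < 0
  have hu'b : u' b < 0 := by
    by_contra h
    push_neg at h
    have hmonou : StrictMonoOn u (Icc a b) := by
      apply strictMonoOn_of_deriv_pos (convex_Icc a b) hucont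
      intro x hx
      rw [interior_Icc] at hx
      rw [(hu x (Ioo_subset_Icc_self hx)).deriv]
      have := hanti (Ioo_subset_Icc_self hx) (right_mem_Icc.2 hab.le) hx.2
      linarith
    have := hmonou (Ioo_subset_Icc_self hmIoo) (right_mem_Icc.2 hab.le) hmIoo.2
    have := hupos _ hmIoo
    linarith
  -- unique zero z of u' in (a,b)
  obtain ⟨z, hz, hz0⟩ : ∃ z ∈ Ioo a b, u' z = 0 := by
    have h0 : (0 : ℝ) ∈ Ioo (u' b) (u' a) := ⟨hu'b, hu'a⟩
    obtain ⟨z, hz, hz0⟩ := intermediate_value_Ioo' hab.le hu'cont h0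
    exact ⟨z, hz, hz0⟩
  -- u is strictly monotone on [a,z] and strictly antitone on [z,b]
  have hmono1 : StrictMonoOn u (Icc a z) := by
    apply strictMonoOn_of_deriv_pos (convex_Icc a z)
      (hucont.mono (Icc_subset_Icc le_rfl hz.2.le))
    intro x hx
    rw [interior_Icc] at hx
    have hxI : x ∈ Ioo a b := ⟨hx.1, hx.2.trans hz.2⟩
    rw [(hu x (Ioo_subset_Icc_self hxI)).deriv]
    have := hanti (Ioo_subset_Icc_self hxI) (Ioo_subset_Icc_self hz) hx.2
    linarith
  have hanti1 : StrictAntiOn u (Icc z b) := by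
    apply strictAntiOn_of_deriv_neg (convex_Icc z b)
      (hucont.mono (Icc_subset_Icc hz.1.le le_rfl))
    intro x hx
    rw [interior_Icc] at hx
    have hxI : x ∈ Ioo a b := ⟨hz.1.trans hx.1, hx.2⟩
    rw [(hu x (Ioo_subset_Icc_self hxI)).deriv]
    have := hanti (Ioo_subset_Icc_self hz) (Ioo_subset_Icc_self hxI) hx.1
    linarith
  -- u' is nonzero away from z
  have hu'ne : ∀ x ∈ Ioo a b, x ≠ z → u' x ≠ 0 := by
    intro x hx hxz
    rcases lt_or_gt_of_ne hxz with h | h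
    · have := hanti (Ioo_subset_Icc_self hx) (Ioo_subset_Icc_self hz) h
      rw [hz0] at this; exact ne_of_gt this
    · have := hanti (Ioo_subset_Icc_self hz) (Ioo_subset_Icc_self hx) h
      rw [hz0] at this; exact ne_of_lt this
  -- bound on the trajectory
  obtain ⟨R, hR0, hR⟩ : ∃ R > 0, ∀ x ∈ Icc a b, |u x| ≤ R ∧ |u' x| ≤ R := by
    obtain ⟨C1, hC1⟩ := isCompact_Icc.exists_bound_of_continuousOn hucont
    obtain ⟨C2, hC2⟩ := isCompact_Icc.exists_bound_of_continuousOn hu'cont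
    refine ⟨max 1 (max C1 C2), lt_of_lt_of_le one_pos (le_max_left _ _), fun x hx => ?_⟩
    constructor
    · exact (hC1 x hx).trans ((le_max_left _ _).trans (le_max_right _ _))
    · exact (hC2 x hx).trans ((le_max_right _ _).trans (le_max_right _ _))
  -- f is Lipschitz on [-R, R]
  have hfd : ∀ x : ℝ, DifferentiableAt ℝ f x := fun x => hf.differentiable one_ne_zero x
  obtain ⟨C, hC⟩ := (isCompact_Icc : IsCompact (Icc (-R) R)).exists_bound_of_continuousOn
    (hf.continuous_deriv le_rfl).continuousOn
  have hfl : LipschitzOnWith C.toNNReal f (Icc (-R) R) := by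
    apply Convex.lipschitzOnWith_of_nnnorm_deriv_le (fun x _ => hfd x) _ (convex_Icc _ _)
    intro x hx
    rw [← NNReal.coe_le_coe, coe_nnnorm, Real.coe_toNNReal']
    exact (hC x hx).trans (le_max_left _ _)
  -- the vector field
  set V : ℝ → ℝ × ℝ → ℝ × ℝ := fun _ p => (p.2, -f p.1) with hV
  have hVlip : ∀ t : ℝ,
      LipschitzOnWith (max 1 (1 * C.toNNReal * 1)) (V t) (closedBall (0 : ℝ × ℝ) R) := by
    intro t
    have h1 : LipschitzOnWith 1 (fun p : ℝ × ℝ => p.2) (closedBall 0 R) :=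
      LipschitzWith.prod_snd.lipschitzOnWith
    have hmaps : MapsTo (fun p : ℝ × ℝ => p.1) (closedBall (0 : ℝ × ℝ) R) (Icc (-R) R) := by
      intro p hp
      rw [mem_closedBall_zero_iff] at hp
      have := (norm_fst_le p).trans hp
      rw [Real.norm_eq_abs] at this
      exact abs_le.mp this
    have h2 : LipschitzOnWith (1 * C.toNNReal * 1)
        ((fun y => -f y) ∘ (fun p : ℝ × ℝ => p.1)) (closedBall 0 R) :=
      (LipschitzWith.id.neg.comp_lipschitzOnWith hfl).comp
        LipschitzWith.prod_fst.lipschitzOnWith hmaps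
    exact h1.prodMk h2
  -- trajectories
  set F : ℝ → ℝ × ℝ := fun t => (u t, u' t) with hF
  set G : ℝ → ℝ × ℝ := fun t => (u (2 * z - t), -u' (2 * z - t)) with hG
  set c : ℝ := max a (2 * z - b) with hc
  set d : ℝ := min b (2 * z - a) with hd
  have hac : a ≤ c := le_max_left _ _
  have hdb : d ≤ b := min_le_left _ _
  have hcz : c < z := max_lt hz.1 (by linarith [hz.2])
  have hzd : z < d := lt_min hz.2 (by linarith [hz.1])
  have hmem : ∀ t ∈ Icc c d, t ∈ Icc a b ∧ (2 * z - t) ∈ Icc a b := by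
    intro t ht
    have h1 := ht.1; have h2 := ht.2
    have hc1 : a ≤ c := hac
    have hc2 : 2 * z - b ≤ c := le_max_right _ _
    have hd1 : d ≤ b := hdb
    have hd2 : d ≤ 2 * z - a := min_le_right _ _
    constructor
    · exact ⟨by linarith, by linarith⟩
    · constructor <;> linarith
  have hmemIoo : ∀ t ∈ Ioo c d, t ∈ Icc a b ∧ (2 * z - t) ∈ Icc a b :=
    fun t ht => hmem t (Ioo_subset_Icc_self ht)
  -- solutions of the ODE
  have hFd : ∀ t ∈ Ioo c d, HasDerivAt F (V t (F t)) t := by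
    intro t ht
    obtain ⟨h1, _⟩ := hmemIoo t ht
    have := (hu t h1).prodMk (hu'd t h1)
    rwa [hode t h1] at this
  have hGd : ∀ t ∈ Ioo c d, HasDerivAt G (V t (G t)) t := by
    intro t ht
    obtain ⟨_, h2⟩ := hmemIoo t ht
    have hinner : HasDerivAt (fun s : ℝ => 2 * z - s) (-1) t := by
      simpa using (hasDerivAt_id t).const_sub (2 * z)
    have hg1 : HasDerivAt (fun s => u (2 * z - s)) (u' (2 * z - t) * (-1)) t :=
      HasDerivAt.comp t (hu _ h2) hinner
    have hg2 : HasDerivAt (fun s => u' (2 * z - s)) (u'' (2 * z - t) * (-1)) t :=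
      HasDerivAt.comp t (hu'd _ h2) hinner
    have hg2' : HasDerivAt (fun s => -u' (2 * z - s)) (-(u'' (2 * z - t) * (-1))) t := hg2.neg
    have := hg1.prodMk hg2'
    have heq : ((u' (2 * z - t) * (-1)), -(u'' (2 * z - t) * (-1))) = V t (G t) := by
      rw [hV, hG]
      simp only [hode _ h2, Prod.mk.injEq]
      constructor <;> ring
    rwa [heq] at this
  have hFs : ∀ t ∈ Ioo c d, F t ∈ closedBall (0 : ℝ × ℝ) R := by
    intro t ht
    obtain ⟨h1, _⟩ := hmemIoo t ht
    rw [mem_closedBall_zero_iff, Prod.norm_def]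
    exact max_le (by rw [Real.norm_eq_abs]; exact (hR t h1).1)
      (by rw [Real.norm_eq_abs]; exact (hR t h1).2)
  have hGs : ∀ t ∈ Ioo c d, G t ∈ closedBall (0 : ℝ × ℝ) R := by
    intro t ht
    obtain ⟨_, h2⟩ := hmemIoo t ht
    rw [mem_closedBall_zero_iff, Prod.norm_def]
    refine max_le (by rw [Real.norm_eq_abs]; exact (hR _ h2).1) ?_
    rw [Real.norm_eq_abs, abs_neg]
    exact (hR _ h2).2
  have hFcont : ContinuousOn F (Icc c d) := by
    intro t ht
    obtain ⟨h1, _⟩ := hmem t ht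
    exact ((hu t h1).continuousAt.prodMk (hu'd t h1).continuousAt).continuousWithinAt
  have hGcont : ContinuousOn G (Icc c d) := by
    intro t ht
    obtain ⟨_, h2⟩ := hmem t ht
    have : ContinuousAt (fun s : ℝ => 2 * z - s) t := by fun_prop
    exact (((hu _ h2).continuousAt.comp this).prodMk
      ((hu'd _ h2).continuousAt.comp this).neg).continuousWithinAt
  have heqz : F z = G z := by
    simp only [hF, hG]
    have h : 2 * z - z = z := by ring
    rw [h, hz0]
    simp
  have hEq : EqOn F G (Icc c d) :=
    ODE_solution_unique_of_mem_Icc (fun t _ => hVlip t) ⟨hcz, hzd⟩ hFcont hFd hFs hGcont hGd hGs heqz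
  have hsym : ∀ t ∈ Icc c d, u t = u (2 * z - t) := by
    intro t ht
    have := hEq ht
    exact congrArg Prod.fst this
  -- z is the midpoint
  have hzm : z = (a + b) / 2 := by
    by_contra hne
    rcases lt_or_gt_of_ne hne with h | h
    · -- z < m : then 2z - a ∈ Icc c d and u(2z-a) = u(a) = 0, contradiction
      have ht : 2 * z - a ∈ Icc c d := by
        rw [mem_Icc, hc, hd]
        constructor
        · exact max_le (by linarith [hz.1]) (by linarith)
        · exact le_min (by linarith) le_rfl
      have := hsym _ ht
      have h2 : 2 * z - (2 * z - a) = a := by ring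
      rw [h2, hua] at this
      have hIoo : 2 * z - a ∈ Ioo a b := ⟨by linarith [hz.1], by linarith⟩
      exact absurd this (ne_of_gt (hupos _ hIoo))
    · have ht : 2 * z - b ∈ Icc c d := by
        rw [mem_Icc, hc, hd]
        constructor
        · exact max_le (by linarith) le_rfl
        · exact le_min (by linarith [hz.2]) (by linarith)
      have := hsym _ ht
      have h2 : 2 * z - (2 * z - b) = b := by ring
      rw [h2, hub] at this
      have hIoo : 2 * z - b ∈ Ioo a b := ⟨by linarith, by linarith [hz.2]⟩
      exact absurd this (ne_of_gt (hupos _ hIoo))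
  -- assemble conclusions
  subst hzm
  have hca : c = a := by
    rw [hc]
    have : 2 * ((a + b) / 2) - b = a := by ring
    rw [this, max_self]
  have hdbeq : d = b := by
    rw [hd]
    have : 2 * ((a + b) / 2) - a = b := by ring
    rw [this, min_self]
  refine ⟨?_, hz0, hu'ne, ?_, ?_⟩
  · intro t ht
    obtain ⟨ht1, ht2⟩ := abs_le.mp ht
    have hmem' : (a + b) / 2 + t ∈ Icc c d := by
      rw [hca, hdbeq]
      constructor <;> [linarith; linarith]
    have := hsym _ hmem'
    have h2 : 2 * ((a + b) / 2) - ((a + b) / 2 + t) = (a + b) / 2 - t := by ring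
    rwa [h2] at this
  · exact hmono1.mono (fun x hx => ⟨hx.1.le, hx.2.le⟩)
  · exact hanti1.mono (fun x hx => ⟨hx.1.le, hx.2.le⟩)
end

section
/- Let f : ℝ → ℝ be continuously differentiable and let ũ : ℝ → ℝ be twice continuously differentiable on [0,1] with ũ''(x) = -f(ũ(x)) for all x ∈ [0,1], ũ'(0) = 0 and ũ(1) = 0. Define v : [-1,1] → ℝ by v(x) = ũ(|x|). Then v is twice continuously differentiable on [-1,1] and satisfies v''(x) = -f(v(x)) for all x ∈ [-1,1], together with v(-1) = v(1) = 0. -/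
/-- Key little-o lemma: if `g` has derivative `c` at `0`, then
`g |y| - g 0 - |y| * c = o(y)` as `y → 0`. -/
theorem even_reflection_aux_key (g : ℝ → ℝ) (c : ℝ) (hg : HasDerivAt g c 0) :
    (fun y : ℝ => g |y| - g 0 - |y| * c) =o[nhds 0] (fun y : ℝ => y) := by
  have h1 : (fun t : ℝ => g t - g 0 - (t - 0) • c) =o[nhds 0] fun t : ℝ => t - 0 :=
    (hasDerivAt_iff_isLittleO).mp hg
  have habs : Filter.Tendsto (fun y : ℝ => |y|) (nhds 0) (nhds 0) := by
    have := continuous_abs.tendsto (0 : ℝ)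
    simpa using this
  have h2 := h1.comp_tendsto habs
  have h3 : (fun y : ℝ => g |y| - g 0 - |y| * c) =o[nhds 0] fun y : ℝ => |y| := by
    simpa [Function.comp_def, smul_eq_mul] using h2
  refine h3.trans_isBigO ?_
  exact Asymptotics.isBigO_of_le _ (fun x => by simp [Real.norm_eq_abs, abs_abs])

/-- **Even reflection (Section 2).** If `ũ'' = -f(ũ)` on `[0,1]` with
`ũ'(0) = 0` and `ũ(1) = 0`, then `v(x) = ũ(|x|)` is twice continuously
differentiable on `[-1,1]`, satisfies `v'' = -f(v)` there, and
`v(-1) = v(1) = 0`. -/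
theorem even_reflection_solves_dirichlet
    (f : ℝ → ℝ) (hf : ContDiff ℝ 1 f)
    (u u' u'' : ℝ → ℝ)
    (hu : ∀ x ∈ Set.Icc (0:ℝ) 1, HasDerivAt u (u' x) x)
    (hu'd : ∀ x ∈ Set.Icc (0:ℝ) 1, HasDerivAt u' (u'' x) x)
    (hu''c : ContinuousOn u'' (Set.Icc 0 1))
    (hode : ∀ x ∈ Set.Icc (0:ℝ) 1, u'' x = -f (u x))
    (hu'0 : u' 0 = 0) (hu1 : u 1 = 0)
    (v : ℝ → ℝ) (hv : ∀ x : ℝ, v x = u |x|) :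
    (∃ v' v'' : ℝ → ℝ,
      (∀ x ∈ Set.Icc (-1:ℝ) 1, HasDerivAt v (v' x) x) ∧
      (∀ x ∈ Set.Icc (-1:ℝ) 1, HasDerivAt v' (v'' x) x) ∧
      ContinuousOn v'' (Set.Icc (-1) 1) ∧
      (∀ x ∈ Set.Icc (-1:ℝ) 1, v'' x = -f (v x))) ∧
    v (-1) = 0 ∧ v 1 = 0 := by
  have hmem0 : (0:ℝ) ∈ Set.Icc (0:ℝ) 1 := by norm_num
  have hmemabs : ∀ x ∈ Set.Icc (-1:ℝ) 1, |x| ∈ Set.Icc (0:ℝ) 1 := by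
    intro x hx
    exact ⟨abs_nonneg x, abs_le.mpr ⟨hx.1, hx.2⟩⟩
  set w' : ℝ → ℝ := fun x => if x < 0 then -u' (-x) else u' x with hw'
  set w'' : ℝ → ℝ := fun x => u'' |x| with hw''
  refine ⟨⟨w', w'', ?_, ?_, ?_, ?_⟩, ?_, ?_⟩
  · -- first derivative
    intro x hx
    rcases lt_trichotomy x 0 with hxneg | hx0 | hxpos
    · -- x < 0 : v = u ∘ (-·) near x
      have hmem : -x ∈ Set.Icc (0:ℝ) 1 := by
        constructor <;> [linarith; linarith [hx.1]]
      have hcomp : HasDerivAt (fun y : ℝ => u (-y)) (u' (-x) * (-1)) x :=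
        HasDerivAt.comp x (hu _ hmem) (hasDerivAt_neg x)
      have heq : ∀ᶠ y in nhds x, v y = u (-y) := by
        filter_upwards [Iio_mem_nhds hxneg] with y hy
        rw [hv y, abs_of_neg hy]
      have : HasDerivAt v (u' (-x) * (-1)) x := hcomp.congr_of_eventuallyEq heq
      simpa [hw', if_pos hxneg, mul_comm] using this
    · -- x = 0
      subst hx0
      have hu0 : HasDerivAt u 0 0 := by simpa [hu'0] using hu 0 hmem0
      have hk := even_reflection_aux_key u 0 hu0
      have : HasDerivAt v 0 0 := by
        rw [hasDerivAt_iff_isLittleO]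
        have : (fun y : ℝ => v y - v 0 - (y - 0) • (0:ℝ))
            = fun y : ℝ => u |y| - u 0 - |y| * 0 := by
          funext y; simp [hv]
        rw [this]
        simpa using hk
      simpa [hw', hu'0] using this
    · -- x > 0 : v = u near x
      have hmem : x ∈ Set.Icc (0:ℝ) 1 := ⟨le_of_lt hxpos, hx.2⟩
      have heq : ∀ᶠ y in nhds x, v y = u y := by
        filter_upwards [Ioi_mem_nhds hxpos] with y hy
        rw [hv y, abs_of_pos hy]
      have : HasDerivAt v (u' x) x := (hu x hmem).congr_of_eventuallyEq heq
      simpa [hw', not_lt.mpr (le_of_lt hxpos)] using this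
  · -- second derivative
    intro x hx
    rcases lt_trichotomy x 0 with hxneg | hx0 | hxpos
    · have hmem : -x ∈ Set.Icc (0:ℝ) 1 := by
        constructor <;> [linarith; linarith [hx.1]]
      have hcomp : HasDerivAt (fun y : ℝ => -u' (-y)) (-(u'' (-x) * (-1))) x :=
        (HasDerivAt.comp x (hu'd _ hmem) (hasDerivAt_neg x)).neg
      have heq : ∀ᶠ y in nhds x, w' y = -u' (-y) := by
        filter_upwards [Iio_mem_nhds hxneg] with y hy
        simp only [hw']
        rw [if_pos (show y < 0 from hy)]
      have : HasDerivAt w' (-(u'' (-x) * (-1))) x := hcomp.congr_of_eventuallyEq heq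
      simpa [hw'', abs_of_neg hxneg] using this
    · subst hx0
      have hk := even_reflection_aux_key u' (u'' 0) (hu'd 0 hmem0)
      have hnorm : (fun y : ℝ => ‖w' y - w' 0 - (y - 0) • (u'' 0)‖)
          = fun y : ℝ => ‖u' |y| - u' 0 - |y| * u'' 0‖ := by
        funext y
        by_cases hy : y < 0
        · have : w' y - w' 0 - (y - 0) • u'' 0
              = -(u' |y| - u' 0 - |y| * u'' 0) := by
            simp only [hw', if_pos hy, abs_of_neg hy]
            simp [hu'0, smul_eq_mul]
            ring
          rw [this, norm_neg]
        · push_neg at hy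
          simp only [hw', if_neg (not_lt.mpr hy), abs_of_nonneg hy]
          simp [smul_eq_mul]
      have : HasDerivAt w' (u'' 0) 0 := by
        rw [hasDerivAt_iff_isLittleO, ← Asymptotics.isLittleO_norm_left, hnorm,
          Asymptotics.isLittleO_norm_left]
        simpa using hk
      simpa [hw''] using this
    · have hmem : x ∈ Set.Icc (0:ℝ) 1 := ⟨le_of_lt hxpos, hx.2⟩
      have heq : ∀ᶠ y in nhds x, w' y = u' y := by
        filter_upwards [Ioi_mem_nhds hxpos] with y hy
        simp only [hw']
        rw [if_neg (not_lt.mpr (le_of_lt (show (0:ℝ) < y from hy)))]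
      have : HasDerivAt w' (u'' x) x := (hu'd x hmem).congr_of_eventuallyEq heq
      simpa [hw'', abs_of_pos hxpos] using this
  · -- continuity of w''
    exact hu''c.comp continuous_abs.continuousOn hmemabs
  · -- ODE
    intro x hx
    rw [hw'', hv x]
    exact hode _ (hmemabs x hx)
  · rw [hv]; simpa using hu1
  · rw [hv]; simpa using hu1
end

section
/- Let N ≥ 2 be an integer and let ω ⊂ ℝ^{N-1} be a nonempty open bounded connected set; set Ω = ω × (0,1) ⊂ ℝ^N. Let n ≥ 1 and let ũ : ℝ → ℝ be continuously differentiable such that the zero set of ũ in (0,1] is exactly { r_1 < r_2 < ... < r_n } with r_n = 1, ũ(0) ≠ 0, and ũ'(r_i) ≠ 0 for every i = 1, ..., n. Then there exists ε > 0 with the following property: for every continuously differentiable function v : ℝ^N → ℝ such that v(x', 1) = 0 for all x' ∈ ω and |v(x) - ũ(x_N)| + ‖∇v(x) - ũ'(x_N)·e_N‖ < ε for all x = (x', x_N) in the closure of Ω (where e_N is the N-th standard basis vector of ℝ^N), the set { x ∈ Ω : v(x) ≠ 0 } has exactly n connected components. -/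
open Set

lemma aux_preimage_preconnected {X : Type*} [TopologicalSpace X] {s t : Set X} (h : s ⊆ t)
    (hp : IsPreconnected s) : IsPreconnected (Subtype.val ⁻¹' s : Set ↥t) := by
  rw [← Topology.IsInducing.subtypeVal.isPreconnected_image]
  rwa [Subtype.image_preimage_coe, inter_eq_self_of_subset_right h]

lemma aux_card_components {X : Type*} [TopologicalSpace X] {S : Set X} {m : ℕ}
    (U : Fin m → Set X) (hopen : ∀ k, IsOpen (U k))
    (hconn : ∀ k, IsPreconnected (U k))
    (hne : ∀ k, (U k).Nonempty)
    (hdisj : ∀ k l, k ≠ l → Disjoint (U k) (U l))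
    (hcover : S = ⋃ k, U k) :
    Nat.card (ConnectedComponents ↥S) = m := by
  classical
  have hUS : ∀ k, U k ⊆ S := fun k => hcover ▸ subset_iUnion U k
  have hex : ∀ x : ↥S, ∃ k, (x : X) ∈ U k := by
    intro x
    have hx2 : (x : X) ∈ ⋃ k, U k := hcover ▸ x.2
    exact mem_iUnion.1 hx2
  set f : ↥S → Fin m := fun x => Classical.choose (hex x) with hfdef
  have hf : ∀ x : ↥S, (x : X) ∈ U (f x) := fun x => Classical.choose_spec (hex x)
  have fib : ∀ (x : ↥S) (k : Fin m), f x = k ↔ (x : X) ∈ U k := by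
    intro x k
    constructor
    · rintro rfl; exact hf x
    · intro hx
      by_contra hne'
      exact (hdisj _ _ hne').ne_of_mem (hf x) hx rfl
  have hlc : IsLocallyConstant f := by
    intro s
    have : f ⁻¹' s = Subtype.val ⁻¹' (⋃ k ∈ s, U k) := by
      ext x
      simp only [mem_preimage, mem_iUnion]
      constructor
      · intro hx; exact ⟨f x, hx, hf x⟩
      · rintro ⟨k, hk, hxk⟩; rwa [(fib x k).2 hxk]
    rw [this]
    exact (isOpen_biUnion fun k _ => hopen k).preimage continuous_subtype_val
  have hfc : Continuous f := hlc.continuous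
  set e : ConnectedComponents ↥S → Fin m := hfc.connectedComponentsLift with hedef
  have he : ∀ x : ↥S, e (ConnectedComponents.mk x) = f x := fun x => rfl
  have hbij : Function.Bijective e := by
    constructor
    · intro a b hab
      obtain ⟨x, rfl⟩ := ConnectedComponents.surjective_coe a
      obtain ⟨y, rfl⟩ := ConnectedComponents.surjective_coe b
      rw [he, he] at hab
      have hx : (x : X) ∈ U (f y) := hab ▸ hf x
      have hpre : IsPreconnected (Subtype.val ⁻¹' (U (f y)) : Set ↥S) :=
        aux_preimage_preconnected (hUS _) (hconn _)
      have h1 : x ∈ (Subtype.val ⁻¹' (U (f y)) : Set ↥S) := hx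
      have h2 : y ∈ (Subtype.val ⁻¹' (U (f y)) : Set ↥S) := hf y
      have := hpre.subset_connectedComponent h1
      exact (ConnectedComponents.coe_eq_coe'.2 (this h2)).symm
    · intro k
      obtain ⟨x, hx⟩ := hne k
      refine ⟨ConnectedComponents.mk ⟨x, hUS k hx⟩, ?_⟩
      rw [he]
      exact (fib _ k).2 hx
  rw [Nat.card_eq_of_bijective e hbij, Nat.card_eq_fintype_card, Fintype.card_fin]

lemma aux_params (m' : ℕ) (u : ℝ → ℝ) (hu : ContDiff ℝ 1 u)
    (r : Fin (m'+1) → ℝ) (hrmono : StrictMono r)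
    (hzeros : {x ∈ Set.Ioc (0:ℝ) 1 | u x = 0} = Set.range r)
    (hu0 : u 0 ≠ 0) (hu' : ∀ i, deriv u (r i) ≠ 0) :
    ∃ δ c : ℝ, 0 < δ ∧ 0 < c ∧ (∀ i, 0 < r i - δ) ∧
      (∀ i j : Fin (m'+1), i < j → r i + δ < r j - δ) ∧
      (∀ i, ∀ t ∈ Set.Icc (r i - δ) (r i + δ),
        c ≤ (if 0 < deriv u (r i) then (1:ℝ) else -1) * deriv u t) ∧
      (∀ t ∈ Set.Icc (0:ℝ) 1, (∀ i, t ∉ Set.Ioo (r i - δ) (r i + δ)) → c ≤ |u t|) := by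
  classical
  have hrmem : ∀ i, r i ∈ Set.Ioc (0:ℝ) 1 := by
    intro i
    have : r i ∈ Set.range r := ⟨i, rfl⟩
    rw [← hzeros] at this
    exact this.1
  have hdc : Continuous (deriv u) := hu.continuous_deriv le_rfl
  have hcont : ∀ i : Fin (m'+1), ∃ d > 0, ∀ t, |t - r i| ≤ d →
      |deriv u t - deriv u (r i)| < |deriv u (r i)| / 2 := by
    intro i
    have h2 : 0 < |deriv u (r i)| / 2 := by
      have := abs_pos.2 (hu' i); linarith
    obtain ⟨d, hd, hball⟩ := (Metric.continuousAt_iff).1 hdc.continuousAt _ h2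
    refine ⟨d/2, by linarith, fun t ht => ?_⟩
    have h3 : dist t (r i) < d := by rw [Real.dist_eq]; linarith
    have := hball h3
    rwa [Real.dist_eq] at this
  choose df hdf hdf2 using hcont
  set g : Fin (m'+1) → ℝ := fun i => if h : (i:ℕ)+1 < m'+1 then (r ⟨(i:ℕ)+1, h⟩ - r i)/3 else 1 with hg
  have hgpos : ∀ i, 0 < g i := by
    intro i; by_cases h : (i:ℕ)+1 < m'+1
    · have : r i < r ⟨(i:ℕ)+1, h⟩ := hrmono (by simp [Fin.lt_def])
      simp only [hg, dif_pos h]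
      linarith
    · have h1 : g i = 1 := by simp only [hg]; rw [dif_neg h]
      rw [h1]; norm_num
  have hne : (Finset.univ : Finset (Fin (m'+1))).Nonempty := ⟨0, Finset.mem_univ 0⟩
  set δ : ℝ := ((Finset.univ.inf' hne (fun i => min (df i) (min (g i) (r i))))) / 2 with hδdef
  have hδle : ∀ i, δ ≤ min (df i) (min (g i) (r i)) / 2 := by
    intro i
    have := Finset.inf'_le (f := fun i => min (df i) (min (g i) (r i))) (Finset.mem_univ i)
    rw [hδdef]; linarith
  have hδpos : 0 < δ := by
    rw [hδdef]
    have : 0 < Finset.univ.inf' hne fun i => min (df i) (min (g i) (r i)) := by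
      rw [Finset.lt_inf'_iff]
      intro i _
      exact lt_min (hdf i) (lt_min (hgpos i) (hrmem i).1)
    linarith
  have hδdf : ∀ i, δ ≤ df i := fun i => le_trans (hδle i) (by
    have := min_le_left (df i) (min (g i) (r i)); linarith [hdf i])
  have hδg : ∀ i, δ ≤ g i := fun i => le_trans (hδle i) (by
    have h1 := min_le_right (df i) (min (g i) (r i))
    have h2 := min_le_left (g i) (r i)
    have := hgpos i; linarith)
  have hδr : ∀ i, δ < r i := by
    intro i
    have h1 := hδle i
    have h2 : min (df i) (min (g i) (r i)) ≤ r i :=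
      le_trans (min_le_right _ _) (min_le_right _ _)
    have h3 := (hrmem i).1
    linarith
  have Pa : ∀ i, 0 < r i - δ := fun i => by linarith [hδr i]
  have Pb : ∀ i j : Fin (m'+1), i < j → r i + δ < r j - δ := by
    intro i j hij
    have h1 : (i:ℕ)+1 < m'+1 := by
      have : (i:ℕ) < (j:ℕ) := hij
      omega
    have h2 : r ⟨(i:ℕ)+1, h1⟩ ≤ r j := by
      apply hrmono.monotone
      have : (i:ℕ) < (j:ℕ) := hij
      simp [Fin.le_def]; omega
    have h3 : g i = (r ⟨(i:ℕ)+1, h1⟩ - r i)/3 := by simp only [hg, dif_pos h1]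
    have h4 := hδg i
    rw [h3] at h4
    linarith [hδpos]
  -- the compact part
  set K : Set ℝ := Icc (0:ℝ) 1 ∩ (⋃ i, Ioo (r i - δ) (r i + δ))ᶜ with hK
  have hKcp : IsCompact K :=
    isCompact_Icc.inter_right (isClosed_compl_iff.2 (isOpen_iUnion fun i => isOpen_Ioo))
  have hK0 : (0:ℝ) ∈ K := by
    constructor
    · exact ⟨le_refl 0, zero_le_one⟩
    · intro h
      obtain ⟨i, hi⟩ := mem_iUnion.1 h
      exact absurd hi.1 (by linarith [Pa i])
  obtain ⟨t₀, ht₀K, ht₀min⟩ := hKcp.exists_isMinOn ⟨0, hK0⟩ (hu.continuous.abs.continuousOn)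
  have hc₀pos : 0 < |u t₀| := by
    rw [abs_pos]
    intro h0
    have ht1 : t₀ ∈ Icc (0:ℝ) 1 := ht₀K.1
    have ht2 : t₀ ≠ 0 := fun h => hu0 (h ▸ h0)
    have : t₀ ∈ Set.Ioc (0:ℝ) 1 := ⟨lt_of_le_of_ne ht1.1 (Ne.symm ht2), ht1.2⟩
    have : t₀ ∈ Set.range r := by rw [← hzeros]; exact ⟨this, h0⟩
    obtain ⟨i, rfl⟩ := this
    exact ht₀K.2 (mem_iUnion.2 ⟨i, ⟨by linarith [hδpos], by linarith [hδpos]⟩⟩)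
  set c : ℝ := min (Finset.univ.inf' hne (fun i => |deriv u (r i)|/2)) |u t₀| with hcdef
  have hcpos : 0 < c := by
    apply lt_min _ hc₀pos
    rw [Finset.lt_inf'_iff]
    intro i _
    have := abs_pos.2 (hu' i); linarith
  have hc1 : ∀ i, c ≤ |deriv u (r i)|/2 := by
    intro i
    exact le_trans (min_le_left _ _) (Finset.inf'_le _ (Finset.mem_univ i))
  refine ⟨δ, c, hδpos, hcpos, Pa, Pb, ?_, ?_⟩
  · intro i t ht
    have hdist : |t - r i| ≤ δ := abs_sub_le_iff.2 ⟨by linarith [ht.2], by linarith [ht.1]⟩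
    have hd2 := hdf2 i t (le_trans hdist (hδdf i))
    have hsgn : (if 0 < deriv u (r i) then (1:ℝ) else -1) * deriv u (r i) = |deriv u (r i)| := by
      by_cases h : 0 < deriv u (r i)
      · rw [if_pos h, one_mul, abs_of_pos h]
      · rw [if_neg h, abs_of_nonpos (not_lt.1 h)]; ring
    have habs := abs_sub_abs_le_abs_sub (deriv u t) (deriv u (r i))
    have h5 : (if 0 < deriv u (r i) then (1:ℝ) else -1) * deriv u t
        = (if 0 < deriv u (r i) then (1:ℝ) else -1) * deriv u (r i)
          + (if 0 < deriv u (r i) then (1:ℝ) else -1) * (deriv u t - deriv u (r i)) := by ring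
    have h6 : (if 0 < deriv u (r i) then (1:ℝ) else -1) * (deriv u t - deriv u (r i))
        ≥ -|deriv u t - deriv u (r i)| := by
      by_cases h : 0 < deriv u (r i)
      · rw [if_pos h, one_mul]; exact neg_abs_le _
      · rw [if_neg h]
        have := abs_le.1 (le_refl |deriv u t - deriv u (r i)|)
        nlinarith [neg_abs_le (deriv u t - deriv u (r i)), abs_nonneg (deriv u t - deriv u (r i))]
    rw [h5, hsgn]
    have := hc1 i
    linarith
  · intro t ht hnot
    have htK : t ∈ K := ⟨ht, fun h => by
      obtain ⟨i, hi⟩ := mem_iUnion.1 h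
      exact hnot i hi⟩
    have := ht₀min htK
    simp only at this
    exact le_trans (min_le_right _ _) this

lemma aux_slice (m' : ℕ) (u : ℝ → ℝ) (hu : ContDiff ℝ 1 u)
    (r : Fin (m'+1) → ℝ) (hrmono : StrictMono r)
    (hzeros : {x ∈ Set.Ioc (0:ℝ) 1 | u x = 0} = Set.range r)
    (hrlast : r (Fin.last m') = 1)
    (δ c : ℝ) (hδpos : 0 < δ) (hcpos : 0 < c)
    (Pa : ∀ i, 0 < r i - δ)
    (Pb : ∀ i j : Fin (m'+1), i < j → r i + δ < r j - δ)
    (P2 : ∀ i, ∀ t ∈ Set.Icc (r i - δ) (r i + δ),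
      c ≤ (if 0 < deriv u (r i) then (1:ℝ) else -1) * deriv u t)
    (P3 : ∀ t ∈ Set.Icc (0:ℝ) 1, (∀ i, t ∉ Set.Ioo (r i - δ) (r i + δ)) → c ≤ |u t|)
    (g G : ℝ → ℝ) (hgd : ∀ t, HasDerivAt g (G t) t)
    (hclose : ∀ t ∈ Set.Icc (0:ℝ) 1, |g t - u t| < c/2 ∧ |G t - deriv u t| < c/2)
    (hg1 : g 1 = 0) :
    ∃ z : Fin (m'+1) → ℝ,
      (∀ i, z i ∈ Set.Icc (r i - δ) (min (r i + δ) 1)) ∧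
      (∀ i, g (z i) = 0) ∧
      z (Fin.last m') = 1 ∧
      (∀ i, ∀ t ∈ Set.Icc (r i - δ) (min (r i + δ) 1), g t = 0 → t = z i) ∧
      (∀ i, ∀ t ∈ Set.Icc (r i - δ) (min (r i + δ) 1), z i < t →
        0 < (if 0 < deriv u (r i) then (1:ℝ) else -1) * g t) ∧
      (∀ i, ∀ t ∈ Set.Icc (r i - δ) (min (r i + δ) 1), t < z i →
        (if 0 < deriv u (r i) then (1:ℝ) else -1) * g t < 0) ∧
      (∀ t ∈ Set.Ioo (0:ℝ) 1, g t = 0 → ∃ i, t = z i) ∧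
      (∀ i, i ≠ Fin.last m' → z i ∈ Set.Ioo (r i - δ) (r i + δ)) := by
  classical
  set s : Fin (m'+1) → ℝ := fun i => if 0 < deriv u (r i) then (1:ℝ) else -1 with hsdef
  have hsabs : ∀ i (a : ℝ), s i * a ≤ |a| ∧ -|a| ≤ s i * a := by
    intro i a
    by_cases h : 0 < deriv u (r i)
    · simp only [hsdef, if_pos h, one_mul]
      exact ⟨le_abs_self a, neg_abs_le a⟩
    · simp only [hsdef, if_neg h, neg_one_mul]
      exact ⟨neg_le_abs a, neg_le_neg (le_abs_self a)⟩
  have hs1 : ∀ i, s i = 1 ∨ s i = -1 := by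
    intro i; by_cases h : 0 < deriv u (r i)
    · left; simp [hsdef, if_pos h]
    · right; simp [hsdef, if_neg h]
  have hsne : ∀ i, s i ≠ 0 := by
    intro i; rcases hs1 i with h | h <;> rw [h] <;> norm_num
  have habs : ∀ i (a : ℝ), |s i * a| = |a| := by
    intro i a; rcases hs1 i with h | h <;> rw [h] <;> simp
  have hrmem : ∀ i, r i ∈ Set.Ioc (0:ℝ) 1 := by
    intro i
    have : r i ∈ Set.range r := ⟨i, rfl⟩
    rw [← hzeros] at this
    exact this.1
  have hu0 : ∀ i, u (r i) = 0 := by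
    intro i
    have : r i ∈ {x ∈ Set.Ioc (0:ℝ) 1 | u x = 0} := hzeros ▸ ⟨i, rfl⟩
    exact this.2
  set J : Fin (m'+1) → Set ℝ := fun i => Set.Icc (r i - δ) (min (r i + δ) 1) with hJdef
  have hJsub : ∀ i, J i ⊆ Set.Icc (0:ℝ) 1 := by
    intro i t ht
    exact ⟨le_trans (le_of_lt (Pa i)) ht.1, le_trans ht.2 (min_le_right _ _)⟩
  have hJsub2 : ∀ i, J i ⊆ Set.Icc (r i - δ) (r i + δ) := by
    intro i t ht
    exact ⟨ht.1, le_trans ht.2 (min_le_left _ _)⟩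
  have hriJ : ∀ i, r i ∈ J i :=
    fun i => ⟨by linarith, le_min (by linarith) (hrmem i).2⟩
  have gcont : Continuous g := by
    rw [continuous_iff_continuousAt]
    exact fun t => (hgd t).continuousAt
  have hGpos : ∀ i, ∀ t ∈ J i, 0 < s i * G t := by
    intro i t ht
    have h2 := P2 i t (hJsub2 i ht)
    have h3 := (hclose t (hJsub i ht)).2
    have h4 : s i * G t = s i * deriv u t + s i * (G t - deriv u t) := by ring
    have h5 := (hsabs i (G t - deriv u t)).2
    have h6 := abs_lt.1 h3
    rw [h4]
    linarith
  have A : ∀ i, StrictMonoOn (fun t => s i * g t) (J i) := by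
    intro i
    apply strictMonoOn_of_deriv_pos (convex_Icc _ _)
      ((continuous_const.mul gcont).continuousOn)
    intro t ht
    change 0 < deriv (fun t => s i * g t) t
    have hd : HasDerivAt (fun t => s i * g t) (s i * G t) t := (hgd t).const_mul (s i)
    rw [hd.deriv]
    exact hGpos i t (interior_subset ht)
  have Au : ∀ i, StrictMonoOn (fun t => s i * u t) (J i) := by
    intro i
    apply strictMonoOn_of_deriv_pos (convex_Icc _ _)
      ((continuous_const.mul (hu.continuous)).continuousOn)
    intro t ht
    change 0 < deriv (fun t => s i * u t) t
    rw [deriv_const_mul _ ((hu.differentiable one_ne_zero) t)]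
    have := P2 i t (hJsub2 i (interior_subset ht))
    linarith
  -- existence of the zero
  have hexz : ∀ i, ∃ zi, zi ∈ J i ∧ g zi = 0 ∧ (i = Fin.last m' → zi = 1) ∧
      (i ≠ Fin.last m' → zi ∈ Set.Ioo (r i - δ) (r i + δ)) := by
    intro i
    by_cases hil : i = Fin.last m'
    · subst hil
      refine ⟨1, ⟨?_, le_min (by rw [hrlast]; linarith) le_rfl⟩, hg1, fun _ => rfl,
        fun h => absurd rfl h⟩
      rw [hrlast]; linarith
    · have hilt : i < Fin.last m' := lt_of_le_of_ne (Fin.le_last i) hil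
      have hb1 : r i + δ < 1 - δ := by
        have := Pb i (Fin.last m') hilt
        rw [hrlast] at this
        exact this
      have hbeq : min (r i + δ) 1 = r i + δ := min_eq_left (by linarith)
      have haJ : r i - δ ∈ J i := ⟨le_refl _, le_min (by linarith) (by linarith [(hrmem i).2])⟩
      have hbJ : r i + δ ∈ J i := ⟨by linarith, by rw [hbeq]⟩
      have hanotin : ∀ j, r i - δ ∉ Set.Ioo (r j - δ) (r j + δ) := by
        intro j hj
        rcases lt_trichotomy j i with h | h | h
        · have := Pb j i h; linarith [hj.2]
        · subst h; exact lt_irrefl _ hj.1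
        · have := Pb i j h; linarith [hj.1]
      have hbnotin : ∀ j, r i + δ ∉ Set.Ioo (r j - δ) (r j + δ) := by
        intro j hj
        rcases lt_trichotomy j i with h | h | h
        · have := Pb j i h; linarith [hj.2]
        · subst h; exact lt_irrefl _ hj.2
        · have := Pb i j h; linarith [hj.1]
      have haI : r i - δ ∈ Set.Icc (0:ℝ) 1 := hJsub i haJ
      have hbI : r i + δ ∈ Set.Icc (0:ℝ) 1 := hJsub i hbJ
      have hua : c ≤ |u (r i - δ)| := P3 _ haI hanotin
      have hub : c ≤ |u (r i + δ)| := P3 _ hbI hbnotin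
      have huneg : s i * u (r i - δ) < 0 := by
        have := Au i haJ (hriJ i) (by linarith)
        simpa [hu0 i] using this
      have hupos : 0 < s i * u (r i + δ) := by
        have := Au i (hriJ i) hbJ (by linarith)
        simpa [hu0 i] using this
      have hua' : s i * u (r i - δ) ≤ -c := by
        have h1 : |s i * u (r i - δ)| = |u (r i - δ)| := habs i _
        rw [abs_of_neg huneg] at h1
        linarith
      have hub' : c ≤ s i * u (r i + δ) := by
        have h1 : |s i * u (r i + δ)| = |u (r i + δ)| := habs i _
        rw [abs_of_pos hupos] at h1
        linarith
      have hga : s i * g (r i - δ) < 0 := by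
        have h2 := (hclose _ haI).1
        have h3 := (hsabs i (g (r i - δ) - u (r i - δ))).1
        have h4 : s i * g (r i - δ)
            = s i * u (r i - δ) + s i * (g (r i - δ) - u (r i - δ)) := by ring
        have h6 := abs_lt.1 h2
        rw [h4]
        have := le_abs_self (g (r i - δ) - u (r i - δ))
        linarith
      have hgb : 0 < s i * g (r i + δ) := by
        have h2 := (hclose _ hbI).1
        have h5 := (hsabs i (g (r i + δ) - u (r i + δ))).2
        have h4 : s i * g (r i + δ)
            = s i * u (r i + δ) + s i * (g (r i + δ) - u (r i + δ)) := by ring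
        have h6 := abs_lt.1 h2
        rw [h4]
        linarith
      have hab : r i - δ ≤ r i + δ := by linarith
      have hivt := intermediate_value_Icc (f := fun t => s i * g t) hab
        ((continuous_const.mul gcont).continuousOn)
      have h0mem : (0:ℝ) ∈ Set.Icc (s i * g (r i - δ)) (s i * g (r i + δ)) :=
        ⟨le_of_lt hga, le_of_lt hgb⟩
      obtain ⟨zi, hzmem, hz0⟩ := hivt h0mem
      have hgz : g zi = 0 := by
        rcases mul_eq_zero.1 hz0 with h | h
        · exact absurd h (hsne i)
        · exact h
      have hzne_a : zi ≠ r i - δ := by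
        intro h
        rw [← h] at hga
        rw [hgz, mul_zero] at hga
        exact lt_irrefl _ hga
      have hzne_b : zi ≠ r i + δ := by
        intro h
        rw [← h] at hgb
        rw [hgz, mul_zero] at hgb
        exact lt_irrefl _ hgb
      refine ⟨zi, ?_, hgz, fun h => absurd h hil, fun _ => ?_⟩
      · exact ⟨hzmem.1, by rw [hbeq]; exact hzmem.2⟩
      · exact ⟨lt_of_le_of_ne hzmem.1 (Ne.symm hzne_a), lt_of_le_of_ne hzmem.2 hzne_b⟩
  choose z hz1 hz2 hz3 hz4 using hexz
  have hzlast : z (Fin.last m') = 1 := hz3 _ rfl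
  have huniq : ∀ i, ∀ t ∈ J i, g t = 0 → t = z i := by
    intro i t ht hgt
    apply (A i).injOn ht (hz1 i)
    simp only [hgt, hz2 i, mul_zero]
  have hsgn_gt : ∀ i, ∀ t ∈ J i, z i < t → 0 < s i * g t := by
    intro i t ht hlt
    have := A i (hz1 i) ht hlt
    simpa [hz2 i] using this
  have hsgn_lt : ∀ i, ∀ t ∈ J i, t < z i → s i * g t < 0 := by
    intro i t ht hlt
    have := A i ht (hz1 i) hlt
    simpa [hz2 i] using this
  refine ⟨z, hz1, hz2, hzlast, huniq, hsgn_gt, hsgn_lt, ?_, hz4⟩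
  intro t ht hgt
  by_cases hcase : ∃ i, t ∈ Set.Ioo (r i - δ) (r i + δ)
  · obtain ⟨i, hi⟩ := hcase
    have htJ : t ∈ J i := ⟨le_of_lt hi.1, le_min (le_of_lt hi.2) (le_of_lt ht.2)⟩
    exact ⟨i, huniq i t htJ hgt⟩
  · push_neg at hcase
    have h1 := P3 t ⟨le_of_lt ht.1, le_of_lt ht.2⟩ hcase
    have h2 := (hclose t ⟨le_of_lt ht.1, le_of_lt ht.2⟩).1
    rw [hgt, zero_sub, abs_neg] at h2
    linarith

/-- **Stability of the nodal count (core of Theorem 4.5 (iii)).**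
Let `ω ⊆ ℝ^{N-1}` (`N = n+1 ≥ 2`) be nonempty, open, bounded and connected,
and `Ω = ω × (0,1) ⊆ ℝ^N`. Let `ũ : ℝ → ℝ` be `C¹`, with zero set in `(0,1]`
exactly `{r 1 < … < r m}` (`m ≥ 1`, `r m = 1`, i.e. `1 ∈ range r`),
`ũ(0) ≠ 0` and `ũ'(r i) ≠ 0` for all `i`. Then there is `ε > 0` such that
every `C¹` function `v : ℝ^N → ℝ` vanishing on `ω × {1}` and satisfying
`|v(x) - ũ(x_N)| + ‖∇v(x) - ũ'(x_N)·e_N‖ < ε` on the closure of `Ω` is such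
that `{x ∈ Ω : v(x) ≠ 0}` has exactly `m` connected components. -/
theorem nodal_count_stability
    (n : ℕ) (hn : 1 ≤ n)
    (ω : Set (EuclideanSpace ℝ (Fin n)))
    (hωne : ω.Nonempty) (hωopen : IsOpen ω)
    (hωbd : Bornology.IsBounded ω) (hωconn : IsConnected ω)
    (Ω : Set (EuclideanSpace ℝ (Fin (n + 1))))
    (hΩ : Ω = {x : EuclideanSpace ℝ (Fin (n + 1)) |
      (WithLp.toLp 2 (fun j : Fin n => x j.castSucc) : EuclideanSpace ℝ (Fin n)) ∈ ω ∧
      x (Fin.last n) ∈ Set.Ioo (0:ℝ) 1})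
    (m : ℕ) (hm : 1 ≤ m)
    (u : ℝ → ℝ) (hu : ContDiff ℝ 1 u)
    (r : Fin m → ℝ) (hrmono : StrictMono r)
    (hzeros : {x ∈ Set.Ioc (0:ℝ) 1 | u x = 0} = Set.range r)
    (hrlast : (1:ℝ) ∈ Set.range r)
    (hu0 : u 0 ≠ 0)
    (hu' : ∀ i : Fin m, deriv u (r i) ≠ 0) :
    ∃ ε > 0, ∀ v : EuclideanSpace ℝ (Fin (n + 1)) → ℝ, ContDiff ℝ 1 v →
      (∀ y ∈ ω, v (WithLp.toLp 2 (Fin.snoc y.ofLp 1 : Fin (n + 1) → ℝ) : EuclideanSpace ℝ (Fin (n + 1))) = 0) →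
      (∀ x ∈ closure Ω,
        |v x - u (x (Fin.last n))| +
          ‖gradient v x - deriv u (x (Fin.last n)) •
            (EuclideanSpace.single (Fin.last n) 1 : EuclideanSpace ℝ (Fin (n + 1)))‖ < ε) →
      Nat.card (ConnectedComponents {x : EuclideanSpace ℝ (Fin (n + 1)) //
        x ∈ Ω ∧ v x ≠ 0}) = m := by
  classical
  obtain ⟨m', rfl⟩ : ∃ m', m = m' + 1 := ⟨m - 1, by omega⟩
  have hrmem : ∀ i, r i ∈ Set.Ioc (0:ℝ) 1 := by
    intro i
    have : r i ∈ Set.range r := ⟨i, rfl⟩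
    rw [← hzeros] at this
    exact this.1
  have hrl : r (Fin.last m') = 1 := by
    obtain ⟨j, hj⟩ := hrlast
    have h1 := (hrmem (Fin.last m')).2
    have h2 : r j ≤ r (Fin.last m') := hrmono.monotone (Fin.le_last j)
    rw [hj] at h2
    linarith
  obtain ⟨δ, c, hδpos, hcpos, Pa, Pb, P2, P3⟩ :=
    aux_params m' u hu r hrmono hzeros hu0 hu'
  refine ⟨c/2, by linarith, ?_⟩
  intro v hv hv1 hvclose
  -- notation
  set π : EuclideanSpace ℝ (Fin (n+1)) → EuclideanSpace ℝ (Fin n) :=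
    fun x => (WithLp.toLp 2 (fun j : Fin n => x j.castSucc) : EuclideanSpace ℝ (Fin n)) with hπ
  set sn : EuclideanSpace ℝ (Fin n) → ℝ → EuclideanSpace ℝ (Fin (n+1)) :=
    fun y t => WithLp.toLp 2 (Fin.snoc y.ofLp t : Fin (n + 1) → ℝ) with hsn
  set eN : EuclideanSpace ℝ (Fin (n+1)) := EuclideanSpace.single (Fin.last n) 1 with heN
  have hπcont : Continuous π := (PiLp.continuous_toLp 2 _).comp
    (continuous_pi (fun j => (continuous_apply j.castSucc).comp (PiLp.continuous_ofLp 2 _)))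
  have hsncont : Continuous (fun q : (EuclideanSpace ℝ (Fin n)) × ℝ => sn q.1 q.2) := by
    refine (PiLp.continuous_toLp 2 _).comp ?_
    apply continuous_pi
    intro i
    induction i using Fin.lastCases with
    | last => simpa [Fin.snoc_last] using continuous_snd
    | cast j => simp only [Fin.snoc_castSucc]; fun_prop
  have hπsn : ∀ y t, π (sn y t) = y := by
    intro y t
    ext j
    simp [hπ, hsn, Fin.snoc_castSucc]
  have hsnlast : ∀ y t, (sn y t) (Fin.last n) = t := by
    intro y t
    simp [hsn, Fin.snoc_last]
  have hsneta : ∀ x : EuclideanSpace ℝ (Fin (n+1)), sn (π x) (x (Fin.last n)) = x := by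
    intro x
    ext i
    induction i using Fin.lastCases with
    | last => simp [hsn, Fin.snoc_last]
    | cast j => simp [hsn, hπ, Fin.snoc_castSucc]
  -- membership in Ω and closure Ω
  have hmemΩ : ∀ y ∈ ω, ∀ t ∈ Set.Ioo (0:ℝ) 1, sn y t ∈ Ω := by
    intro y hy t ht
    rw [hΩ]
    refine ⟨?_, ?_⟩
    · show π (sn y t) ∈ ω
      rwa [hπsn]
    · rwa [hsnlast]
  have hmemcl : ∀ y ∈ ω, ∀ t ∈ Set.Icc (0:ℝ) 1, sn y t ∈ closure Ω := by
    intro y hy t ht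
    have hc2 : Continuous (fun t => sn y t) :=
      hsncont.comp (continuous_const.prodMk continuous_id)
    have h3 : t ∈ closure (Set.Ioo (0:ℝ) 1) := by
      rw [closure_Ioo one_ne_zero.symm]
      exact ht
    exact map_mem_closure hc2 h3 (fun t' ht' => hmemΩ y hy t' ht')
  -- slice derivative
  set D : EuclideanSpace ℝ (Fin n) → ℝ → ℝ := fun y t => fderiv ℝ v (sn y t) eN with hD
  have hgderiv : ∀ y t, HasDerivAt (fun t => v (sn y t)) (D y t) t := by
    intro y t
    have hline : ∀ t' : ℝ, sn y t' = sn y 0 + t' • eN := by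
      intro t'
      ext i
      induction i using Fin.lastCases with
      | last =>
          have h1 : (t' • eN : EuclideanSpace ℝ (Fin (n+1))) (Fin.last n)
              = t' * eN (Fin.last n) := rfl
          simp [hsn, Fin.snoc_last, PiLp.add_apply, h1, heN, EuclideanSpace.single_apply]
      | cast j =>
          have h1 : (t' • eN : EuclideanSpace ℝ (Fin (n+1))) j.castSucc
              = t' * eN j.castSucc := rfl
          simp [hsn, Fin.snoc_castSucc, PiLp.add_apply, h1, heN,
            EuclideanSpace.single_apply, (Fin.castSucc_lt_last j).ne]
    have hcurve : HasDerivAt (fun t' : ℝ => sn y 0 + t' • eN) eN t := by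
      have h2 : HasDerivAt (fun t' : ℝ => t' • eN) ((1:ℝ) • eN) t :=
        (hasDerivAt_id t).smul_const eN
      rw [one_smul] at h2
      exact h2.const_add (sn y 0)
    have hfd : HasFDerivAt v (fderiv ℝ v (sn y t)) (sn y t) :=
      (hv.differentiable one_ne_zero (sn y t)).hasFDerivAt
    rw [hline t] at hfd
    have hcomp := hfd.comp_hasDerivAt t hcurve
    have heq : (v ∘ fun t' : ℝ => sn y 0 + t' • eN) = fun t' => v (sn y t') := by
      funext t'
      simp only [Function.comp_apply, ← hline t']
    rw [heq] at hcomp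
    have heq2 : fderiv ℝ v (sn y 0 + t • eN) eN = D y t := by
      rw [hD, ← hline t]
    rwa [heq2] at hcomp
  have hclose_slice : ∀ y ∈ ω, ∀ t ∈ Set.Icc (0:ℝ) 1,
      |v (sn y t) - u t| < c/2 ∧ |D y t - deriv u t| < c/2 := by
    intro y hy t ht
    have hx := hvclose (sn y t) (hmemcl y hy t ht)
    rw [hsnlast] at hx
    have hnn1 : (0:ℝ) ≤ ‖gradient v (sn y t) - deriv u t • eN‖ := norm_nonneg _
    have hnn2 : (0:ℝ) ≤ |v (sn y t) - u t| := abs_nonneg _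
    constructor
    · linarith
    · have hDinner : D y t = inner (𝕜 := ℝ) (gradient v (sn y t)) eN := by
        rw [hD, gradient, InnerProductSpace.toDual_symm_apply]
      have hui : deriv u t = inner (𝕜 := ℝ) (deriv u t • eN) eN := by
        rw [real_inner_smul_left, heN, EuclideanSpace.inner_single_left]
        simp [EuclideanSpace.single_apply]
      have hsub : D y t - deriv u t
          = inner (𝕜 := ℝ) (gradient v (sn y t) - deriv u t • eN) eN := by
        rw [inner_sub_left, ← hDinner, ← hui]
      have hcs := abs_real_inner_le_norm (gradient v (sn y t) - deriv u t • eN) eN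
      have heN1 : ‖eN‖ = 1 := by
        rw [heN, EuclideanSpace.norm_single]; norm_num
      rw [heN1, mul_one] at hcs
      rw [hsub]
      linarith
  -- the boundary value
  have hbd : ∀ y ∈ ω, (fun t => v (sn y t)) 1 = 0 := by
    intro y hy
    exact hv1 y hy
  -- apply the slice lemma
  have hslice : ∀ y, y ∈ ω →
      ∃ z : Fin (m'+1) → ℝ,
      (∀ i, z i ∈ Set.Icc (r i - δ) (min (r i + δ) 1)) ∧
      (∀ i, (fun t => v (sn y t)) (z i) = 0) ∧
      z (Fin.last m') = 1 ∧
      (∀ i, ∀ t ∈ Set.Icc (r i - δ) (min (r i + δ) 1), (fun t => v (sn y t)) t = 0 → t = z i) ∧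
      (∀ i, ∀ t ∈ Set.Icc (r i - δ) (min (r i + δ) 1), z i < t →
        0 < (if 0 < deriv u (r i) then (1:ℝ) else -1) * (fun t => v (sn y t)) t) ∧
      (∀ i, ∀ t ∈ Set.Icc (r i - δ) (min (r i + δ) 1), t < z i →
        (if 0 < deriv u (r i) then (1:ℝ) else -1) * (fun t => v (sn y t)) t < 0) ∧
      (∀ t ∈ Set.Ioo (0:ℝ) 1, (fun t => v (sn y t)) t = 0 → ∃ i, t = z i) ∧
      (∀ i, i ≠ Fin.last m' → z i ∈ Set.Ioo (r i - δ) (r i + δ)) :=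
    fun y hy => aux_slice m' u hu r hrmono hzeros hrl δ c hδpos hcpos Pa Pb P2 P3
      (fun t => v (sn y t)) (D y) (hgderiv y) (hclose_slice y hy) (hbd y hy)
  set zeta : EuclideanSpace ℝ (Fin n) → Fin (m'+1) → ℝ :=
    fun y => if hy : y ∈ ω then Classical.choose (hslice y hy) else fun _ => 0 with hzeta
  have hZ : ∀ y (hy : y ∈ ω),
      (∀ i, zeta y i ∈ Set.Icc (r i - δ) (min (r i + δ) 1)) ∧
      (∀ i, v (sn y (zeta y i)) = 0) ∧
      zeta y (Fin.last m') = 1 ∧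
      (∀ i, ∀ t ∈ Set.Icc (r i - δ) (min (r i + δ) 1), v (sn y t) = 0 → t = zeta y i) ∧
      (∀ i, ∀ t ∈ Set.Icc (r i - δ) (min (r i + δ) 1), zeta y i < t →
        0 < (if 0 < deriv u (r i) then (1:ℝ) else -1) * v (sn y t)) ∧
      (∀ i, ∀ t ∈ Set.Icc (r i - δ) (min (r i + δ) 1), t < zeta y i →
        (if 0 < deriv u (r i) then (1:ℝ) else -1) * v (sn y t) < 0) ∧
      (∀ t ∈ Set.Ioo (0:ℝ) 1, v (sn y t) = 0 → ∃ i, t = zeta y i) ∧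
      (∀ i, i ≠ Fin.last m' → zeta y i ∈ Set.Ioo (r i - δ) (r i + δ)) := by
    intro y hy
    have : zeta y = Classical.choose (hslice y hy) := by
      simp only [hzeta]
      rw [dif_pos hy]
    rw [this]
    exact Classical.choose_spec (hslice y hy)
  -- the full family of interfaces
  set Zf : EuclideanSpace ℝ (Fin n) → Fin (m'+2) → ℝ :=
    fun y => Fin.cons 0 (zeta y) with hZf
  have hZf0 : ∀ y, Zf y 0 = 0 := fun y => rfl
  have hZfsucc : ∀ y (i : Fin (m'+1)), Zf y i.succ = zeta y i := by
    intro y i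
    rw [hZf]
    exact Fin.cons_succ _ _ _
  have hZflast : ∀ y, y ∈ ω → Zf y (Fin.last (m'+1)) = 1 := by
    intro y hy
    have h1 : Fin.last (m'+1) = (Fin.last m').succ := (Fin.succ_last m').symm
    rw [h1, hZfsucc]
    exact (hZ y hy).2.2.1
  have hZfmono : ∀ y, y ∈ ω → StrictMono (Zf y) := by
    intro y hy
    rw [Fin.strictMono_iff_lt_succ]
    intro i
    induction i using Fin.cases with
    | zero =>
        have h1 : Zf y (0 : Fin (m'+1)).castSucc = 0 := by
          have : (0 : Fin (m'+1)).castSucc = (0 : Fin (m'+2)) := rfl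
          rw [this, hZf0]
        rw [h1, hZfsucc]
        have h2 := ((hZ y hy).1 0).1
        linarith [Pa 0]
    | succ j =>
        have h1 : (j.succ).castSucc = (j.castSucc).succ := by
          rw [Fin.succ_castSucc]
        rw [h1, hZfsucc, hZfsucc]
        have h2 := ((hZ y hy).1 j.castSucc).2
        have h3 := ((hZ y hy).1 j.succ).1
        have h4 := Pb j.castSucc j.succ (Fin.castSucc_lt_succ : j.castSucc < j.succ)
        have h5 : min (r j.castSucc + δ) 1 ≤ r j.castSucc + δ := min_le_left _ _
        linarith
  have hZfmem : ∀ y, y ∈ ω → ∀ j, Zf y j ∈ Set.Icc (0:ℝ) 1 := by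
    intro y hy j
    constructor
    · have h1 : Zf y 0 ≤ Zf y j := (hZfmono y hy).monotone (Fin.zero_le j)
      rwa [hZf0] at h1
    · have h1 : Zf y j ≤ Zf y (Fin.last (m'+1)) := (hZfmono y hy).monotone (Fin.le_last j)
      rwa [hZflast y hy] at h1
  -- continuity of the interfaces
  have hZfcont : ∀ y, y ∈ ω → ∀ (j : Fin (m'+2)), ∀ η > 0,
      ∃ W, IsOpen W ∧ y ∈ W ∧ W ⊆ ω ∧ ∀ y' ∈ W, |Zf y' j - Zf y j| < η := by
    intro y hy j η hη
    induction j using Fin.cases with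
    | zero =>
        refine ⟨ω, hωopen, hy, le_refl _, fun y' _ => ?_⟩
        rw [hZf0, hZf0]
        simpa using hη
    | succ i =>
        by_cases hil : i = Fin.last m'
        · subst hil
          refine ⟨ω, hωopen, hy, le_refl _, fun y' hy' => ?_⟩
          rw [hZfsucc, hZfsucc, (hZ y hy).2.2.1, (hZ y' hy').2.2.1]
          simpa using hη
        · -- interior interface: the implicit-function type argument
          set ζ := zeta y i with hζ
          have hζIoo : ζ ∈ Set.Ioo (r i - δ) (r i + δ) := (hZ y hy).2.2.2.2.2.2.2 i hil
          have hbeq : min (r i + δ) 1 = r i + δ := by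
            have hilt : i < Fin.last m' := lt_of_le_of_ne (Fin.le_last i) hil
            have := Pb i (Fin.last m') hilt
            rw [hrl] at this
            exact min_eq_left (by linarith)
          set η' : ℝ := min (η/2) (min ((r i + δ - ζ)/2) ((ζ - (r i - δ))/2)) with hη'
          have hη'pos : 0 < η' := by
            apply lt_min (by linarith)
            apply lt_min
            · have := hζIoo.2; linarith
            · have := hζIoo.1; linarith
          have hη'le : η' ≤ η/2 := min_le_left _ _
          have hη'le2 : η' ≤ (r i + δ - ζ)/2 := le_trans (min_le_right _ _) (min_le_left _ _)
          have hη'le3 : η' ≤ (ζ - (r i - δ))/2 := le_trans (min_le_right _ _) (min_le_right _ _)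
          set p := ζ + η' with hp
          set q := ζ - η' with hq
          have hpJ : p ∈ Set.Icc (r i - δ) (min (r i + δ) 1) := by
            rw [hbeq]
            constructor
            · have := hζIoo.1; rw [hp]; linarith
            · rw [hp]; linarith
          have hqJ : q ∈ Set.Icc (r i - δ) (min (r i + δ) 1) := by
            rw [hbeq]
            constructor
            · have := hζIoo.1; rw [hq]; linarith
            · have := hζIoo.2; rw [hq]; linarith
          have hζJ : ζ ∈ Set.Icc (r i - δ) (min (r i + δ) 1) := (hZ y hy).1 i
          have hvp : 0 < (if 0 < deriv u (r i) then (1:ℝ) else -1) * v (sn y p) :=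
            (hZ y hy).2.2.2.2.1 i p hpJ (by rw [hp]; linarith)
          have hvq : (if 0 < deriv u (r i) then (1:ℝ) else -1) * v (sn y q) < 0 :=
            (hZ y hy).2.2.2.2.2.1 i q hqJ (by rw [hq]; linarith)
          set W := ω ∩ ((fun y' => (if 0 < deriv u (r i) then (1:ℝ) else -1) * v (sn y' p)) ⁻¹'
              (Set.Ioi 0)) ∩ ((fun y' => (if 0 < deriv u (r i) then (1:ℝ) else -1) * v (sn y' q)) ⁻¹'
              (Set.Iio 0)) with hW
          have hWopen : IsOpen W := by
            apply IsOpen.inter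
            apply IsOpen.inter hωopen
            · apply isOpen_Ioi.preimage
              exact continuous_const.mul (hv.continuous.comp
                (hsncont.comp (continuous_id.prodMk continuous_const)))
            · apply isOpen_Iio.preimage
              exact continuous_const.mul (hv.continuous.comp
                (hsncont.comp (continuous_id.prodMk continuous_const)))
          have hyW : y ∈ W := ⟨⟨hy, hvp⟩, hvq⟩
          refine ⟨W, hWopen, hyW, fun y' hy' => hy'.1.1, fun y' hy' => ?_⟩
          obtain ⟨⟨hy'ω, hy'p⟩, hy'q⟩ := hy'
          have hy'p : 0 < (if 0 < deriv u (r i) then (1:ℝ) else -1) * v (sn y' p) := hy'p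
          have hy'q : (if 0 < deriv u (r i) then (1:ℝ) else -1) * v (sn y' q) < 0 := hy'q
          -- the zero of the slice through y' is trapped in (q, p)
          have hlt : zeta y' i < p := by
            by_contra hge
            push_neg at hge
            rcases eq_or_lt_of_le hge with heq | hlt'
            · have h0 := (hZ y' hy'ω).2.1 i
              rw [← heq] at h0
              rw [h0, mul_zero] at hy'p
              exact lt_irrefl _ hy'p
            · have := (hZ y' hy'ω).2.2.2.2.2.1 i p hpJ hlt'
              linarith
          have hgt : q < zeta y' i := by
            by_contra hge
            push_neg at hge
            rcases eq_or_lt_of_le hge with heq | hlt'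
            · have h0 := (hZ y' hy'ω).2.1 i
              rw [heq] at h0
              rw [h0, mul_zero] at hy'q
              exact lt_irrefl _ hy'q
            · have := (hZ y' hy'ω).2.2.2.2.1 i q hqJ hlt'
              linarith
          rw [hZfsucc, hZfsucc]
          rw [abs_lt]
          constructor
          · rw [hq] at hgt; rw [← hζ]; linarith
          · rw [hp] at hlt; rw [← hζ]; linarith
  -- the candidate components
  set U : Fin (m'+1) → Set (EuclideanSpace ℝ (Fin (n+1))) :=
    fun k => {x | π x ∈ ω ∧
      x (Fin.last n) ∈ Set.Ioo (Zf (π x) k.castSucc) (Zf (π x) k.succ)} with hU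
  have hUopen : ∀ k, IsOpen (U k) := by
    intro k
    rw [isOpen_iff_forall_mem_open]
    rintro x ⟨hxω, hxt⟩
    set η : ℝ := min ((x (Fin.last n) - Zf (π x) k.castSucc)/2)
      ((Zf (π x) k.succ - x (Fin.last n))/2) with hηdef
    have hηpos : 0 < η := lt_min (by linarith [hxt.1]) (by linarith [hxt.2])
    have hη1 : η ≤ (x (Fin.last n) - Zf (π x) k.castSucc)/2 := min_le_left _ _
    have hη2 : η ≤ (Zf (π x) k.succ - x (Fin.last n))/2 := min_le_right _ _
    obtain ⟨W1, hW1o, hyW1, hW1ω, hW1⟩ := hZfcont (π x) hxω k.castSucc η hηpos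
    obtain ⟨W2, hW2o, hyW2, hW2ω, hW2⟩ := hZfcont (π x) hxω k.succ η hηpos
    refine ⟨π ⁻¹' (W1 ∩ W2) ∩ (fun x' => x' (Fin.last n)) ⁻¹'
      (Set.Ioo (x (Fin.last n) - η) (x (Fin.last n) + η)), ?_, ?_, ?_⟩
    · rintro x' ⟨hx'W, hx't⟩
      obtain ⟨h1, h2⟩ := hx'W
      have hb1 := abs_lt.1 (hW1 _ h1)
      have hb2 := abs_lt.1 (hW2 _ h2)
      have ht1 := hx't.1
      have ht2 := hx't.2
      exact ⟨hW1ω h1, Set.mem_Ioo.2 ⟨by linarith, by linarith⟩⟩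
    · exact ((hW1o.inter hW2o).preimage hπcont).inter
        (isOpen_Ioo.preimage (PiLp.continuous_apply 2 _ _))
    · exact ⟨⟨hyW1, hyW2⟩, Set.mem_Ioo.2 ⟨by linarith, by linarith⟩⟩
  have hUsub : ∀ k, U k ⊆ {x | x ∈ Ω ∧ v x ≠ 0} := by
    rintro k x ⟨hxω, hxt⟩
    have h0 : (0:ℝ) ≤ Zf (π x) k.castSucc := (hZfmem (π x) hxω k.castSucc).1
    have h1 : Zf (π x) k.succ ≤ 1 := (hZfmem (π x) hxω k.succ).2
    have htIoo : x (Fin.last n) ∈ Set.Ioo (0:ℝ) 1 :=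
      ⟨lt_of_le_of_lt h0 hxt.1, lt_of_lt_of_le hxt.2 h1⟩
    refine ⟨by rw [hΩ]; exact ⟨hxω, htIoo⟩, ?_⟩
    intro hvx
    have hgt : v (sn (π x) (x (Fin.last n))) = 0 := by rw [hsneta x]; exact hvx
    obtain ⟨i, hi⟩ := (hZ (π x) hxω).2.2.2.2.2.2.1 _ htIoo hgt
    have hmem : Zf (π x) i.succ ∈
        Set.Ioo (Zf (π x) k.castSucc) (Zf (π x) k.succ) := by
      have h9 : Zf (π x) i.succ = x (Fin.last n) := by rw [hZfsucc (π x) i, ← hi]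
      rw [h9]; exact hxt
    have hmono := hZfmono (π x) hxω
    rcases lt_or_ge k.castSucc i.succ with hlt | hle
    · have h2 : k.succ ≤ i.succ := Fin.castSucc_lt_iff_succ_le.1 hlt
      have h3 := hmono.monotone h2
      linarith [hmem.2]
    · have h3 := hmono.monotone hle
      linarith [hmem.1]
  have hcover : {x | x ∈ Ω ∧ v x ≠ 0} = ⋃ k, U k := by
    apply Set.Subset.antisymm
    · rintro x ⟨hxΩ, hxv⟩
      rw [hΩ] at hxΩ
      have hxω : π x ∈ ω := hxΩ.1
      have hxt : x (Fin.last n) ∈ Set.Ioo (0:ℝ) 1 := hxΩ.2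
      have hne0 : ∀ j : Fin (m'+2), Zf (π x) j ≠ x (Fin.last n) := by
        intro j
        induction j using Fin.cases with
        | zero =>
            intro hj
            rw [hZf0] at hj
            have := hxt.1
            rw [← hj] at this
            exact lt_irrefl _ this
        | succ i =>
            intro hj
            rw [hZfsucc] at hj
            apply hxv
            have h0 := (hZ (π x) hxω).2.1 i
            rw [hj] at h0
            rw [← hsneta x]
            exact h0
      set F := Finset.univ.filter (fun j : Fin (m'+2) => Zf (π x) j < x (Fin.last n)) with hF
      have hFne : F.Nonempty := by
        refine ⟨0, ?_⟩
        rw [hF, Finset.mem_filter]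
        exact ⟨Finset.mem_univ _, by rw [hZf0]; exact hxt.1⟩
      have hj'mem : F.max' hFne ∈ F := F.max'_mem hFne
      have hj'lt : Zf (π x) (F.max' hFne) < x (Fin.last n) :=
        (Finset.mem_filter.1 hj'mem).2
      have hj'ne : F.max' hFne ≠ Fin.last (m'+1) := by
        intro h
        rw [h, hZflast (π x) hxω] at hj'lt
        exact absurd hxt.2 (not_lt.2 hj'lt.le)
      set k := (F.max' hFne).castPred hj'ne with hk
      have hkc : k.castSucc = F.max' hFne := Fin.castSucc_castPred _ hj'ne
      refine Set.mem_iUnion.2 ⟨k, hxω, ?_, ?_⟩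
      · rw [hkc]; exact hj'lt
      · have hnotmem : k.succ ∉ F := by
          intro hmem
          have h5 := F.le_max' k.succ hmem
          rw [← hkc] at h5
          exact absurd h5 (not_le.2 (Fin.castSucc_lt_succ : k.castSucc < k.succ))
        have h3 : ¬ (Zf (π x) k.succ < x (Fin.last n)) := by
          intro hcontra
          apply hnotmem
          rw [hF, Finset.mem_filter]
          exact ⟨Finset.mem_univ _, hcontra⟩
        exact lt_of_le_of_ne (not_lt.1 h3) (Ne.symm (hne0 k.succ))
    · exact Set.iUnion_subset hUsub
  have hUdisj : ∀ k l, k ≠ l → Disjoint (U k) (U l) := by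
    have key : ∀ k l, k < l → Disjoint (U k) (U l) := by
      intro k l hlt
      rw [Set.disjoint_left]
      rintro x ⟨hxω, hxt1⟩ ⟨_, hxt2⟩
      have hmono := hZfmono (π x) hxω
      have h1 : k.succ ≤ l.castSucc := Fin.succ_le_castSucc_iff.2 hlt
      have h2 := hmono.monotone h1
      linarith [hxt1.2, hxt2.1]
    intro k l hkl
    rcases hkl.lt_or_gt with h | h
    · exact key k l h
    · exact (key l k h).symm
  obtain ⟨y₀, hy₀⟩ := hωne
  have hUne : ∀ k, (U k).Nonempty := by
    intro k
    induction k using Fin.cases with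
    | zero =>
        refine ⟨sn y₀ ((r 0 - δ)/2), ?_, ?_⟩
        · rw [hπsn]; exact hy₀
        · rw [hπsn, hsnlast]
          constructor
          · have h1 : ((0 : Fin (m'+1)).castSucc : Fin (m'+2)) = 0 := rfl
            rw [h1, hZf0]
            linarith [Pa 0]
          · rw [hZfsucc]
            have := ((hZ y₀ hy₀).1 0).1
            linarith [Pa 0]
    | succ j =>
        have hgap := Pb j.castSucc j.succ (Fin.castSucc_lt_succ : j.castSucc < j.succ)
        refine ⟨sn y₀ ((r j.castSucc + δ + (r j.succ - δ))/2), ?_, ?_⟩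
        · rw [hπsn]; exact hy₀
        · rw [hπsn, hsnlast]
          constructor
          · have h1 : (j.succ).castSucc = (j.castSucc).succ := by rw [Fin.succ_castSucc]
            rw [h1, hZfsucc]
            have h2 := ((hZ y₀ hy₀).1 j.castSucc).2
            have h5 : min (r j.castSucc + δ) 1 ≤ r j.castSucc + δ := min_le_left _ _
            linarith
          · rw [hZfsucc]
            have h3 := ((hZ y₀ hy₀).1 j.succ).1
            linarith
  have hμcontOn : ∀ j : Fin (m'+2), ContinuousOn (fun y => Zf y j) ω := by
    intro j y hy
    rw [Metric.continuousWithinAt_iff]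
    intro η hη
    obtain ⟨W, hWo, hyW, hWω, hW⟩ := hZfcont y hy j η hη
    obtain ⟨ρ, hρ, hball⟩ := Metric.isOpen_iff.1 hWo y hyW
    refine ⟨ρ, hρ, fun y' hy' hdist => ?_⟩
    have hmem : y' ∈ W := hball hdist
    rw [Real.dist_eq]
    exact hW y' hmem
  have hUconn : ∀ k, IsPreconnected (U k) := by
    intro k
    set μ : EuclideanSpace ℝ (Fin n) → ℝ :=
      fun y => (Zf y k.castSucc + Zf y k.succ)/2 with hμ
    have hμc : ContinuousOn (fun y => sn y (μ y)) ω :=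
      hsncont.comp_continuousOn (f := fun y => (y, μ y)) (continuousOn_id.prodMk
        (((hμcontOn k.castSucc).add (hμcontOn k.succ)).div_const 2))
    have hμmem : ∀ y ∈ ω, μ y ∈ Set.Ioo (Zf y k.castSucc) (Zf y k.succ) := by
      intro y hy
      have h1 := hZfmono y hy (Fin.castSucc_lt_succ : k.castSucc < k.succ)
      have h2 : μ y = (Zf y k.castSucc + Zf y k.succ)/2 := rfl
      exact ⟨by rw [h2]; linarith, by rw [h2]; linarith⟩
    have hΓconn : IsPreconnected ((fun y => sn y (μ y)) '' ω) :=
      hωconn.isPreconnected.image _ hμc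
    have hΓsub : (fun y => sn y (μ y)) '' ω ⊆ U k := by
      rintro _ ⟨y, hy, rfl⟩
      show π (sn y (μ y)) ∈ ω ∧ (sn y (μ y)) (Fin.last n) ∈
        Set.Ioo (Zf (π (sn y (μ y))) k.castSucc) (Zf (π (sn y (μ y))) k.succ)
      rw [hπsn, hsnlast]
      exact ⟨hy, hμmem y hy⟩
    apply isPreconnected_of_forall (sn y₀ (μ y₀))
    rintro x ⟨hxω, hxt⟩
    have hsegsub : (fun t => sn (π x) t) '' (Set.uIcc (x (Fin.last n)) (μ (π x))) ⊆ U k := by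
      rintro _ ⟨t, ht, rfl⟩
      have hsub : Set.uIcc (x (Fin.last n)) (μ (π x)) ⊆
          Set.Ioo (Zf (π x) k.castSucc) (Zf (π x) k.succ) :=
        Set.ordConnected_Ioo.uIcc_subset hxt (hμmem (π x) hxω)
      show π (sn (π x) t) ∈ ω ∧ (sn (π x) t) (Fin.last n) ∈
        Set.Ioo (Zf (π (sn (π x) t)) k.castSucc) (Zf (π (sn (π x) t)) k.succ)
      rw [hπsn, hsnlast]
      exact ⟨hxω, hsub ht⟩
    have hsegconn : IsPreconnected ((fun t => sn (π x) t) ''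
        (Set.uIcc (x (Fin.last n)) (μ (π x)))) :=
      isPreconnected_uIcc.image _ (by
        have hc9 : Continuous (fun t : ℝ => sn (π x) t) := by
          have := hsncont.comp ((continuous_const (y := π x)).prodMk continuous_id)
          exact this
        exact hc9.continuousOn)
    refine ⟨((fun y => sn y (μ y)) '' ω) ∪
      ((fun t => sn (π x) t) '' (Set.uIcc (x (Fin.last n)) (μ (π x)))),
      Set.union_subset hΓsub hsegsub, ?_, ?_, ?_⟩
    · left; exact ⟨y₀, hy₀, rfl⟩
    · right; exact ⟨x (Fin.last n), Set.left_mem_uIcc, hsneta x⟩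
    · exact IsPreconnected.union (sn (π x) (μ (π x))) ⟨π x, hxω, rfl⟩
        ⟨μ (π x), Set.right_mem_uIcc, rfl⟩ hΓconn hsegconn
  exact aux_card_components U hUopen hUconn hUne hUdisj hcover
end
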